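/- arXiv:2501.00689 — 13 statements merged into one kernel-verified Lean document; each statement's English description precedes it below -/
import Mathlib

section
/- Let q be a prime and n a positive integer with q^n ≠ 2. Then there exists a prime ℓ dividing q^n − 1 such that ℓ does not divide q^k − 1 for any integer k with 1 ≤ k < n, unless n = 2 and q is a Mersenne prime, or q^n = 64. -/
open Polynomial Finset

lemma zsig_cast_pow_sub_one (q m : ℕ) (hq : 1 ≤ q) : ((q ^ m - 1 : ℕ) : ℤ) = (q : ℤ) ^ m - 1 := by
  have : 1 ≤ q ^ m := Nat.one_le_pow _ _ hq
  push_cast [this]; ring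

lemma zsig_phi_dvd (q n : ℕ) (hq : 1 ≤ q) :
    ((cyclotomic n ℤ).eval (q : ℤ)).natAbs ∣ q ^ n - 1 := by
  have h := Polynomial.eval_dvd (x := (q : ℤ)) (cyclotomic.dvd_X_pow_sub_one n ℤ)
  simp only [eval_sub, eval_pow, eval_X, eval_one] at h
  rw [← zsig_cast_pow_sub_one q n hq] at h
  simpa using Int.natAbs_dvd_natAbs.mpr h

/-- If `n = e * r` with `0 < e`, `1 < r`, then `Φ_n(q)` divides the geometric sum
`∑_{i<r} (q^e)^i = (q^n-1)/(q^e-1)`. -/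
lemma zsig_phi_dvd_geom (q n e r : ℕ) (hq : 2 ≤ q) (he : 0 < e) (hr : 1 < r)
    (hn : n = e * r) :
    ((cyclotomic n ℤ).eval (q : ℤ)).natAbs ∣ ∑ i ∈ range r, (q ^ e) ^ i := by
  have hen : e ∈ n.properDivisors := by
    rw [Nat.mem_properDivisors]
    exact ⟨⟨r, hn⟩, by nlinarith⟩
  have h := Polynomial.eval_dvd (x := (q : ℤ))
    (X_pow_sub_one_mul_cyclotomic_dvd_X_pow_sub_one_of_dvd ℤ hen)
  simp only [eval_mul, eval_sub, eval_pow, eval_X, eval_one] at h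
  set x : ℤ := (q : ℤ) ^ e with hx
  have hxn : (q : ℤ) ^ n = x ^ r := by rw [hx, ← pow_mul, hn]
  rw [hxn, ← geom_sum_mul x r] at h
  have hx1 : x - 1 ≠ 0 := by
    have h2 : (2 : ℤ) ≤ (q:ℤ) := by exact_mod_cast hq
    have : (2 : ℤ) ≤ x := by
      calc (2:ℤ) = 2 ^ 1 := by norm_num
      _ ≤ (q:ℤ) ^ 1 := by rw [pow_one, pow_one]; exact h2
      _ ≤ (q:ℤ) ^ e := pow_le_pow_right₀ (by linarith) he
    omega
  obtain ⟨c, hc⟩ := h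
  have hdvd : (cyclotomic n ℤ).eval (q : ℤ) ∣ ∑ i ∈ range r, x ^ i := by
    refine ⟨c, mul_left_cancel₀ hx1 ?_⟩
    rw [mul_comm (∑ i ∈ range r, x ^ i) (x-1)] at hc
    linarith [hc]
  have hcast : ((∑ i ∈ range r, (q ^ e) ^ i : ℕ) : ℤ) = ∑ i ∈ range r, x ^ i := by
    push_cast [hx]; rfl
  rw [← hcast] at hdvd
  have := Int.natAbs_dvd_natAbs.mpr hdvd
  rwa [Int.natAbs_natCast] at this

/-- A prime dividing `Φ_n(q)` and some `q^k - 1` with `1 ≤ k < n` must divide `n`. -/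
lemma zsig_prime_dvd_n (q n r k : ℕ) (hq : 2 ≤ q) (hrp : r.Prime)
    (hr : r ∣ ((cyclotomic n ℤ).eval (q : ℤ)).natAbs)
    (hk1 : 1 ≤ k) (hkn : k < n) (hrk : r ∣ q ^ k - 1) : r ∣ n := by
  by_contra hrn
  haveI : Fact r.Prime := ⟨hrp⟩
  haveI : NeZero ((n : ZMod r)) := ⟨by
    simpa [ZMod.natCast_eq_zero_iff] using hrn⟩
  have hdvd : (r : ℤ) ∣ (cyclotomic n ℤ).eval (q : ℤ) :=
    Int.dvd_natAbs.mp (Int.ofNat_dvd_right.mpr hr)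
  have hroot : (cyclotomic n (ZMod r)).IsRoot ((q : ℤ) : ZMod r) := by
    have h0 := cyclotomic.eval_apply (q : ℤ) n (Int.castRingHom (ZMod r))
    show eval (((q : ℤ) : ZMod r)) (cyclotomic n (ZMod r)) = 0
    rw [show (((q : ℤ)) : ZMod r) = (Int.castRingHom (ZMod r)) (q : ℤ) from rfl, h0]
    exact (ZMod.intCast_zmod_eq_zero_iff_dvd _ r).mpr hdvd
  have hprim : IsPrimitiveRoot (((q : ℤ)) : ZMod r) n :=
    (Polynomial.isRoot_cyclotomic_iff).mp hroot
  have h1 : 1 ≤ q ^ k := Nat.one_le_pow _ _ (by omega)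
  have hpow : (((q : ℤ)) : ZMod r) ^ k = 1 := by
    have : ((q ^ k - 1 : ℕ) : ZMod r) = 0 := by
      simpa [ZMod.natCast_eq_zero_iff] using hrk
    have heq : (q : ZMod r) ^ k = ((q ^ k - 1 : ℕ) : ZMod r) + 1 := by
      push_cast [h1]; ring
    push_cast
    rw [heq, this, zero_add]
  exact hprim.pow_ne_one_of_pos_of_lt (by omega) hkn hpow

/-- Structure of `n` for a non-primitive prime divisor `r` of `Φ_n(q)`:
`n = d * r ^ b` with `d ∣ r - 1`, `b ≥ 1`, and `r ∣ q ^ d - 1`. -/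
lemma zsig_structure (q n r : ℕ) (hq : 2 ≤ q) (hn : 0 < n) (hrp : r.Prime)
    (hr : r ∣ ((cyclotomic n ℤ).eval (q : ℤ)).natAbs) (hrn : r ∣ n) :
    ∃ d b : ℕ, 0 < d ∧ d ∣ r - 1 ∧ 1 ≤ b ∧ n = d * r ^ b ∧ r ∣ q ^ d - 1 := by
  haveI : Fact r.Prime := ⟨hrp⟩
  have hr2 : 2 ≤ r := hrp.two_le
  have hone : ∀ m : ℕ, 1 ≤ q ^ m := fun m => Nat.one_le_pow _ _ (by omega)
  have hrq : ¬ (r ∣ q) := by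
    intro hdvd
    have h1 : r ∣ q ^ n - 1 := hr.trans (zsig_phi_dvd q n (by omega))
    have h2 : r ∣ q ^ n := hdvd.trans (dvd_pow_self q hn.ne')
    have h3 : r ∣ q ^ n - (q ^ n - 1) := Nat.dvd_sub h2 h1
    have h4 : q ^ n - (q ^ n - 1) = 1 := by have := hone n; omega
    rw [h4] at h3
    exact absurd (Nat.le_of_dvd one_pos h3) (by omega)
  have hq0 : (q : ZMod r) ≠ 0 := fun h =>
    hrq ((ZMod.natCast_eq_zero_iff q r).mp h)
  set d := orderOf (q : ZMod r) with hd
  have hfermat : (q : ZMod r) ^ (r - 1) = 1 := ZMod.pow_card_sub_one_eq_one hq0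
  have hdr1 : d ∣ r - 1 := orderOf_dvd_of_pow_eq_one hfermat
  have hdpos : 0 < d := by
    rw [hd, orderOf_pos_iff]
    exact isOfFinOrder_iff_pow_eq_one.mpr ⟨r - 1, by omega, hfermat⟩
  have hdvd_iff : ∀ m : ℕ, r ∣ q ^ m - 1 ↔ (q : ZMod r) ^ m = 1 := by
    intro m
    rw [← ZMod.natCast_eq_zero_iff]
    constructor
    · intro h
      have heq : (q : ZMod r) ^ m = ((q ^ m - 1 : ℕ) : ZMod r) + 1 := by
        push_cast [hone m]; ring
      rw [heq, h, zero_add]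
    · intro h
      have : ((q ^ m - 1 : ℕ) : ZMod r) = (q : ZMod r) ^ m - 1 := by
        push_cast [hone m]; ring
      rw [this, h, sub_self]
  have hqn1 : (q : ZMod r) ^ n = 1 := by
    rw [← hdvd_iff]
    exact hr.trans (zsig_phi_dvd q n (by omega))
  have hdn : d ∣ n := orderOf_dvd_of_pow_eq_one hqn1
  have hclaim : ∀ s : ℕ, s.Prime → s ∣ n / d → s = r := by
    intro s hsp hs
    obtain ⟨m, hm⟩ := hdn
    rw [hm, Nat.mul_div_cancel_left _ hdpos] at hs
    obtain ⟨m', hm'⟩ := hs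
    set e := d * m' with he
    have hes : n = e * s := by rw [he, hm, hm']; ring
    have hde : d ∣ e := Dvd.intro m' rfl
    have hepos : 0 < e := by
      rcases Nat.eq_zero_or_pos e with h | h
      · rw [h] at hes; omega
      · exact h
    have hQ : r ∣ ∑ i ∈ range s, (q ^ e) ^ i :=
      hr.trans (zsig_phi_dvd_geom q n e s hq hepos hsp.one_lt hes)
    have hqd1 : (q : ZMod r) ^ d = 1 := by rw [hd]; exact pow_orderOf_eq_one _
    have hqe : (q : ZMod r) ^ e = 1 := by
      rw [he, pow_mul, hqd1, one_pow]
    have hQcast : ((∑ i ∈ range s, (q ^ e) ^ i : ℕ) : ZMod r) = (s : ZMod r) := by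
      push_cast
      rw [show ((q : ZMod r) ^ e) = 1 from hqe]
      simp
    have hs0 : (s : ZMod r) = 0 := by
      rw [← hQcast, ZMod.natCast_eq_zero_iff]
      exact hQ
    have : r ∣ s := (ZMod.natCast_eq_zero_iff s r).mp hs0
    exact ((Nat.prime_dvd_prime_iff_eq hrp hsp).mp this).symm
  set m := n / d with hm
  have hnm : n = d * m := by rw [hm, Nat.mul_div_cancel' hdn]
  have hrd : ¬ r ∣ d := by
    intro h
    have := h.trans hdr1
    exact absurd (Nat.le_of_dvd (by omega) this) (by omega)
  have hrm : r ∣ m := by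
    rcases (Nat.Prime.dvd_mul hrp).mp (hnm ▸ hrn) with h | h
    · exact absurd h hrd
    · exact h
  have hm0 : m ≠ 0 := by
    intro h; rw [h, Nat.mul_zero] at hnm; omega
  obtain ⟨b, hb⟩ : ∃ b, m = r ^ b :=
    ⟨_, Nat.eq_prime_pow_of_unique_prime_dvd hm0 (fun hdp hdm => hclaim _ hdp hdm)⟩
  have hqd1 : (q : ZMod r) ^ d = 1 := by rw [hd]; exact pow_orderOf_eq_one _
  refine ⟨d, b, hdpos, hdr1, ?_, by rw [hnm, hb], (hdvd_iff d).mpr hqd1⟩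
  by_contra h
  push_neg at h
  interval_cases b
  rw [pow_zero] at hb
  rw [hb] at hrm
  exact absurd (Nat.le_of_dvd one_pos hrm) (by omega)

/-- For an odd prime `ℓ` and `t ≡ 1 mod ℓ`, `ℓ²` does not divide `1 + t + ⋯ + t^{ℓ-1}`. -/
lemma zsig_sq_not_dvd (ℓ t : ℕ) (hlp : ℓ.Prime) (hodd : ℓ ≠ 2) (ht : 1 ≤ t)
    (hlt : ℓ ∣ t - 1) : ¬ (ℓ ^ 2 ∣ ∑ i ∈ range ℓ, t ^ i) := by
  intro hdvd
  have hl2 : 2 ≤ ℓ := hlp.two_le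
  haveI : NeZero (ℓ ^ 2) := ⟨by positivity⟩
  obtain ⟨c, hc⟩ := hlt
  have htc : t = ℓ * c + 1 := by omega
  set R := ZMod (ℓ ^ 2)
  have hll : ((ℓ : R) * ℓ) = 0 := by
    have : ((ℓ ^ 2 : ℕ) : R) = 0 := ZMod.natCast_self _
    push_cast at this
    rw [← pow_two]; exact this
  have hx2 : ((ℓ : R) * c) * ((ℓ : R) * c) = 0 := by
    calc ((ℓ : R) * c) * ((ℓ : R) * c) = ((ℓ:R) * ℓ) * (c * c) := by ring
    _ = 0 := by rw [hll, zero_mul]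
  have hxl : (ℓ : R) * ((ℓ : R) * c) = 0 := by
    calc (ℓ : R) * ((ℓ : R) * c) = ((ℓ:R) * ℓ) * c := by ring
    _ = 0 := by rw [hll, zero_mul]
  have hpow : ∀ i : ℕ, (t : R) ^ i = 1 + i * ((ℓ : R) * c) := by
    intro i
    induction i with
    | zero => simp
    | succ i ih =>
      rw [pow_succ, ih]
      have htR : (t : R) = 1 + (ℓ : R) * c := by rw [htc, Nat.cast_add, Nat.cast_mul, Nat.cast_one]; ring
      rw [htR]
      push_cast
      have : (1 + (i:R) * ((ℓ:R) * c)) * (1 + (ℓ:R) * c)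
          = 1 + ((i:R)+1) * ((ℓ:R)*c) + (i:R) * (((ℓ:R)*c) * ((ℓ:R)*c)) := by ring
      rw [this, hx2, mul_zero, add_zero]
  have hsum : ((∑ i ∈ range ℓ, t ^ i : ℕ) : R) = (ℓ : R) := by
    rw [Nat.cast_sum, Finset.sum_congr rfl (fun i _ => Nat.cast_pow (α := R) t i)]
    have h1 : ∀ i ∈ range ℓ, (t : R) ^ i = 1 + i * ((ℓ : R) * c) := fun i _ => hpow i
    rw [Finset.sum_congr rfl h1, Finset.sum_add_distrib]
    simp only [Finset.sum_const, card_range, nsmul_eq_mul, mul_one]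
    rw [← Finset.sum_mul]
    have hgauss : (∑ i ∈ range ℓ, (i : R)) = ((ℓ * (ℓ - 1) / 2 : ℕ) : R) := by
      rw [← Nat.cast_sum]
      congr 1
      rw [Finset.sum_range_id]
    have h2 : ℓ * (ℓ - 1) / 2 = ((ℓ - 1) / 2) * ℓ := by
      obtain ⟨j, hj⟩ : 2 ∣ ℓ - 1 := by
        rcases hlp.eq_two_or_odd with h | h
        · omega
        · omega
      have hmm : ℓ * (ℓ - 1) = 2 * (j * ℓ) := by rw [hj]; ring
      rw [hmm, hj, Nat.mul_div_cancel_left _ (by norm_num : 0 < 2),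
        Nat.mul_div_cancel_left _ (by norm_num : 0 < 2)]
    rw [hgauss, h2]
    rw [Nat.cast_mul]
    have hz : (((ℓ - 1) / 2 : ℕ) : R) * ((ℓ : R) * ((ℓ : R) * (c : R))) = 0 := by
      rw [hxl, mul_zero]
    linear_combination hz
  have h0 : ((∑ i ∈ range ℓ, t ^ i : ℕ) : R) = 0 :=
    (ZMod.natCast_eq_zero_iff _ _).mpr hdvd
  rw [hsum] at h0
  have : ℓ ^ 2 ∣ ℓ := (ZMod.natCast_eq_zero_iff _ _).mp h0
  have := Nat.le_of_dvd (by omega) this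
  nlinarith

/-- `Φ_{m·ℓ^j}(x) = Φ_m(x^{ℓ^j})` when `ℓ ∣ m`. -/
lemma zsig_eval_expand {R : Type*} [CommRing R] (ℓ m : ℕ) (hl : ℓ.Prime) (hm : ℓ ∣ m) :
    ∀ (j : ℕ) (x : R), (cyclotomic (m * ℓ ^ j) R).eval x = (cyclotomic m R).eval (x ^ ℓ ^ j) := by
  intro j
  induction j with
  | zero => intro x; simp
  | succ j ih =>
    intro x
    have h1 : m * ℓ ^ (j + 1) = (m * ℓ ^ j) * ℓ := by ring
    have h2 : ℓ ∣ m * ℓ ^ j := hm.trans ⟨ℓ ^ j, rfl⟩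
    rw [h1, ← cyclotomic_expand_eq_cyclotomic hl h2, expand_eval, ih (x ^ ℓ),
      ← pow_mul, ← pow_succ']

/-- Real lower bound: `Φ_{d·ℓ}(y) > ℓ` given the size hypothesis. -/
lemma zsig_real_bound (d ℓ y : ℕ) (hl : ℓ.Prime) (hd2 : 2 ≤ d) (hld : ¬ ℓ ∣ d)
    (hy : 2 ≤ y) (hbig : ℓ * (y + 1) + 1 ≤ y ^ ℓ) :
    (ℓ : ℝ) < (cyclotomic (d * ℓ) ℝ).eval (y : ℝ) := by
  have hy1 : (1 : ℝ) < (y : ℝ) := by exact_mod_cast hy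
  have hyl1 : (1 : ℝ) < (y : ℝ) ^ ℓ := one_lt_pow₀ hy1 hl.pos.ne'
  set Y : ℝ := (y : ℝ)
  set A : ℝ := (cyclotomic (d * ℓ) ℝ).eval Y with hA
  set B : ℝ := (cyclotomic d ℝ).eval Y with hB
  have hId : (cyclotomic d ℝ).eval (Y ^ ℓ) = A * B := by
    have h := cyclotomic_expand_eq_cyclotomic_mul hl hld ℝ
    have h2 := congrArg (Polynomial.eval Y) h
    rw [expand_eval, eval_mul] at h2
    exact h2
  have hBpos : 0 < B := cyclotomic_pos' d hy1
  have hApos : 0 < A := cyclotomic_pos' (d * ℓ) hy1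
  have hBle : B ≤ (Y + 1) ^ (Nat.totient d) :=
    cyclotomic_eval_le_add_one_pow_totient hy1 d
  have hlow : (Y ^ ℓ - 1) ^ (Nat.totient d) < (cyclotomic d ℝ).eval (Y ^ ℓ) :=
    sub_one_pow_totient_lt_cyclotomic_eval hd2 hyl1
  have hl0 : (0 : ℝ) < (ℓ : ℝ) := by exact_mod_cast hl.pos
  have hstep : (ℓ : ℝ) * (Y + 1) ≤ Y ^ ℓ - 1 := by
    have : ((ℓ * (y + 1) + 1 : ℕ) : ℝ) ≤ ((y ^ ℓ : ℕ) : ℝ) := by exact_mod_cast hbig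
    push_cast at this
    nlinarith [this]
  have hpos1 : (0 : ℝ) < (ℓ : ℝ) * (Y + 1) := by nlinarith
  have hpow : ((ℓ : ℝ) * (Y + 1)) ^ (Nat.totient d) ≤ (Y ^ ℓ - 1) ^ (Nat.totient d) :=
    pow_le_pow_left₀ (le_of_lt hpos1) hstep _
  have htp : 1 ≤ Nat.totient d := Nat.totient_pos.mpr (by omega)
  have hlY : (ℓ : ℝ) * (Y + 1) ^ (Nat.totient d) ≤ ((ℓ : ℝ) * (Y + 1)) ^ (Nat.totient d) := by
    rw [mul_pow]
    have h1 : (ℓ : ℝ) ≤ (ℓ : ℝ) ^ (Nat.totient d) := by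
      apply le_self_pow₀ (by exact_mod_cast hl.one_lt.le) (by omega)
    have h2 : (0:ℝ) < (Y + 1) ^ (Nat.totient d) := by positivity
    nlinarith
  have hchain : (ℓ : ℝ) * B < A * B := by
    calc (ℓ : ℝ) * B ≤ (ℓ : ℝ) * (Y + 1) ^ (Nat.totient d) := by
          have : (0:ℝ) < (ℓ:ℝ) := by exact_mod_cast hl.pos
          nlinarith
    _ ≤ ((ℓ : ℝ) * (Y + 1)) ^ (Nat.totient d) := hlY
    _ ≤ (Y ^ ℓ - 1) ^ (Nat.totient d) := hpow
    _ < (cyclotomic d ℝ).eval (Y ^ ℓ) := hlow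
    _ = A * B := hId
  exact lt_of_mul_lt_mul_right hchain (le_of_lt hBpos) |>.trans_le (le_refl _)

lemma zsig_add_two_le_two_pow : ∀ i : ℕ, (i + 2) + 2 ≤ 2 ^ (i + 2) := by
  intro i
  induction i with
  | zero => norm_num
  | succ i ih =>
    have hp : 2 ^ (i + 1 + 2) = 2 * 2 ^ (i + 2) := by ring
    omega

lemma zsig_pow_big (ℓ y : ℕ) (h5 : 5 ≤ ℓ) (hy : 2 ≤ y) : ℓ * (y + 1) + 1 ≤ y ^ ℓ := by
  have h1 : ℓ ≤ 2 ^ (ℓ - 2) := by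
    have := zsig_add_two_le_two_pow (ℓ - 4)
    have he : ℓ - 4 + 2 = ℓ - 2 := by omega
    rw [he] at this
    omega
  have h2 : 2 ^ (ℓ - 2) ≤ y ^ (ℓ - 2) := Nat.pow_le_pow_left hy _
  have h3 : y ^ ℓ = y ^ (ℓ - 2) * y ^ 2 := by
    rw [← pow_add]
    congr 1
    omega
  have h4 : ℓ * y ^ 2 ≤ y ^ (ℓ - 2) * y ^ 2 :=
    Nat.mul_le_mul_right _ (h1.trans h2)
  have hyy : 2 * y ≤ y * y := Nat.mul_le_mul_right y hy
  have hy2 : y + 2 ≤ y ^ 2 := by rw [pow_two]; omega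
  calc ℓ * (y + 1) + 1 ≤ ℓ * (y + 1) + ℓ := by omega
    _ = ℓ * (y + 2) := by ring
    _ ≤ ℓ * y ^ 2 := Nat.mul_le_mul_left _ hy2
    _ ≤ y ^ (ℓ - 2) * y ^ 2 := h4
    _ = y ^ ℓ := h3.symm

lemma zsig_pow_big3 (y : ℕ) (hy : 8 ≤ y) : 3 * (y + 1) + 1 ≤ y ^ 3 := by
  have h1 : 8 * y ≤ y * y := Nat.mul_le_mul_right y hy
  have h2 : y * y * 1 ≤ y * y * y := Nat.mul_le_mul_left _ (by omega)
  have h3 : y ^ 3 = y * y * y := by ring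
  omega

/-- Weak Zsigmondy theorem: for a prime `q` and positive integer `n` with `q ^ n ≠ 2`,
there exists a primitive prime divisor of `q ^ n - 1`, except when `n = 2` and `q` is a
Mersenne prime, or `q ^ n = 64`. -/
theorem weak_zsigmondy (q n : ℕ) (hq : q.Prime) (hn : 0 < n) (hqn : q ^ n ≠ 2) :
    (∃ ℓ : ℕ, ℓ.Prime ∧ ℓ ∣ q ^ n - 1 ∧ ∀ k : ℕ, 1 ≤ k → k < n → ¬ ℓ ∣ q ^ k - 1) ∨
      ((n = 2 ∧ ∃ m : ℕ, 0 < m ∧ q = 2 ^ m - 1) ∨ q ^ n = 64) := by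
  have hq2 : 2 ≤ q := hq.two_le
  rcases Nat.lt_or_ge n 3 with h3 | h3
  · interval_cases n
    · -- n = 1
      left
      have hq3 : 3 ≤ q := by
        rcases Nat.lt_or_ge q 3 with h | h
        · interval_cases q
          · exact absurd (by norm_num : (2:ℕ)^1 = 2) hqn
        · exact h
      refine ⟨(q - 1).minFac, Nat.minFac_prime (by omega), ?_, ?_⟩
      · simpa using Nat.minFac_dvd (q - 1)
      · intro k hk1 hk2; omega
    · -- n = 2
      by_cases hpow2 : ∃ m, 0 < m ∧ q = 2 ^ m - 1
      · exact Or.inr (Or.inl ⟨rfl, hpow2⟩)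
      left
      by_cases hall : ∀ s, Nat.Prime s → s ∣ q + 1 → s = 2
      · exfalso
        obtain ⟨b, hb⟩ : ∃ b, q + 1 = 2 ^ b :=
          ⟨_, Nat.eq_prime_pow_of_unique_prime_dvd (by omega)
            (fun hp hd => hall _ hp hd)⟩
        refine hpow2 ⟨b, ?_, by omega⟩
        by_contra hb0
        push_neg at hb0
        interval_cases b
        simp at hb
        omega
      · push_neg at hall
        obtain ⟨s, hsp, hsd, hs2⟩ := hall
        obtain ⟨q', rfl⟩ : ∃ q', q = q' + 2 := ⟨q - 2, by omega⟩
        have hq1 : (q' + 2) ^ 2 - 1 = ((q' + 2) + 1) * ((q' + 2) - 1) := by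
          have e1 : (q' + 2) ^ 2 = q' * q' + 4 * q' + 4 := by ring
          have e2 : ((q' + 2) + 1) * ((q' + 2) - 1) = (q' + 3) * (q' + 1) := by norm_num
          have e3 : (q' + 3) * (q' + 1) = q' * q' + 4 * q' + 3 := by ring
          omega
        refine ⟨s, hsp, ?_, ?_⟩
        · rw [hq1]; exact hsd.mul_right _
        · intro k hk1 hk2
          have hk : k = 1 := by omega
          subst hk
          rw [pow_one]
          intro hdvd
          have h2 : s ∣ (q' + 2 + 1) - (q' + 2 - 1) := Nat.dvd_sub hsd hdvd
          have he : (q' + 2 + 1) - (q' + 2 - 1) = 2 := by omega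
          rw [he] at h2
          exact hs2 ((Nat.prime_dvd_prime_iff_eq hsp Nat.prime_two).mp h2)
  -- now n ≥ 3
  by_cases h64 : q = 2 ∧ n = 6
  · right; right; rw [h64.1, h64.2]; norm_num
  by_contra hcontra
  push_neg at hcontra
  obtain ⟨hcon, -⟩ := hcontra
  set Φ := ((cyclotomic n ℤ).eval (q : ℤ)).natAbs with hΦdef
  have hΦ1 : 1 < Φ := by
    have := Polynomial.sub_one_lt_natAbs_cyclotomic_eval
      (show 1 < n by omega) (show q ≠ 1 by omega)
    omega
  have hΦdvd : Φ ∣ q ^ n - 1 := zsig_phi_dvd q n (by omega)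
  have hstruct : ∀ r : ℕ, r.Prime → r ∣ Φ →
      r ∣ n ∧ ∃ d b, 0 < d ∧ d ∣ r - 1 ∧ 1 ≤ b ∧ n = d * r ^ b ∧ r ∣ q ^ d - 1 := by
    intro r hrp hr
    have hrqn : r ∣ q ^ n - 1 := hr.trans hΦdvd
    obtain ⟨k, hk1, hkn, hrk⟩ := hcon r hrp hrqn
    have hrn : r ∣ n := zsig_prime_dvd_n q n r k hq2 hrp hr hk1 hkn hrk
    exact ⟨hrn, zsig_structure q n r hq2 (by omega) hrp hr hrn⟩
  set ℓ := Φ.minFac with hℓdef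
  have hℓp : ℓ.Prime := Nat.minFac_prime (by omega)
  have hℓ2 : 2 ≤ ℓ := hℓp.two_le
  have hℓΦ : ℓ ∣ Φ := Nat.minFac_dvd Φ
  obtain ⟨hℓn, d, b, hdpos, hdr1, hb1, hnd, hℓqd⟩ := hstruct ℓ hℓp hℓΦ
  have hdℓ1 : d ≤ ℓ - 1 := Nat.le_of_dvd (by omega) hdr1
  have huniq : ∀ s, s.Prime → s ∣ Φ → s = ℓ := by
    intro s hsp hs
    by_contra hne
    obtain ⟨hsn, ds, bs, hdspos, hdsr, hbs1, hnds, -⟩ := hstruct s hsp hs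
    have h1 : s ∣ d := by
      have hh : s ∣ d * ℓ ^ b := hnd ▸ hsn
      rcases (Nat.Prime.dvd_mul hsp).mp hh with h | h
      · exact h
      · exact absurd ((Nat.prime_dvd_prime_iff_eq hsp hℓp).mp
          (hsp.dvd_of_dvd_pow h)) hne
    have hslt : s < ℓ := by
      have := Nat.le_of_dvd (by omega) (h1.trans hdr1)
      omega
    have h2 : ℓ ∣ ds := by
      have hh : ℓ ∣ ds * s ^ bs := hnds ▸ hℓn
      rcases (Nat.Prime.dvd_mul hℓp).mp hh with h | h
      · exact h
      · exact absurd ((Nat.prime_dvd_prime_iff_eq hℓp hsp).mp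
          (hℓp.dvd_of_dvd_pow h)).symm hne
    have hltS : ℓ < s := by
      have h3 := Nat.le_of_dvd (show 0 < s - 1 by have := hsp.two_le; omega)
        (h2.trans hdsr)
      omega
    omega
  -- Φ is a power of ℓ
  obtain ⟨c, hc⟩ : ∃ c, Φ = ℓ ^ c :=
    ⟨_, Nat.eq_prime_pow_of_unique_prime_dvd (by omega)
      (fun hp hd => huniq _ hp hd)⟩
  -- the geometric sum with e = n / ℓ
  set e := d * ℓ ^ (b - 1) with hedef
  have hne : n = e * ℓ := by
    rw [hnd, hedef, mul_assoc, ← pow_succ]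
    congr 2
    omega
  have hepos : 0 < e := by
    have : 0 < ℓ ^ (b - 1) := pow_pos (by omega) _
    positivity
  have hΦQ : Φ ∣ ∑ i ∈ range ℓ, (q ^ e) ^ i :=
    zsig_phi_dvd_geom q n e ℓ hq2 hepos hℓp.one_lt hne
  have hdvde : ℓ ∣ q ^ e - 1 := by
    refine hℓqd.trans ?_
    have := Nat.sub_dvd_pow_sub_pow (q ^ d) 1 (ℓ ^ (b - 1))
    rwa [one_pow, ← pow_mul, ← hedef] at this
  have hqe1 : 1 ≤ q ^ e := Nat.one_le_pow _ _ (by omega)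
  have hℓsq : ¬ ℓ ^ 2 ∣ Φ := by
    intro h
    have hQ2 : ℓ ^ 2 ∣ ∑ i ∈ range ℓ, (q ^ e) ^ i := h.trans hΦQ
    rcases eq_or_ne ℓ 2 with h2 | h2
    · -- ℓ = 2
      rw [h2] at hQ2
      have hd1 : d = 1 := by
        rw [h2] at hdr1
        simpa using hdr1
      have hqodd : q % 2 = 1 := by
        have h2q : (2:ℕ) ∣ q ^ n - 1 := by
          have := hℓΦ.trans hΦdvd
          rwa [h2] at this
        rcases Nat.even_or_odd q with he | ho
        · exfalso
          obtain ⟨j, hj⟩ := he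
          have hdq : 2 ∣ q ^ n := Dvd.dvd.trans ⟨j, by omega⟩ (dvd_pow_self q (by omega))
          have h1 : 1 ≤ q ^ n := Nat.one_le_pow _ _ (by omega)
          have hsub := Nat.dvd_sub hdq h2q
          have he2 : q ^ n - (q ^ n - 1) = 1 := by omega
          rw [he2] at hsub
          omega
        · obtain ⟨w, hw⟩ := ho
          omega
      have hb2 : 2 ≤ b := by
        by_contra hh
        push_neg at hh
        have hb1' : b = 1 := by omega
        have : n = 2 := by rw [hnd, hd1, h2, hb1']; norm_num
        omega
      have heeven : 2 ∣ e := by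
        rw [hedef, hd1, one_mul, h2]
        exact dvd_pow_self 2 (by omega)
      obtain ⟨f, hf⟩ := heeven
      have hsodd : q ^ f % 2 = 1 := by
        rw [Nat.pow_mod, hqodd, one_pow]
        norm_num
      obtain ⟨j, hj⟩ : ∃ j, q ^ f = 2 * j + 1 := ⟨q ^ f / 2, by omega⟩
      have hqe : q ^ e = (q ^ f) * (q ^ f) := by
        rw [hf, two_mul, pow_add]
      have hQval : ∑ i ∈ range 2, (q ^ e) ^ i = 1 + q ^ e := by
        simp [Finset.sum_range_succ]
      rw [hQval, hqe, hj] at hQ2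
      have h4 : (2:ℕ) ^ 2 = 4 := by norm_num
      rw [h4] at hQ2
      have hx : 1 + (2 * j + 1) * (2 * j + 1) = 4 * (j * j + j) + 2 := by ring
      rw [hx] at hQ2
      omega
    · exact zsig_sq_not_dvd ℓ (q ^ e) hℓp h2 hqe1 hdvde hQ2
  have hΦℓ : Φ = ℓ := by
    rcases Nat.lt_or_ge c 2 with hcl | hcl
    · interval_cases c
      · rw [hc] at hΦ1; simp at hΦ1
      · rw [hc, pow_one]
    · exfalso
      exact hℓsq (hc ▸ pow_dvd_pow ℓ hcl)
  -- final size contradiction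
  rcases eq_or_ne q 2 with hq2' | hq2'
  · -- q = 2
    subst hq2'
    have hℓodd : ℓ ≠ 2 := by
      intro h
      have h2q : (2 : ℕ) ∣ 2 ^ n - 1 := by
        have := hℓΦ.trans hΦdvd
        rwa [h] at this
      have h1 : 1 ≤ 2 ^ n := Nat.one_le_pow _ _ (by norm_num)
      have h2' : (2:ℕ) ∣ 2 ^ n := dvd_pow_self 2 (by omega)
      have hsub := Nat.dvd_sub h2' h2q
      have he2 : 2 ^ n - (2 ^ n - 1) = 1 := by omega
      rw [he2] at hsub
      omega
    have hℓ3 : 3 ≤ ℓ := by omega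
    set y := 2 ^ ℓ ^ (b - 1) with hydef
    have hy2 : 2 ≤ y := by
      rw [hydef]
      calc (2:ℕ) = 2 ^ 1 := by norm_num
      _ ≤ 2 ^ ℓ ^ (b - 1) := Nat.pow_le_pow_right (by norm_num)
          (Nat.one_le_pow _ _ (by omega))
    rcases eq_or_ne d 1 with hd1 | hd1
    · -- d = 1 : n = ℓ^b, Φ = 1 + y + ... + y^{ℓ-1} > ℓ
      have hnℓ : n = ℓ * ℓ ^ (b - 1) := by
        rw [hnd, hd1, one_mul, ← pow_succ']
        congr 1
        omega
      have heval : (cyclotomic n ℤ).eval ((2:ℕ) : ℤ)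
          = (cyclotomic ℓ ℤ).eval (((2:ℕ) : ℤ) ^ ℓ ^ (b - 1)) := by
        rw [hnℓ]
        exact zsig_eval_expand ℓ ℓ hℓp dvd_rfl (b - 1) _
      haveI : Fact ℓ.Prime := ⟨hℓp⟩
      have hgeom : (cyclotomic ℓ ℤ).eval (((2:ℕ) : ℤ) ^ ℓ ^ (b - 1))
          = ∑ i ∈ range ℓ, ((y : ℕ) : ℤ) ^ i := by
        have hcastY : ((2:ℕ) : ℤ) ^ ℓ ^ (b - 1) = ((y:ℕ) : ℤ) := by
          rw [hydef]; push_cast; ring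
        rw [cyclotomic_prime, eval_finset_sum]
        simp only [eval_pow, eval_X]
        rw [hcastY]
      have hΦsum : Φ = ∑ i ∈ range ℓ, y ^ i := by
        have hcs : (∑ i ∈ range ℓ, ((y:ℕ):ℤ) ^ i) = ((∑ i ∈ range ℓ, y ^ i : ℕ) : ℤ) := by
          push_cast; rfl
        rw [hΦdef, heval, hgeom, hcs]
        exact Int.natAbs_natCast _
      have hbig : ℓ < ∑ i ∈ range ℓ, y ^ i := by
        have h1 : y ^ (ℓ - 1) ≤ ∑ i ∈ range ℓ, y ^ i :=
          Finset.single_le_sum (f := fun i => y ^ i)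
            (fun i _ => Nat.zero_le _) (Finset.mem_range.mpr (by omega))
        have h2 : 2 ^ (ℓ - 1) ≤ y ^ (ℓ - 1) := Nat.pow_le_pow_left hy2 _
        have h3 : ℓ + 1 ≤ 2 ^ (ℓ - 1) := by
          have := zsig_add_two_le_two_pow (ℓ - 3)
          have he1 : ℓ - 3 + 2 = ℓ - 1 := by omega
          rw [he1] at this
          omega
        omega
      rw [← hΦsum] at hbig
      omega
    · -- d ≥ 2
      have hd2 : 2 ≤ d := by omega
      have hℓd : ¬ ℓ ∣ d := by
        intro h
        have := Nat.le_of_dvd (by omega) h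
        omega
      have hbig : ℓ * (y + 1) + 1 ≤ y ^ ℓ := by
        have hodd := hℓp.odd_of_ne_two hℓodd
        rcases Nat.lt_or_ge ℓ 5 with h5 | h5
        · have hℓ3' : ℓ = 3 := by
            obtain ⟨w, hw⟩ := hodd
            omega
          have hdval : d = 2 := by
            rw [hℓ3'] at hdr1
            have := Nat.le_of_dvd (by norm_num) hdr1
            omega
          have hb2 : 2 ≤ b := by
            by_contra hh
            push_neg at hh
            have hb1' : b = 1 := by omega
            exact h64 ⟨rfl, by rw [hnd, hdval, hℓ3', hb1']; norm_num⟩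
          have hy8 : 8 ≤ y := by
            rw [hydef, hℓ3']
            calc (8:ℕ) = 2 ^ 3 := by norm_num
            _ ≤ 2 ^ 3 ^ (b - 1) := Nat.pow_le_pow_right (by norm_num)
                (by calc (3:ℕ) = 3 ^ 1 := by norm_num
                    _ ≤ 3 ^ (b - 1) := Nat.pow_le_pow_right (by norm_num) (by omega))
          rw [hℓ3']
          exact zsig_pow_big3 y hy8
        · exact zsig_pow_big ℓ y h5 hy2
      have hnℓ : n = (d * ℓ) * ℓ ^ (b - 1) := by
        rw [hnd, mul_assoc, ← pow_succ']
        congr 2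
        omega
      have heval : (cyclotomic n ℤ).eval ((2:ℕ) : ℤ)
          = (cyclotomic (d * ℓ) ℤ).eval (((y : ℕ)) : ℤ) := by
        have hcastY : ((2:ℕ) : ℤ) ^ ℓ ^ (b - 1) = ((y:ℕ) : ℤ) := by
          rw [hydef]; push_cast; ring
        rw [hnℓ, zsig_eval_expand ℓ (d * ℓ) hℓp (dvd_mul_left ℓ d) (b - 1) _, hcastY]
      have hpos : (0:ℤ) < (cyclotomic n ℤ).eval ((2:ℕ) : ℤ) :=
        cyclotomic_pos' n (by norm_num)
      have hΦz : (cyclotomic n ℤ).eval ((2:ℕ) : ℤ) = (ℓ : ℤ) := by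
        have h1 : ((cyclotomic n ℤ).eval ((2:ℕ) : ℤ)).natAbs = ℓ := hΦℓ
        omega
      have hreal := zsig_real_bound d ℓ y hℓp hd2 hℓd hy2 hbig
      have hcast : (cyclotomic (d * ℓ) ℝ).eval ((y : ℕ) : ℝ) = (ℓ : ℝ) := by
        have h0 := cyclotomic.eval_apply ((y : ℕ) : ℤ) (d * ℓ) (Int.castRingHom ℝ)
        simp only [eq_intCast, map_intCast] at h0
        rw [show ((y:ℕ):ℝ) = (((y:ℕ):ℤ):ℝ) by push_cast; ring, h0, ← heval, hΦz]
        push_cast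
        ring
      rw [hcast] at hreal
      exact lt_irrefl _ hreal
  · -- q ≥ 3
    have hq3 : 3 ≤ q := by omega
    have hbound := Polynomial.sub_one_pow_totient_lt_natAbs_cyclotomic_eval
      (show 1 < n by omega) (show q ≠ 1 by omega)
    have hφ : ℓ - 1 ≤ Nat.totient n := by
      have hd := Nat.totient_dvd_of_dvd hℓn
      have := Nat.le_of_dvd (Nat.totient_pos.mpr (by omega)) hd
      rwa [Nat.totient_prime hℓp] at this
    have h2φ : 2 ^ (ℓ - 1) ≤ (q - 1) ^ Nat.totient n :=
      le_trans (Nat.pow_le_pow_right (by norm_num) hφ)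
        (Nat.pow_le_pow_left (by omega) _)
    have hℓle : ℓ ≤ 2 ^ (ℓ - 1) := by
      have := Nat.lt_two_pow_self (n := ℓ - 1)
      omega
    rw [← hΦdef, hΦℓ] at hbound
    omega
end

section
/- Let p and q be primes and a, b positive integers such that p^a = 1 + q^b. Then one of the following holds: (1) q^b = 8 and p^a = 9; (2) q = 2, a = 1, b is a power of 2, and p = 2^b + 1; (3) p = 2, b = 1, a is a prime, and q = 2^a − 1. -/
private lemma aux_two_pow_dvd {i n : ℕ} (hin : i + 1 ≤ n) :
    ((2 ^ n : ℕ) : ZMod (2 ^ (i + 1))) = 0 := by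
  rw [ZMod.natCast_eq_zero_iff]
  exact pow_dvd_pow 2 hin

private lemma aux1 {x m n : ℕ} (hx : 3 ≤ x) (hm : Odd m) (hm3 : 3 ≤ m)
    (h : x ^ m = 1 + 2 ^ n) : False := by
  have hdvd : x - 1 ∣ 2 ^ n := by
    have := Nat.sub_dvd_pow_sub_pow x 1 m
    simpa [h] using this
  obtain ⟨i, hi, hxi⟩ := (Nat.dvd_prime_pow Nat.prime_two).mp hdvd
  have hx1 : x = 2 ^ i + 1 := by omega
  have hi1 : 1 ≤ i := by
    by_contra hc
    have : i = 0 := by omega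
    subst this
    simp at hxi
    omega
  -- bound: 2 * i < n
  have h3 : x ^ 3 ≤ x ^ m := Nat.pow_le_pow_right (by omega) hm3
  have ht2 : 2 ≤ 2 ^ i := by omega
  have hcube : (2 ^ i + 1) ^ 3 = 2 ^ i * 2 ^ i * 2 ^ i + 3 * (2 ^ i * 2 ^ i) + 3 * 2 ^ i + 1 := by
    ring
  have hx3m : (2 ^ i + 1) ^ 3 ≤ 1 + 2 ^ n := by rw [← hx1]; omega
  have htn : 2 ^ i * 2 ^ i < 2 ^ n := by nlinarith [hcube, hx3m, ht2]
  have h2in : 2 ^ (2 * i) < 2 ^ n := by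
    rw [two_mul, pow_add]; exact htn
  have hn2i : 2 * i < n := by
    exact (Nat.pow_lt_pow_iff_right (by norm_num)).mp h2in
  have hin : i + 1 ≤ n := by omega
  -- work in ZMod (2^(i+1))
  set R := ZMod (2 ^ (i + 1)) with hR
  have hMn : ((2 : R)) ^ n = 0 := by
    have := aux_two_pow_dvd (i := i) hin
    push_cast at this
    exact this
  have hM2i : ((2 : R)) ^ (2 * i) = 0 := by
    have := aux_two_pow_dvd (i := i) (n := 2 * i) (by omega)
    push_cast at this
    exact this
  have hMi1 : ((2 : R)) ^ (i + 1) = 0 := by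
    have := ZMod.natCast_self (2 ^ (i + 1))
    push_cast at this
    exact this
  have e1 : ((2 : R) ^ i + 1) ^ m = 1 + (2 : R) ^ n := by
    have := congrArg (Nat.cast : ℕ → R) (hx1 ▸ h)
    push_cast at this
    exact this
  have sq : ((2 : R) ^ i + 1) ^ 2 = 1 := by
    have expand : ((2 : R) ^ i + 1) ^ 2 = (2 : R) ^ (2 * i) + (2 : R) ^ (i + 1) + 1 := by
      ring
    rw [expand, hM2i, hMi1]; ring
  obtain ⟨t, rfl⟩ := hm
  have epow : ((2 : R) ^ i + 1) ^ (2 * t + 1) = (2 : R) ^ i + 1 := by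
    rw [pow_succ, pow_mul, sq, one_pow, one_mul]
  rw [epow, hMn, add_zero] at e1
  have h0 : ((2 ^ i : ℕ) : R) = 0 := by
    push_cast
    linear_combination e1
  rw [ZMod.natCast_eq_zero_iff] at h0
  have := (Nat.pow_dvd_pow_iff_le_right (one_lt_two)).mp h0
  omega

private lemma aux2 {x m n : ℕ} (hx : 3 ≤ x) (hm : Odd m) (hm3 : 3 ≤ m)
    (h : x ^ m + 1 = 2 ^ n) : False := by
  have hdvd : x + 1 ∣ 2 ^ n := by
    have := Odd.nat_add_dvd_pow_add_pow x 1 hm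
    simpa [h] using this
  obtain ⟨i, hi, hxi⟩ := (Nat.dvd_prime_pow Nat.prime_two).mp hdvd
  have hi2 : 2 ≤ i := by
    by_contra hc
    interval_cases i <;> simp at hxi <;> omega
  -- bound: 2 * i < n
  have h3 : x ^ 3 ≤ x ^ m := Nat.pow_le_pow_right (by omega) hm3
  have hsq : 2 ^ i * 2 ^ i = x * x + 2 * x + 1 := by rw [← hxi]; ring
  have h3' : x ^ 3 + 1 ≤ 2 ^ n := by omega
  have hx3 : x * x * x = x ^ 3 := by ring
  have htn : 2 ^ i * 2 ^ i < 2 ^ n := by nlinarith [hsq, h3', hx, hx3]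
  have h2in : 2 ^ (2 * i) < 2 ^ n := by
    rw [two_mul, pow_add]; exact htn
  have hn2i : 2 * i < n := (Nat.pow_lt_pow_iff_right (by norm_num)).mp h2in
  have hin : i + 1 ≤ n := by omega
  set R := ZMod (2 ^ (i + 1)) with hR
  have hMn : ((2 : R)) ^ n = 0 := by
    have := aux_two_pow_dvd (i := i) hin
    push_cast at this
    exact this
  have hM2i : ((2 : R)) ^ (2 * i) = 0 := by
    have := aux_two_pow_dvd (i := i) (n := 2 * i) (by omega)
    push_cast at this
    exact this
  have hMi1 : ((2 : R)) ^ (i + 1) = 0 := by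
    have := ZMod.natCast_self (2 ^ (i + 1))
    push_cast at this
    exact this
  have hxcast : (x : R) + 1 = (2 : R) ^ i := by
    have := congrArg (Nat.cast : ℕ → R) hxi
    push_cast at this
    exact this
  have e1 : (x : R) ^ m + 1 = (2 : R) ^ n := by
    have := congrArg (Nat.cast : ℕ → R) h
    push_cast at this
    exact this
  have sq : (x : R) ^ 2 = 1 := by
    have expand : (x : R) ^ 2 = ((x : R) + 1) ^ 2 - 2 * ((x : R) + 1) + 1 := by ring
    rw [expand, hxcast]
    have e2 : ((2 : R) ^ i) ^ 2 = (2 : R) ^ (2 * i) := by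
      rw [← pow_mul, Nat.mul_comm]
    have e3 : 2 * (2 : R) ^ i = (2 : R) ^ (i + 1) := by ring
    rw [e2, e3, hM2i, hMi1]; ring
  obtain ⟨t, rfl⟩ := hm
  have epow : (x : R) ^ (2 * t + 1) = (x : R) := by
    rw [pow_succ, pow_mul, sq, one_pow, one_mul]
  rw [epow, hMn] at e1
  have h0 : ((2 ^ i : ℕ) : R) = 0 := by
    push_cast
    linear_combination e1 - hxcast
  rw [ZMod.natCast_eq_zero_iff] at h0
  have := (Nat.pow_dvd_pow_iff_le_right (one_lt_two)).mp h0
  omega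

/-- If `p` and `q` are primes with `p ^ a = 1 + q ^ b` for positive integers `a, b`, then
either `q ^ b = 8` and `p ^ a = 9`, or `q = 2`, `a = 1`, `b` a power of `2` and `p = 2 ^ b + 1`,
or `p = 2`, `b = 1`, `a` prime and `q = 2 ^ a - 1`. -/
theorem catalan_like (p q a b : ℕ) (hp : p.Prime) (hq : q.Prime) (ha : 0 < a) (hb : 0 < b)
    (h : p ^ a = 1 + q ^ b) :
    (q ^ b = 8 ∧ p ^ a = 9) ∨
      (q = 2 ∧ a = 1 ∧ (∃ c : ℕ, b = 2 ^ c) ∧ p = 2 ^ b + 1) ∨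
      (p = 2 ∧ b = 1 ∧ a.Prime ∧ q = 2 ^ a - 1) := by
  rcases eq_or_ne q 2 with rfl | hq2
  · -- q = 2
    rcases eq_or_ne a 1 with rfl | ha1
    · right; left
      rw [pow_one] at h
      refine ⟨rfl, rfl, ?_, by omega⟩
      have hP : (2 ^ b + 1).Prime := by rwa [h, add_comm] at hp
      exact Nat.pow_of_pow_add_prime one_lt_two hb.ne' hP
    · -- a ≥ 2
      have hpodd : p ≠ 2 := by
        intro hpe
        subst hpe
        have h2a : 2 ∣ 2 ^ a := dvd_pow_self 2 ha.ne'
        have h2b : 2 ∣ 2 ^ b := dvd_pow_self 2 hb.ne'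
        rw [h] at h2a
        omega
      have hp3 : 3 ≤ p := by have := hp.two_le; omega
      obtain ⟨k, m, hm, hkm⟩ := Nat.exists_eq_two_pow_mul_odd ha.ne'
      rcases eq_or_ne m 1 with rfl | hm1
      · -- a = 2^k, k ≥ 1
        left
        rw [mul_one] at hkm
        have hk1 : 1 ≤ k := by
          rcases Nat.eq_zero_or_pos k with rfl | hk
          · simp at hkm; omega
          · exact hk
        have hxx : (p ^ 2 ^ (k - 1)) ^ 2 = p ^ a := by
          rw [← pow_mul, hkm]
          congr 1
          rw [← pow_succ]
          congr 1
          omega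
        have hx3 : 3 ≤ p ^ 2 ^ (k - 1) :=
          le_trans hp3 (Nat.le_self_pow (Nat.pos_of_ne_zero (by positivity)).ne' p)
        have heq : (p ^ 2 ^ (k - 1)) ^ 2 = 1 + 2 ^ b := by rw [hxx, h]
        obtain ⟨y, hy⟩ : ∃ y, p ^ 2 ^ (k - 1) = y + 1 := ⟨p ^ 2 ^ (k - 1) - 1, by omega⟩
        have hy2 : 2 ≤ y := by omega
        have hfac : y * (y + 2) = 2 ^ b := by nlinarith [heq, hy]
        have hdy : y ∣ 2 ^ b := ⟨y + 2, hfac.symm⟩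
        have hdy2 : y + 2 ∣ 2 ^ b := ⟨y, by rw [← hfac]; ring⟩
        obtain ⟨i, hi, hyi⟩ := (Nat.dvd_prime_pow Nat.prime_two).mp hdy
        obtain ⟨j, hj, hyj⟩ := (Nat.dvd_prime_pow Nat.prime_two).mp hdy2
        have hi1 : 1 ≤ i := by
          by_contra hc
          have : i = 0 := by omega
          subst this; simp at hyi; omega
        have hj2 : 2 ≤ j := by
          by_contra hc
          interval_cases j <;> simp at hyj <;> omega
        have hieq : i = 1 := by
          by_contra hne
          have h4i : (4 : ℕ) ∣ 2 ^ i := by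
            have : 2 ^ 2 ∣ 2 ^ i := pow_dvd_pow 2 (by omega)
            simpa using this
          have h4j : (4 : ℕ) ∣ 2 ^ j := by
            have : 2 ^ 2 ∣ 2 ^ j := pow_dvd_pow 2 (by omega)
            simpa using this
          omega
        subst hieq
        have hy2' : y = 2 := by simpa using hyi
        have hxp : p ^ 2 ^ (k - 1) = 3 := by omega
        have hp3' : p = 3 := by
          have hdvd3 : p ∣ 3 := hxp ▸ dvd_pow_self p (Nat.pos_of_ne_zero (by positivity)).ne'
          exact (Nat.prime_dvd_prime_iff_eq hp (by norm_num)).mp hdvd3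
        have hexp1 : 2 ^ (k - 1) = 1 := by
          have h31 : (3 : ℕ) ^ 2 ^ (k - 1) = 3 ^ 1 := by
            rw [pow_one]
            rw [hp3'] at hxp
            exact hxp
          exact Nat.pow_right_injective (by norm_num) h31
        have hk0 : k - 1 = 0 := by
          by_contra hc
          have := Nat.one_lt_two_pow_iff.mpr hc
          omega
        have ha2 : a = 2 := by
          rw [hkm]
          have : k = 1 := by omega
          subst this; rfl
        have hpa : p ^ a = 9 := by rw [hp3', ha2]; norm_num
        exact ⟨by omega, hpa⟩
      · -- m odd ≥ 3
        exfalso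
        have hm3 : 3 ≤ m := by
          rcases hm with ⟨t, rfl⟩; omega
        refine aux1 (x := p ^ 2 ^ k) (m := m) (n := b) ?_ hm hm3 ?_
        · exact le_trans hp3 (Nat.le_self_pow (Nat.pos_of_ne_zero (by positivity)).ne' p)
        · rw [← pow_mul, ← hkm]; exact h
  · -- q ≠ 2
    have hqodd : ¬ 2 ∣ q := fun hd =>
      hq2 ((Nat.prime_dvd_prime_iff_eq Nat.prime_two hq).mp hd).symm
    have hq3 : 3 ≤ q := by have := hq.two_le; omega
    have hqbodd : ¬ 2 ∣ q ^ b := fun hd => hqodd (Nat.Prime.dvd_of_dvd_pow Nat.prime_two hd)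
    have hp2 : p = 2 := by
      have h2pa : 2 ∣ p ^ a := by omega
      exact ((Nat.prime_dvd_prime_iff_eq Nat.prime_two hp).mp (Nat.prime_two.dvd_of_dvd_pow h2pa)).symm
    subst hp2
    rcases eq_or_ne b 1 with rfl | hb1
    · right; right
      rw [pow_one] at h
      have hq' : q = 2 ^ a - 1 := by omega
      have ha1 : a ≠ 1 := by
        intro haa
        rw [haa, pow_one] at h
        have := hq.two_le
        omega
      have hprime := Nat.prime_of_pow_sub_one_prime ha1 (hq' ▸ hq)
      exact ⟨rfl, rfl, hprime.2, hq'⟩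
    · exfalso
      have hb2 : 2 ≤ b := by omega
      rcases Nat.even_or_odd b with hbe | hbo
      · obtain ⟨r, rfl⟩ := hbe
        have hr1 : 1 ≤ r := by omega
        have hqr2 : q ^ (r + r) = (q ^ r) ^ 2 := by
          rw [← pow_mul]
          congr 1
          omega
        have hodd : ¬ 2 ∣ q ^ r := fun hd => hqodd (Nat.prime_two.dvd_of_dvd_pow hd)
        obtain ⟨t, ht⟩ : ∃ t, q ^ r = 2 * t + 1 := ⟨q ^ r / 2, by omega⟩
        have hq9 : 9 ≤ q ^ (r + r) := by
          have h1 : (3 : ℕ) ^ 2 ≤ q ^ 2 := Nat.pow_le_pow_left hq3 2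
          have h2 : q ^ 2 ≤ q ^ (r + r) := Nat.pow_le_pow_right (by omega) (by omega)
          norm_num at h1
          omega
        have hsq : q ^ (r + r) = 4 * (t * t + t) + 1 := by rw [hqr2, ht]; ring
        rcases eq_or_ne a 1 with haa | ha1
        · rw [haa, pow_one] at h; omega
        · have h4a : (4 : ℕ) ∣ 2 ^ a := by
            have : 2 ^ 2 ∣ 2 ^ a := pow_dvd_pow 2 (by omega)
            simpa using this
          omega
      · refine aux2 (n := a) hq3 hbo ?_ (by omega)
        rcases hbo with ⟨t, ht⟩
        omega
end

section
/- Let G be a finite abelian group, p a prime, and P a Sylow p-subgroup of G. Let X be a subgroup of G contained in P with |X| = p such that X is a maximal cyclic subgroup of P, i.e., every cyclic subgroup of P containing X is equal to X. Then X has a complement in G: there exists a subgroup H of G with X ∩ H = 1 and XH = G. -/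
/-!
Maximality of `X` forces `X ∩ Gᵖ = 1`: if `gᵖ` were a nontrivial element of `X`, it would
generate `X`, and `⟨g⟩` would be a cyclic `p`-subgroup of `P` strictly containing `X`.
So `X` embeds into the elementary abelian quotient `G / Gᵖ`, an `𝔽_p`-vector space, where its
image has a complement; the preimage of that complement is a complement of `X` in `G`.
-/

namespace Subgroup

theorem isCompl_comap_of_isCompl_map {G Q : Type*} [Group G] [Group Q] {f : G →* Q}
    (hf : Function.Surjective f) {X : Subgroup G} (hX : X ⊓ f.ker = ⊥) {H : Subgroup Q}
    (hH : IsCompl (X.map f) H) : IsCompl X (H.comap f) := by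
  constructor
  · rw [disjoint_def]
    intro x hxX hxH
    have hfx : f x ∈ X.map f ⊓ H := ⟨mem_map_of_mem f hxX, hxH⟩
    rw [hH.inf_eq_bot, mem_bot] at hfx
    have hx : x ∈ X ⊓ f.ker := ⟨hxX, f.mem_ker.2 hfx⟩
    rwa [hX, mem_bot] at hx
  · rw [codisjoint_iff]
    calc X ⊔ H.comap f = (X.map f).comap f ⊔ H.comap f := by
          rw [comap_map_eq, sup_assoc, sup_eq_right.2 (f.ker_le_comap H)]
      _ = (X.map f ⊔ H).comap f := comap_sup_eq _ _ _ hf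
      _ = ⊤ := by rw [hH.sup_eq_top, comap_top]

theorem complementedLattice_of_pow_eq_one {G : Type*} [CommGroup G] {p : ℕ} [Fact p.Prime]
    (h : ∀ g : G, g ^ p = 1) : ComplementedLattice (Subgroup G) :=
  letI : Module (ZMod p) (Additive G) := AddCommGroup.zmodModule h
  (toAddSubgroup.trans (AddSubgroup.toZModSubmodule p)).symm.complementedLattice

theorem exists_isCompl_of_inf_range_powMonoidHom_eq_bot {G : Type*} [CommGroup G] {p : ℕ}
    [Fact p.Prime] {X : Subgroup G} (hX : X ⊓ (powMonoidHom p : G →* G).range = ⊥) :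
    ∃ H : Subgroup G, IsCompl X H := by
  set N := (powMonoidHom p : G →* G).range
  have : ComplementedLattice (Subgroup (G ⧸ N)) := complementedLattice_of_pow_eq_one (p := p) <|
    QuotientGroup.forall_mk.2 fun g => (QuotientGroup.eq_one_iff _).2 ⟨g, rfl⟩
  obtain ⟨H, hH⟩ := exists_isCompl (X.map (QuotientGroup.mk' N))
  exact ⟨_, isCompl_comap_of_isCompl_map (QuotientGroup.mk'_surjective N)
    (by rwa [QuotientGroup.ker_mk']) hH⟩

end Subgroup

open Subgroup in
theorem pow_eq_one_of_pow_mem_of_maximal_cyclic {G : Type*} [CommGroup G] [Finite G] {p : ℕ}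
    [hp : Fact p.Prime] (P : Sylow p G) {X : Subgroup G} (hX : Nat.card X = p)
    (hmax : ∀ Y : Subgroup G, Y ≤ P → IsCyclic Y → X ≤ Y → Y = X) {g : G} (hg : g ^ p ∈ X) :
    g ^ p = 1 := by
  have hXexp : ∀ x ∈ X, x ^ p = 1 := fun x hx => by
    simpa [hX] using pow_card_eq_one' (G := X) (x := ⟨x, hx⟩)
  by_contra hne
  have hgp : orderOf (g ^ p) = p := orderOf_eq_prime (hXexp _ hg) hne
  have hXeq : zpowers (g ^ p) = X :=
    eq_of_le_of_card_ge (zpowers_le.2 hg) (by rw [Nat.card_zpowers, hgp, hX])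
  have hXg : X ≤ zpowers g := hXeq ▸ zpowers_le.2 (pow_mem (mem_zpowers g) p)
  have hpg : IsPGroup p (zpowers g) := by
    obtain ⟨k, -, hk⟩ := (Nat.dvd_prime_pow hp.out).1 <| orderOf_dvd_of_pow_eq_one
      (by rw [sq, pow_mul]; exact hXexp _ hg : g ^ p ^ 2 = 1)
    exact IsPGroup.of_card (by rw [Nat.card_zpowers, hk])
  have hgX : g ∈ X := hmax _ (hpg.le_sylow_of_normal P) inferInstance hXg ▸ mem_zpowers g
  exact hne (hXexp g hgX)

theorem maximal_cyclic_complement_general {G : Type*} [CommGroup G] [Fintype G]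
    (p : ℕ) [Fact p.Prime] (P : Sylow p G) (X : Subgroup G)
    (hX : Nat.card X = p)
    (hmax : ∀ Y : Subgroup G, Y ≤ (P : Subgroup G) → IsCyclic Y → X ≤ Y → Y = X) :
    ∃ H : Subgroup G, X ⊓ H = ⊥ ∧ X ⊔ H = ⊤ := by
  have hpure : X ⊓ (powMonoidHom p : G →* G).range = ⊥ := by
    rw [eq_bot_iff]
    rintro _ ⟨hgX, g, rfl⟩
    exact pow_eq_one_of_pow_mem_of_maximal_cyclic P hX hmax hgX
  obtain ⟨H, hH⟩ := Subgroup.exists_isCompl_of_inf_range_powMonoidHom_eq_bot hpure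
  exact ⟨H, hH.inf_eq_bot, hH.sup_eq_top⟩

/-- In a finite abelian group `G`, a maximal cyclic subgroup `X` of order `p` of a Sylow
`p`-subgroup `P` has a complement in `G`. -/
theorem maximal_cyclic_complement {G : Type*} [CommGroup G] [Fintype G]
    (p : ℕ) [Fact p.Prime] (P : Sylow p G) (X : Subgroup G)
    (hXP : X ≤ (P : Subgroup G)) (hX : Nat.card X = p)
    (hmax : ∀ Y : Subgroup G, Y ≤ (P : Subgroup G) → IsCyclic Y → X ≤ Y → Y = X) :
    ∃ H : Subgroup G, X ⊓ H = ⊥ ∧ X ⊔ H = ⊤ :=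
  maximal_cyclic_complement_general p P X hX hmax
end

section
/- Let n ≥ 1, let A be the cyclic group of order 2^n with generator g, and let P = (A × A) ⋊ C₂ be the wreath product A ≀ C₂, where the nontrivial element of C₂ acts by swapping the two coordinates of A × A. Set a = ((g,1),1) and y = ((1,1),s), where s is the nontrivial element of C₂. Then the join of the cyclic subgroup generated by a·y with the Frattini subgroup of P equals the subgroup of P generated by a·y and a²; that is, ⟨ay⟩ ⊔ Φ(P) = ⟨ay, a²⟩. -/
open SemidirectProduct
open scoped commutatorElement

/-- The homomorphism from `C₂ = Multiplicative (ZMod 2)` determined by an element `τ`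
of a group satisfying `τ * τ = 1`. -/
def homC2 {H : Type*} [Group H] (τ : H) (hτ : τ * τ = 1) : Multiplicative (ZMod 2) →* H where
  toFun s := if s.toAdd = 0 then 1 else τ
  map_one' := by simp
  map_mul' x y := by
    have h2 : ∀ z : ZMod 2, z = 0 ∨ z = 1 := by decide
    have h11 : (1 : ZMod 2) + 1 = 0 := by decide
    rcases h2 x.toAdd with hx | hx <;> rcases h2 y.toAdd with hy | hy <;>
      simp [toAdd_mul, hx, hy, h11, hτ]

/-- The coordinate-swapping automorphism of `A × A`. -/
def swapAut (A : Type*) [Group A] : MulAut (A × A) := (MulEquiv.prodComm : A × A ≃* A × A)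

theorem swapAut_sq (A : Type*) [Group A] : swapAut A * swapAut A = 1 := by
  ext p <;> simp [swapAut, MulAut.mul_apply]

/-- The action of `C₂` on `A × A` swapping the two coordinates. -/
def swapAction (A : Type*) [Group A] : Multiplicative (ZMod 2) →* MulAut (A × A) :=
  homC2 (swapAut A) (swapAut_sq A)

/-- The wreath product `A ≀ C₂ = (A × A) ⋊ C₂`, where the nontrivial element of `C₂`
acts by swapping the two coordinates of `A × A`. -/
abbrev WreathC2 (A : Type*) [Group A] := (A × A) ⋊[swapAction A] Multiplicative (ZMod 2)

-- === auxiliary development ===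
section Aux

variable (n : ℕ)

abbrev Agrp := Multiplicative (ZMod (2 ^ n))
abbrev Pgrp := WreathC2 (Agrp n)

-- swap action preserves the coordinate sum
lemma swap_sum (t : Multiplicative (ZMod 2)) (p : Agrp n × Agrp n) :
    Multiplicative.toAdd ((swapAction (Agrp n) t p).1) +
      Multiplicative.toAdd ((swapAction (Agrp n) t p).2) =
    Multiplicative.toAdd p.1 + Multiplicative.toAdd p.2 := by
  by_cases h : t = 1 <;>
    simp [swapAction, homC2, swapAut, h, add_comm]

variable (hn : 1 ≤ n)

abbrev cmap : ZMod (2 ^ n) →+* ZMod 2 :=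
  ZMod.castHom (dvd_pow_self 2 (Nat.one_le_iff_ne_zero.mp hn)) (ZMod 2)

def wphi : Pgrp n →* Multiplicative (ZMod 2) where
  toFun x := Multiplicative.ofAdd
    ((ZMod.castHom (dvd_pow_self 2 (Nat.one_le_iff_ne_zero.mp hn)) (ZMod 2))
        (Multiplicative.toAdd x.left.1 + Multiplicative.toAdd x.left.2)
      + Multiplicative.toAdd x.right)
  map_one' := by simp
  map_mul' a b := by
    rw [← ofAdd_add]
    apply congrArg
    simp only [mul_left, mul_right, Prod.fst_mul, Prod.snd_mul, toAdd_mul]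
    rw [show Multiplicative.toAdd a.left.1 + Multiplicative.toAdd ((swapAction (Agrp n) a.right b.left).1)
        + (Multiplicative.toAdd a.left.2 + Multiplicative.toAdd ((swapAction (Agrp n) a.right b.left).2))
        = (Multiplicative.toAdd a.left.1 + Multiplicative.toAdd a.left.2)
          + (Multiplicative.toAdd ((swapAction (Agrp n) a.right b.left).1)
             + Multiplicative.toAdd ((swapAction (Agrp n) a.right b.left).2)) by ring,
      swap_sum]
    rw [map_add, map_add]
    ring


lemma wphi_def (x : Pgrp n) : wphi n hn x = Multiplicative.ofAdd
    (cmap n hn (Multiplicative.toAdd x.left.1 + Multiplicative.toAdd x.left.2)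
      + Multiplicative.toAdd x.right) := rfl

lemma wphi_inl (p : Agrp n × Agrp n) :
    wphi n hn (inl p) = Multiplicative.ofAdd
      (cmap n hn (Multiplicative.toAdd p.1 + Multiplicative.toAdd p.2)) := by
  rw [wphi_def]
  simp

lemma wphi_inr (t : Multiplicative (ZMod 2)) : wphi n hn (inr t) = t := by
  rw [wphi_def]
  simp

abbrev gA : Agrp n := Multiplicative.ofAdd 1
abbrev aP : Pgrp n := inl (gA n, 1)
abbrev yP : Pgrp n := inr (Multiplicative.ofAdd 1)

lemma wphi_a : wphi n hn (aP n) = Multiplicative.ofAdd (1 : ZMod 2) := by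
  have h1 : Multiplicative.toAdd (gA n) + Multiplicative.toAdd (1 : Agrp n)
      = (1 : ZMod (2 ^ n)) := by simp
  rw [wphi_inl, h1, map_one]

lemma wphi_ay : wphi n hn (aP n * yP n) = 1 := by
  rw [map_mul, wphi_a, wphi_inr]
  decide

lemma wphi_a2 : wphi n hn (aP n ^ 2) = 1 := by
  rw [map_pow, wphi_a]
  decide


lemma swapAction_one (p : Agrp n × Agrp n) :
    swapAction (Agrp n) (Multiplicative.ofAdd (1 : ZMod 2)) p = (p.2, p.1) := by
  have h : (Multiplicative.ofAdd (1 : ZMod 2)) ≠ 1 := by decide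
  simp [swapAction, homC2, swapAut, h, Prod.swap]

lemma gA_pow (k : ℕ) : gA n ^ k = Multiplicative.ofAdd (k : ZMod (2 ^ n)) := by
  rw [show gA n = Multiplicative.ofAdd (1 : ZMod (2 ^ n)) from rfl, ← ofAdd_nsmul]
  congr 1
  simp

lemma ay_sq : (aP n * yP n) ^ 2 = inl (gA n, gA n) := by
  have h1 : (Multiplicative.ofAdd (1 : ZMod 2)) * (Multiplicative.ofAdd (1 : ZMod 2)) = 1 := by
    decide
  rw [pow_two]
  ext <;> simp [mul_left, mul_right, swapAction_one, h1]

lemma a2_eq : aP n ^ 2 = inl (gA n ^ 2, 1) := by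
  rw [show aP n = inl (gA n, 1) from rfl, ← map_pow]
  congr 1
  simp [Prod.pow_mk]

lemma comm_ay : ⁅aP n, yP n⁆ = inl (gA n, (gA n)⁻¹) := by
  have hy : (yP n)⁻¹ = yP n := by
    rw [show yP n = inr (Multiplicative.ofAdd (1 : ZMod 2)) from rfl, ← map_inv,
      show (Multiplicative.ofAdd (1 : ZMod 2))⁻¹ = Multiplicative.ofAdd (1 : ZMod 2) by decide]
  have h1 : (Multiplicative.ofAdd (1 : ZMod 2)) * (Multiplicative.ofAdd (1 : ZMod 2)) = 1 := by
    decide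
  rw [commutatorElement_def, hy]
  ext <;> simp [mul_left, mul_right, swapAction_one, h1]

lemma a2_decomp : aP n ^ 2 = (aP n * yP n) ^ 2 * ⁅aP n, yP n⁆ := by
  rw [ay_sq, comm_ay, a2_eq, ← map_mul]
  congr 1
  ext <;> simp [pow_two]


lemma base_even_mem (α β : ZMod (2 ^ n)) (h : cmap n hn (α + β) = 0) :
    (inl (Multiplicative.ofAdd α, Multiplicative.ofAdd β) : Pgrp n) ∈
      Subgroup.closure {aP n * yP n, aP n ^ 2} := by
  haveI : NeZero (2 ^ n) := ⟨pow_ne_zero n two_ne_zero⟩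
  set C := Subgroup.closure {aP n * yP n, aP n ^ 2} with hC
  have h1 : aP n * yP n ∈ C := Subgroup.subset_closure (by simp)
  have h2 : aP n ^ 2 ∈ C := Subgroup.subset_closure (by simp)
  have hgg : (inl (gA n, gA n) : Pgrp n) ∈ C := ay_sq n ▸ pow_mem h1 2
  have h2t : ∀ z : ZMod 2, z + z = 0 := by decide
  have heven : cmap n hn (α - β) = 0 := by
    have hαβ : cmap n hn α + cmap n hn β = 0 := by rw [← map_add]; exact h
    rw [map_sub]
    linear_combination hαβ - h2t (cmap n hn β)
  have hdvd : (2 : ℕ) ∣ (α - β).val := by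
    refine (ZMod.natCast_eq_zero_iff ((α - β).val) 2).mp ?_
    rw [ZMod.natCast_val]
    rw [ZMod.castHom_apply] at heven
    exact heven
  obtain ⟨m, hm⟩ := hdvd
  have hval : ((α - β).val : ZMod (2 ^ n)) = α - β := by
    rw [ZMod.natCast_val, ZMod.cast_id]
  have hαβ2 : α = β + 2 * (m : ZMod (2 ^ n)) := by
    rw [hm] at hval
    push_cast at hval
    linear_combination -hval
  have e1 : (inl (gA n, gA n) : Pgrp n) ^ β.val * (aP n ^ 2) ^ m
      = inl (Multiplicative.ofAdd α, Multiplicative.ofAdd β) := by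
    rw [a2_eq, ← map_pow, ← map_pow, ← map_mul]
    congr 1
    rw [Prod.pow_mk, Prod.pow_mk, Prod.mk_mul_mk, one_pow, mul_one, ← pow_mul]
    refine Prod.ext ?_ ?_
    · show gA n ^ β.val * gA n ^ (2 * m) = Multiplicative.ofAdd α
      rw [← pow_add, gA_pow]
      congr 1
      push_cast
      rw [ZMod.natCast_val, ZMod.cast_id]
      exact hαβ2.symm
    · show gA n ^ β.val = Multiplicative.ofAdd β
      rw [gA_pow, ZMod.natCast_val, ZMod.cast_id]
  exact e1 ▸ mul_mem (pow_mem hgg _) (pow_mem h2 _)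


lemma mem_of_right_one (x : Pgrp n) (hr : x.right = 1) (hx : wphi n hn x = 1) :
    x ∈ Subgroup.closure {aP n * yP n, aP n ^ 2} := by
  have hx' : x = inl x.left := by ext <;> simp [hr]
  rw [wphi_def, hr] at hx
  simp only [toAdd_one, add_zero, ofAdd_eq_one] at hx
  rw [hx']
  have := base_even_mem n hn (Multiplicative.toAdd x.left.1) (Multiplicative.toAdd x.left.2) hx
  simpa using this

lemma ker_le_closure : (wphi n hn).ker ≤ Subgroup.closure {aP n * yP n, aP n ^ 2} := by
  intro x hx
  rw [MonoidHom.mem_ker] at hx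
  have h1 : aP n * yP n ∈ Subgroup.closure {aP n * yP n, aP n ^ 2} :=
    Subgroup.subset_closure (by simp)
  have hcases : ∀ t : Multiplicative (ZMod 2), t = 1 ∨ t = Multiplicative.ofAdd 1 := by decide
  rcases hcases x.right with hr | hr
  · exact mem_of_right_one n hn x hr hx
  · have hm := mem_of_right_one n hn (x * (aP n * yP n)⁻¹) ?_ ?_
    · have hxe : x = x * (aP n * yP n)⁻¹ * (aP n * yP n) := by group
      rw [hxe]
      exact mul_mem hm h1
    · have : ∀ t : Multiplicative (ZMod 2), t = Multiplicative.ofAdd 1 →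
        t * ((1 : Multiplicative (ZMod 2)) * Multiplicative.ofAdd 1)⁻¹ = 1 := by decide
      simpa using this x.right hr
    · rw [map_mul, map_inv, hx, wphi_ay]
      simp

lemma closure_eq_ker :
    Subgroup.closure {aP n * yP n, aP n ^ 2} = (wphi n hn).ker := by
  apply le_antisymm
  · rw [Subgroup.closure_le]
    rintro x (rfl | rfl)
    · exact MonoidHom.mem_ker.mpr (wphi_ay n hn)
    · exact MonoidHom.mem_ker.mpr (wphi_a2 n hn)
  · exact ker_le_closure n hn

lemma ker_coatom : IsCoatom (wphi n hn).ker := by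
  constructor
  · intro htop
    have hmem : aP n ∈ (wphi n hn).ker := htop ▸ Subgroup.mem_top (aP n)
    rw [MonoidHom.mem_ker, wphi_a] at hmem
    exact (by decide : (Multiplicative.ofAdd (1 : ZMod 2)) ≠ 1) hmem
  · intro K hK
    obtain ⟨x, hxK, hxker⟩ := SetLike.exists_of_lt hK
    rw [eq_top_iff]
    intro p _
    by_cases hp : wphi n hn p = 1
    · exact hK.le (MonoidHom.mem_ker.mpr hp)
    · have hmem : p * x⁻¹ ∈ (wphi n hn).ker := by
        rw [MonoidHom.mem_ker, map_mul, map_inv]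
        have hxx : wphi n hn x ≠ 1 := fun hc => hxker (MonoidHom.mem_ker.mpr hc)
        have hd : ∀ u v : Multiplicative (ZMod 2), u ≠ 1 → v ≠ 1 → u * v⁻¹ = 1 := by decide
        exact hd _ _ hp hxx
      have := mul_mem (hK.le hmem) hxK
      simpa using this

end Aux

section Coatom

lemma commutator_mem_coatom {G : Type*} [Group G] {M : Subgroup G} (hM : IsCoatom M)
    (hN : M.Normal) (g h : G) : ⁅g, h⁆ ∈ M := by
  set π := QuotientGroup.mk' M with hπ
  have hker : π.ker = M := QuotientGroup.ker_mk' M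
  have key : ∀ x : G ⧸ M, x ≠ 1 → Subgroup.zpowers x = ⊤ := by
    intro x hx
    obtain ⟨p, rfl⟩ := QuotientGroup.mk'_surjective M x
    have hlt : M < (Subgroup.zpowers (π p)).comap π := by
      refine SetLike.lt_iff_le_and_exists.mpr ⟨?_, p, ?_, ?_⟩
      · intro m hm
        have hm1 : π m = 1 := by rw [← MonoidHom.mem_ker, hker]; exact hm
        exact Subgroup.mem_comap.mpr (by rw [hm1]; exact one_mem _)
      · exact Subgroup.mem_comap.mpr (Subgroup.mem_zpowers _)
      · intro hmem
        refine hx ?_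
        rw [← hker] at hmem
        exact hmem
    have htop := hM.2 _ hlt
    rw [eq_top_iff]
    intro q _
    obtain ⟨r, rfl⟩ := QuotientGroup.mk'_surjective M q
    have hr : r ∈ (Subgroup.zpowers (π p)).comap π := by rw [htop]; trivial
    exact Subgroup.mem_comap.mp hr
  have hcomm : π g * π h = π h * π g := by
    by_cases hg : π g = 1
    · rw [hg, one_mul, mul_one]
    · have hz := key (π g) hg
      have hh : π h ∈ Subgroup.zpowers (π g) := by rw [hz]; trivial
      obtain ⟨k, hk⟩ := Subgroup.mem_zpowers_iff.mp hh
      rw [← hk]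
      exact ((Commute.refl (π g)).zpow_right k).eq
  have hone : π ⁅g, h⁆ = 1 := by
    rw [commutatorElement_def]
    simp only [map_mul, map_inv]
    rw [hcomm]
    group
  rw [← hker]
  exact hone

end Coatom

section Nilp

variable (n : ℕ)

lemma two_torsion_C2 : ∀ t : Multiplicative (ZMod 2), t * t = 1 := by decide

lemma agrp_exp (u : Agrp n) : u ^ (2 ^ n) = 1 := by
  rw [show u = Multiplicative.ofAdd (Multiplicative.toAdd u) from rfl, ← ofAdd_nsmul,
    nsmul_eq_mul]
  rw [ZMod.natCast_self]
  simp

lemma pgroup_P : IsPGroup 2 (Pgrp n) := by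
  intro x
  refine ⟨n + 1, ?_⟩
  have hr : (x ^ 2).right = 1 := by
    rw [pow_two, mul_right]
    exact two_torsion_C2 _
  have hx2 : x ^ 2 = inl ((x ^ 2).left) := by ext <;> simp [hr]
  have hbase : ((x ^ 2).left) ^ (2 ^ n) = 1 := by
    refine Prod.ext ?_ ?_ <;> simp [Prod.pow_fst, Prod.pow_snd, agrp_exp]
  have h2n : (x ^ 2) ^ (2 ^ n) = 1 := by
    rw [hx2, ← map_pow, hbase, map_one]
  calc x ^ 2 ^ (n + 1) = (x ^ 2) ^ (2 ^ n) := by rw [← pow_mul, pow_succ, mul_comm]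
    _ = 1 := h2n

instance finite_P : Finite (Pgrp n) := by
  haveI : NeZero (2 ^ n) := ⟨pow_ne_zero n two_ne_zero⟩
  exact Finite.of_equiv ((Agrp n × Agrp n) × Multiplicative (ZMod 2))
    ⟨fun p => ⟨p.1, p.2⟩, fun x => (x.left, x.right), fun p => rfl, fun x => rfl⟩

lemma nilpotent_P : Group.IsNilpotent (Pgrp n) := by
  haveI : Fact (Nat.Prime 2) := ⟨Nat.prime_two⟩
  exact (pgroup_P n).isNilpotent

lemma comm_ay_mem_frattini : ⁅aP n, yP n⁆ ∈ frattini (Pgrp n) := by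
  haveI := nilpotent_P n
  refine Subgroup.mem_iInf.mpr fun M => Subgroup.mem_iInf.mpr fun hM => ?_
  exact commutator_mem_coatom hM
    (Subgroup.NormalizerCondition.normal_of_coatom M normalizerCondition_of_isNilpotent hM) _ _

end Nilp


/-- For `P = A ≀ C₂` with `A` cyclic of order `2 ^ n` with generator `g`, and
`a = ((g,1),1)`, `y = ((1,1),s)`, one has `⟨a y⟩ ⊔ Φ(P) = ⟨a y, a²⟩`. -/
theorem zpowers_ay_sup_frattini (n : ℕ) (hn : 1 ≤ n) :
    letI A := Multiplicative (ZMod (2 ^ n))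
    letI P := WreathC2 A
    let g : A := Multiplicative.ofAdd 1
    let a : P := inl (g, 1)
    let y : P := inr (Multiplicative.ofAdd 1)
    Subgroup.zpowers (a * y) ⊔ frattini P = Subgroup.closure {a * y, a ^ 2} := by
  intro g a y
  show Subgroup.zpowers (aP n * yP n) ⊔ frattini (Pgrp n)
      = Subgroup.closure {aP n * yP n, aP n ^ 2}
  apply le_antisymm
  · rw [closure_eq_ker n hn]
    exact sup_le (Subgroup.zpowers_le.mpr (MonoidHom.mem_ker.mpr (wphi_ay n hn)))
      (frattini_le_coatom (ker_coatom n hn))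
  · rw [Subgroup.closure_le]
    rintro x (rfl | rfl)
    · exact SetLike.mem_coe.mpr (Subgroup.mem_sup_left (Subgroup.mem_zpowers _))
    · rw [SetLike.mem_coe, a2_decomp n]
      exact mul_mem (Subgroup.mem_sup_left (pow_mem (Subgroup.mem_zpowers _) 2))
        (Subgroup.mem_sup_right (comm_ay_mem_frattini n))
end

section
/- Let n ≥ 2, let A be the cyclic group of order 2^n with generator g, and let P = (A × A) ⋊ C₂ be the wreath product A ≀ C₂, where the nontrivial element of C₂ acts by swapping the two coordinates of A × A. Set a = ((g,1),1) and y = ((1,1),s), where s is the nontrivial element of C₂, and let B denote the base subgroup A × A of P. Then a maximal subgroup H of P has exactly three involutions if and only if H = B or H = ⟨ay⟩ ⊔ Φ(P). -/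
open SemidirectProduct

/-!
`P` is a 2-group, so its maximal subgroups are its subgroups of index two, and each of them
contains every square. Let `χ((u, v), c) = (u + v mod 2) + c` and `F = ker χ ∩ B`. Every
element of `F` is a product of two squares, so `F ≤ Φ(P) ≤ ker χ`; as `ay ∈ ker χ \ B`, this
gives `ker χ = ⟨ay⟩F = ⟨ay⟩Φ(P)`. A maximal subgroup `H ⊇ F` is then `B = ⟨a⟩F` if it contains
`a` but not `y`, it is `ker χ` if it contains neither, and otherwise it contains `y`.

With `t = g ^ 2 ^ (n - 1)`, the involutions of `B` are `(t, 1)`, `(1, t)` and `(t, t)`; for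
`n ≥ 2` they lie in `F`, hence in every maximal subgroup. A subgroup containing `y` thus has at
least four involutions. An involution `((u, v), s)` outside `B` has `u v = 1`, so `χ` takes the
value `s` on it: `ker χ` has the same three involutions as `B`.
-/

open Multiplicative

theorem Subgroup.isCoatom_of_index_eq_prime {G : Type*} [Group G] {H : Subgroup G} {p : ℕ}
    (hp : p.Prime) (h : H.index = p) : IsCoatom H := by
  refine ⟨fun htop => hp.one_lt.ne' (by rw [← h, htop, index_top]), fun K hK => ?_⟩
  have hrel : H.relIndex K ≠ 1 := fun h1 => hK.not_ge (relIndex_eq_one.1 h1)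
  have hmul := relIndex_mul_index hK.le
  rw [h] at hmul
  rw [← index_eq_one]
  exact ((Nat.prime_mul_iff.1 (hmul ▸ hp)).resolve_right fun h' => hrel h'.2).2

theorem IsPGroup.index_eq_of_isCoatom {G : Type*} [Group G] [Finite G] {p : ℕ} [Fact p.Prime]
    (hG : IsPGroup p G) {H : Subgroup G} (hH : IsCoatom H) : H.index = p := by
  obtain ⟨k, hk⟩ := IsPGroup.iff_card.1 hG
  obtain ⟨j, hj⟩ := IsPGroup.iff_card.1 (hG.to_subgroup H)
  have hp : p.Prime := Fact.out
  have hjk : j < k := by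
    refine lt_of_le_of_ne ?_ fun hjk => hH.1 (H.eq_top_of_card_eq (by rw [hj, hk, hjk]))
    exact (Nat.pow_dvd_pow_iff_le_right hp.one_lt).1 (hj ▸ hk ▸ H.card_subgroup_dvd_card)
  obtain ⟨K, hK, hHK⟩ := Sylow.exists_subgroup_card_pow_prime_le p
    (pow_dvd_pow p (k.sub_le 1) |>.trans hk.symm.dvd) H hj (by omega : j ≤ k - 1)
  have hKH : K = H := (hH.le_iff.1 hHK).resolve_left fun htop => by
    rw [htop, Subgroup.card_top, hk] at hK
    exact absurd (Nat.pow_right_injective hp.two_le hK) (by omega)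
  have hmul := K.card_mul_index
  rw [hK, hk, ← Nat.sub_add_cancel (by omega : 1 ≤ k), pow_succ, Nat.add_sub_cancel] at hmul
  rw [← hKH]
  exact Nat.eq_of_mul_eq_mul_left (pow_pos hp.pos _) hmul

theorem Subgroup.eq_zpowers_sup_inf_of_index_eq_two {G : Type*} [Group G] {N K : Subgroup G}
    (hN : N.index = 2) {z : G} (hzK : z ∈ K) (hzN : z ∉ N) : K = zpowers z ⊔ (K ⊓ N) := by
  refine le_antisymm (fun x hx => ?_) (sup_le (zpowers_le.2 hzK) inf_le_left)
  by_cases hxN : x ∈ N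
  · exact mem_sup_right ⟨hx, hxN⟩
  · have hxz : x * z⁻¹ ∈ N :=
      (mul_mem_iff_of_index_two hN).2 (iff_of_false hxN (by rwa [inv_mem_iff]))
    simpa using mul_mem (mem_sup_right (mem_inf.2 ⟨mul_mem hx (inv_mem hzK), hxz⟩))
      (mem_sup_left (mem_zpowers z))

theorem ZMod.add_self_eq_zero_iff {m : ℕ} [NeZero m] (u : ZMod (2 * m)) :
    u + u = 0 ↔ u = 0 ∨ u = m := by
  constructor
  · intro hu
    have hlt := ZMod.val_lt u
    have hdvd : 2 * m ∣ u.val + u.val := by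
      rw [← ZMod.natCast_eq_zero_iff, Nat.cast_add, ZMod.natCast_zmod_val, hu]
    rw [← ZMod.natCast_zmod_val u]
    rcases hdvd with ⟨c, hc⟩
    obtain rfl | rfl : c = 0 ∨ c = 1 := by
      have := NeZero.pos m
      rcases c with _ | _ | c <;> [simp; simp; nlinarith]
    · left; simp [show u.val = 0 by omega]
    · right; congr 1; omega
  · rintro (rfl | rfl)
    · simp
    · rw [← Nat.cast_add, ← two_mul, ZMod.natCast_self]

theorem ZMod.exists_eq_add_self_of_cast_eq_zero {N : ℕ} (h : 2 ∣ N) (x : ZMod N)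
    (hx : (ZMod.cast x : ZMod 2) = 0) : ∃ w, x = w + w := by
  rw [← ZMod.intCast_zmod_cast x, ZMod.cast_intCast h] at hx
  rw [← ZMod.intCast_zmod_cast x]
  obtain ⟨c, hc⟩ := (ZMod.intCast_zmod_eq_zero_iff_dvd _ 2).1 hx
  exact ⟨c, by rw [hc]; push_cast; ring⟩

theorem Multiplicative.eq_one_or_eq_ofAdd_one_zmod_two (c : Multiplicative (ZMod 2)) :
    c = 1 ∨ c = ofAdd 1 := by
  revert c; decide

instance SemidirectProduct.instFinite {N G : Type*} [Group N] [Group G] {φ : G →* MulAut N}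
    [Finite N] [Finite G] : Finite (N ⋊[φ] G) :=
  Finite.of_equiv _ equivProd.symm

namespace WreathC2

variable {A : Type*} [Group A]

theorem swapAction_ofAdd_one (b : A × A) : swapAction A (ofAdd 1) b = b.swap := rfl

theorem card : Nat.card (WreathC2 A) = Nat.card A ^ 2 * 2 := by
  rw [SemidirectProduct.card, Nat.card_prod, Nat.card_congr toAdd, Nat.card_zmod, sq]

theorem index_range_inl : (inl : A × A →* WreathC2 A).range.index = 2 := by
  rw [range_inl_eq_ker_rightHom, Subgroup.index_ker, MonoidHom.range_eq_top.2 rightHom_surjective,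
    Subgroup.card_top, Nat.card_congr toAdd, Nat.card_zmod]

theorem mem_range_inl_iff {x : WreathC2 A} :
    x ∈ (inl : A × A →* WreathC2 A).range ↔ x.right = 1 := by
  rw [range_inl_eq_ker_rightHom, MonoidHom.mem_ker, rightHom_eq_right]

theorem isCoatom_range_inl : IsCoatom (inl : A × A →* WreathC2 A).range :=
  Subgroup.isCoatom_of_index_eq_prime Nat.prime_two index_range_inl

theorem mul_self_of_right_eq_ofAdd_one {x : WreathC2 A} (hx : x.right = ofAdd 1) :
    x * x = inl (x.left * x.left.swap) := by
  refine SemidirectProduct.ext ?_ ?_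
  · rw [mul_left, hx, swapAction_ofAdd_one, left_inl]
  · rw [mul_right, hx, right_inl]; decide

theorem left_fst_mul_left_snd_eq_one {x : WreathC2 A} (hx : x.right = ofAdd 1)
    (hxx : x * x = 1) : x.left.1 * x.left.2 = 1 := by
  rw [mul_self_of_right_eq_ofAdd_one hx, ← map_one inl, inl_inj] at hxx
  exact congrArg Prod.fst hxx

def liftComm {M : Type*} [CommGroup M] (f : A →* M) (ψ : Multiplicative (ZMod 2) →* M) :
    WreathC2 A →* M :=
  lift (f.coprod f) ψ fun c => by
    ext b
    rcases c.eq_one_or_eq_ofAdd_one_zmod_two with rfl | rfl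
    · simp
    · simp [swapAction_ofAdd_one, mul_comm]

theorem liftComm_apply {M : Type*} [CommGroup M] (f : A →* M)
    (ψ : Multiplicative (ZMod 2) →* M) (x : WreathC2 A) :
    liftComm f ψ x = f x.left.1 * f x.left.2 * ψ x.right := rfl

theorem liftComm_of_right_eq_ofAdd_one {M : Type*} [CommGroup M] (f : A →* M)
    (ψ : Multiplicative (ZMod 2) →* M) {x : WreathC2 A} (hx : x.right = ofAdd 1)
    (hxx : x * x = 1) : liftComm f ψ x = ψ (ofAdd 1) := by
  rw [liftComm_apply, ← map_mul, left_fst_mul_left_snd_eq_one hx hxx, map_one, one_mul, hx]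

end WreathC2

namespace ZMod

variable {n : ℕ}

def parity (n : ℕ) : Multiplicative (ZMod (2 ^ n)) →* Multiplicative (ZMod 2) :=
  AddMonoidHom.toMultiplicative
    { toFun := ZMod.cast
      map_zero' := ZMod.cast_zero
      map_add' := fun a b => by
        rcases Nat.eq_zero_or_pos n with rfl | hn
        · have : Subsingleton (ZMod (2 ^ 0)) := inferInstanceAs (Subsingleton (ZMod 1))
          rw [Subsingleton.elim a 0, Subsingleton.elim b 0, add_zero, ZMod.cast_zero, add_zero]
        · exact ZMod.cast_add (dvd_pow_self 2 hn.ne') a b }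

theorem parity_apply (u : Multiplicative (ZMod (2 ^ n))) :
    parity n u = ofAdd (ZMod.cast (toAdd u)) := rfl

theorem parity_ofAdd_one (hn : n ≠ 0) : parity n (ofAdd 1) = ofAdd 1 := by
  rw [parity_apply, toAdd_ofAdd, ZMod.cast_one (dvd_pow_self 2 hn)]

theorem exists_eq_mul_self_of_parity_eq_one (hn : n ≠ 0) {u : Multiplicative (ZMod (2 ^ n))}
    (hu : parity n u = 1) : ∃ w, u = w * w := by
  obtain ⟨w, hw⟩ :=
    ZMod.exists_eq_add_self_of_cast_eq_zero (dvd_pow_self 2 hn) (toAdd u) (ofAdd_eq_one.1 hu)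
  exact ⟨ofAdd w, by rw [← ofAdd_add, ← hw, ofAdd_toAdd]⟩

def involution (n : ℕ) : Multiplicative (ZMod (2 ^ n)) :=
  ofAdd ((2 ^ (n - 1) : ℕ) : ZMod (2 ^ n))

theorem mul_self_eq_one_iff_eq_one_or_eq_involution (hn : n ≠ 0)
    (u : Multiplicative (ZMod (2 ^ n))) : u * u = 1 ↔ u = 1 ∨ u = involution n := by
  have key : ∀ v : ZMod (2 * 2 ^ (n - 1)),
      v + v = 0 ↔ v = 0 ∨ v = ((2 ^ (n - 1) : ℕ) : ZMod _) :=
    add_self_eq_zero_iff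
  rw [← pow_succ', Nat.sub_add_cancel (Nat.one_le_iff_ne_zero.2 hn)] at key
  rw [← ofAdd_toAdd u, involution, ← ofAdd_add, ofAdd_eq_one, ofAdd_eq_one,
    ofAdd.injective.eq_iff, key]

theorem involution_ne_one (hn : n ≠ 0) : involution n ≠ 1 := by
  rw [involution, Ne, ofAdd_eq_one, ZMod.natCast_eq_zero_iff]
  exact Nat.not_dvd_of_pos_of_lt (by positivity) (Nat.pow_lt_pow_right (by norm_num) (by omega))

theorem parity_involution (hn : 2 ≤ n) : parity n (involution n) = 1 := by
  rw [parity_apply, involution, toAdd_ofAdd, ZMod.cast_natCast (dvd_pow_self 2 (by omega)),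
    Nat.cast_pow, ZMod.natCast_self, zero_pow (by omega), ofAdd_zero]

end ZMod

namespace WreathC2

variable {n : ℕ}

theorem isPGroup (n : ℕ) : IsPGroup 2 (WreathC2 (Multiplicative (ZMod (2 ^ n)))) :=
  IsPGroup.of_card (n := 2 * n + 1) (by rw [card, Nat.card_congr toAdd, Nat.card_zmod]; ring)

def twistedParity (n : ℕ) :
    WreathC2 (Multiplicative (ZMod (2 ^ n))) →* Multiplicative (ZMod 2) :=
  liftComm (ZMod.parity n) (MonoidHom.id _)

theorem twistedParity_inl (b : Multiplicative (ZMod (2 ^ n)) × Multiplicative (ZMod (2 ^ n))) :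
    twistedParity n (inl b) = ZMod.parity n b.1 * ZMod.parity n b.2 := by
  rw [twistedParity, liftComm_apply, right_inl, map_one, mul_one, left_inl]

theorem twistedParity_inr (c : Multiplicative (ZMod 2)) : twistedParity n (inr c) = c := by
  rw [twistedParity, liftComm_apply, right_inr, left_inr, Prod.fst_one, Prod.snd_one, map_one,
    one_mul, one_mul, MonoidHom.id_apply]

theorem index_ker_twistedParity : (twistedParity n).ker.index = 2 := by
  rw [Subgroup.index_ker, MonoidHom.range_eq_top.2 fun c => ⟨inr c, twistedParity_inr c⟩,
    Subgroup.card_top, Nat.card_congr toAdd, Nat.card_zmod]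

theorem isCoatom_ker_twistedParity : IsCoatom (twistedParity n).ker :=
  Subgroup.isCoatom_of_index_eq_prime Nat.prime_two index_ker_twistedParity

theorem twistedParity_inl_ofAdd_one (hn : n ≠ 0) :
    twistedParity n (inl (ofAdd 1, 1)) = ofAdd 1 := by
  simp [twistedParity_inl, ZMod.parity_ofAdd_one hn]

theorem twistedParity_inl_ofAdd_one_mul_inr (hn : n ≠ 0) :
    twistedParity n (inl (ofAdd 1, 1) * inr (ofAdd 1)) = 1 := by
  rw [map_mul, twistedParity_inl_ofAdd_one hn, twistedParity_inr]
  decide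

theorem ker_twistedParity_inf_range_inl_le (hn : n ≠ 0)
    {H : Subgroup (WreathC2 (Multiplicative (ZMod (2 ^ n))))} (hH : H.index = 2) :
    (twistedParity n).ker ⊓ inl.range ≤ H := by
  intro x hmem
  obtain ⟨hx, ⟨u, v⟩, rfl⟩ := Subgroup.mem_inf.1 hmem
  rw [MonoidHom.mem_ker, twistedParity_inl, ← map_mul] at hx
  dsimp only at hx
  obtain ⟨w, hw⟩ := ZMod.exists_eq_mul_self_of_parity_eq_one hn hx
  -- `(u, v)` is a product of two squares: `(c, 1)²` with `c = w v⁻¹`, and `(v, v) = ((v, 1), s)²`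
  have hdiag : (inl (v, 1) * inr (ofAdd 1)) * (inl (v, 1) * inr (ofAdd 1)) =
      (inl (v, v) : WreathC2 (Multiplicative (ZMod (2 ^ n)))) := by
    rw [mul_self_of_right_eq_ofAdd_one (by simp)]
    simp
  have hsplit : (inl (u, v) : WreathC2 _) = inl (w * v⁻¹, 1) * inl (w * v⁻¹, 1) *
      ((inl (v, 1) * inr (ofAdd 1)) * (inl (v, 1) * inr (ofAdd 1))) := by
    rw [hdiag, ← map_mul, ← map_mul, inl_inj]
    refine Prod.ext ?_ (by simp)
    simp only [Prod.fst_mul]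
    rw [mul_mul_mul_comm, mul_assoc, inv_mul_cancel_right, ← hw, mul_inv_cancel_right]
  rw [hsplit]
  exact mul_mem (Subgroup.mul_self_mem_of_index_two hH _)
    (Subgroup.mul_self_mem_of_index_two hH _)

theorem ker_twistedParity_inf_range_inl_le_frattini (hn : n ≠ 0) :
    (twistedParity n).ker ⊓ inl.range ≤ frattini _ :=
  le_iInf₂ fun _ hH =>
    ker_twistedParity_inf_range_inl_le hn ((isPGroup n).index_eq_of_isCoatom hH)

theorem ker_twistedParity_eq (hn : n ≠ 0) : (twistedParity n).ker =
    Subgroup.zpowers (inl (ofAdd 1, 1) * inr (ofAdd 1)) ⊔ frattini _ := by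
  refine le_antisymm ?_ (sup_le (Subgroup.zpowers_le.2 (twistedParity_inl_ofAdd_one_mul_inr hn))
    (frattini_le_coatom isCoatom_ker_twistedParity))
  calc (twistedParity n).ker
      = Subgroup.zpowers (inl (ofAdd 1, 1) * inr (ofAdd 1)) ⊔
          ((twistedParity n).ker ⊓ inl.range) :=
        Subgroup.eq_zpowers_sup_inf_of_index_eq_two index_range_inl
          (twistedParity_inl_ofAdd_one_mul_inr hn) (by rw [mem_range_inl_iff]; simp)
    _ ≤ _ := sup_le_sup_left (ker_twistedParity_inf_range_inl_le_frattini hn) _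

theorem eq_range_inl_or_inr_mem_or_eq_ker_of_isCoatom (hn : n ≠ 0)
    {H : Subgroup (WreathC2 (Multiplicative (ZMod (2 ^ n))))} (hH : IsCoatom H) :
    H = inl.range ∨ inr (ofAdd 1) ∈ H ∨ H = (twistedParity n).ker := by
  have hidx : H.index = 2 := (isPGroup n).index_eq_of_isCoatom hH
  have hF := ker_twistedParity_inf_range_inl_le hn hidx
  by_cases hy : inr (ofAdd 1) ∈ H
  · exact Or.inr (Or.inl hy)
  by_cases ha : inl (ofAdd 1, 1) ∈ H
  · refine Or.inl ((isCoatom_range_inl.le_iff.1 ?_).resolve_left hH.1)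
    refine (Subgroup.eq_zpowers_sup_inf_of_index_eq_two index_ker_twistedParity
      (MonoidHom.mem_range.2 ⟨_, rfl⟩)
      (by rw [MonoidHom.mem_ker, twistedParity_inl_ofAdd_one hn]; decide)).le.trans ?_
    exact sup_le (Subgroup.zpowers_le.2 ha) ((inf_comm _ _).le.trans hF)
  · have hay : inl (ofAdd 1, 1) * inr (ofAdd 1) ∈ H :=
      (Subgroup.mul_mem_iff_of_index_two hidx).2 (iff_of_false ha hy)
    refine Or.inr (Or.inr ((isCoatom_ker_twistedParity.le_iff.1 ?_).resolve_left hH.1))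
    refine (Subgroup.eq_zpowers_sup_inf_of_index_eq_two index_range_inl
      (twistedParity_inl_ofAdd_one_mul_inr hn) (by rw [mem_range_inl_iff]; simp)).le.trans ?_
    exact sup_le (Subgroup.zpowers_le.2 hay) hF

theorem setOf_mem_range_inl_orderOf_eq_two (hn : n ≠ 0) :
    {x : WreathC2 (Multiplicative (ZMod (2 ^ n))) | x ∈ inl.range ∧ orderOf x = 2} =
      {inl (ZMod.involution n, 1), inl (1, ZMod.involution n),
        inl (ZMod.involution n, ZMod.involution n)} := by
  have hsq := ZMod.mul_self_eq_one_iff_eq_one_or_eq_involution hn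
  have hne := ZMod.involution_ne_one hn
  ext x
  simp only [Set.mem_ofPred_eq, MonoidHom.mem_range, Set.mem_insert_iff, Set.mem_singleton_iff]
  constructor
  · rintro ⟨⟨⟨u, v⟩, rfl⟩, hx⟩
    rw [orderOf_injective inl inl_injective, orderOf_eq_prime_iff, pow_two, Prod.mk_mul_mk, Ne,
      Prod.mk_eq_one, Prod.mk_eq_one, hsq, hsq] at hx
    obtain ⟨⟨rfl | rfl, rfl | rfl⟩, hne⟩ := hx <;> simp_all
  · rintro (rfl | rfl | rfl) <;> refine ⟨⟨_, rfl⟩, ?_⟩ <;>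
      rw [orderOf_injective inl inl_injective, orderOf_eq_prime_iff, pow_two, Prod.mk_mul_mk, Ne,
        Prod.mk_eq_one, Prod.mk_eq_one] <;> simp [hne, (hsq _).2]

theorem ncard_setOf_mem_range_inl_orderOf_eq_two (hn : n ≠ 0) :
    {x : WreathC2 (Multiplicative (ZMod (2 ^ n))) | x ∈ inl.range ∧ orderOf x = 2}.ncard =
      3 := by
  have hne := ZMod.involution_ne_one hn
  rw [setOf_mem_range_inl_orderOf_eq_two hn, Set.ncard_eq_three]
  exact ⟨_, _, _, by simp [hne], by simpa using hne.symm, by simpa using hne.symm, rfl⟩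

theorem setOf_mem_range_inl_orderOf_eq_two_subset_ker (hn : 2 ≤ n) :
    {x : WreathC2 (Multiplicative (ZMod (2 ^ n))) | x ∈ inl.range ∧ orderOf x = 2} ⊆
      (twistedParity n).ker := by
  rw [setOf_mem_range_inl_orderOf_eq_two (by omega)]
  rintro _ (rfl | rfl | rfl) <;> simp [twistedParity_inl, ZMod.parity_involution hn]

theorem setOf_mem_ker_twistedParity_orderOf_eq_two (hn : 2 ≤ n) :
    {x | x ∈ (twistedParity n).ker ∧ orderOf x = 2} = {x | x ∈ inl.range ∧ orderOf x = 2} := by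
  ext x
  refine ⟨fun ⟨hk, ho⟩ => ⟨?_, ho⟩,
    fun hx => ⟨setOf_mem_range_inl_orderOf_eq_two_subset_ker hn hx, hx.2⟩⟩
  rw [mem_range_inl_iff]
  by_contra hr
  have hxx : x * x = 1 := by rw [← sq]; exact (orderOf_eq_prime_iff.1 ho).1
  rw [MonoidHom.mem_ker, twistedParity, liftComm_of_right_eq_ofAdd_one _ _
    ((x.right.eq_one_or_eq_ofAdd_one_zmod_two).resolve_left hr) hxx] at hk
  exact absurd hk (by decide)

theorem four_le_ncard_setOf_orderOf_eq_two (hn : 2 ≤ n)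
    {H : Subgroup (WreathC2 (Multiplicative (ZMod (2 ^ n))))} (hH : H.index = 2)
    (hy : inr (ofAdd 1) ∈ H) : 4 ≤ {x | x ∈ H ∧ orderOf x = 2}.ncard := by
  have hsub : insert (inr (ofAdd 1)) {x | x ∈ inl.range ∧ orderOf x = 2} ⊆
      {x | x ∈ H ∧ orderOf x = 2} := by
    rintro x (rfl | hx)
    · refine ⟨hy, ?_⟩
      rw [orderOf_injective inr inr_injective, orderOf_eq_prime_iff]
      decide
    · exact ⟨ker_twistedParity_inf_range_inl_le (by omega) hH
        ⟨setOf_mem_range_inl_orderOf_eq_two_subset_ker hn hx, hx.1⟩, hx.2⟩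
  calc 4 = (insert (inr (ofAdd 1)) {x | x ∈ inl.range ∧ orderOf x = 2}).ncard := by
        rw [Set.ncard_insert_of_notMem (fun h => absurd (mem_range_inl_iff.1 h.1) (by simp))
          (Set.toFinite _), ncard_setOf_mem_range_inl_orderOf_eq_two (by omega)]
    _ ≤ _ := Set.ncard_le_ncard hsub (Set.toFinite _)

end WreathC2

/-- For `P = A ≀ C₂` with `A` cyclic of order `2 ^ n` (`n ≥ 2`) with generator `g`,
`a = ((g,1),1)` and `y = ((1,1),s)`, a maximal subgroup `H` of `P` has exactly three
involutions if and only if `H` is the base subgroup `A × A` or `H = ⟨a y⟩ ⊔ Φ(P)`. -/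
theorem maximal_subgroup_three_involutions (n : ℕ) (hn : 2 ≤ n)
    (H : Subgroup (WreathC2 (Multiplicative (ZMod (2 ^ n))))) (hH : IsCoatom H) :
    letI A := Multiplicative (ZMod (2 ^ n))
    letI P := WreathC2 A
    let g : A := Multiplicative.ofAdd 1
    let a : P := inl (g, 1)
    let y : P := inr (Multiplicative.ofAdd 1)
    {x : P | x ∈ H ∧ orderOf x = 2}.ncard = 3 ↔
      H = (inl : (A × A) →* P).range ∨ H = Subgroup.zpowers (a * y) ⊔ frattini P := by
  intro g a y
  have hn0 : n ≠ 0 := by omega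
  have hK : Subgroup.zpowers (a * y) ⊔ frattini _ = (WreathC2.twistedParity n).ker :=
    (WreathC2.ker_twistedParity_eq hn0).symm
  rw [hK]
  rcases WreathC2.eq_range_inl_or_inr_mem_or_eq_ker_of_isCoatom hn0 hH with rfl | hy | rfl
  · exact iff_of_true (WreathC2.ncard_setOf_mem_range_inl_orderOf_eq_two hn0) (Or.inl rfl)
  · have h4 := WreathC2.four_le_ncard_setOf_orderOf_eq_two hn
      ((WreathC2.isPGroup n).index_eq_of_isCoatom hH) hy
    refine iff_of_false (by omega) ?_
    rintro (rfl | rfl)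
    · exact absurd hy (by rw [WreathC2.mem_range_inl_iff]; simp)
    · exact absurd hy (by rw [MonoidHom.mem_ker, WreathC2.twistedParity_inr]; decide)
  · rw [WreathC2.setOf_mem_ker_twistedParity_orderOf_eq_two hn]
    exact iff_of_true (WreathC2.ncard_setOf_mem_range_inl_orderOf_eq_two hn0) (Or.inr rfl)
end

section
/- Let p be a prime and P a finite nonabelian special p-group, i.e., the commutator subgroup, the Frattini subgroup and the center of P all coincide: [P,P] = Φ(P) = Z(P). Let a group A act on P by automorphisms such that the induced action of A on the nonidentity elements of P/Z(P) is transitive and the action of A on the nonidentity elements of Z(P) is transitive. Then all elements of P ∖ Z(P) have the same order. -/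
/-!
The action preserves orders and permutes the nonidentity central elements transitively. A
nonidentity central element `z` has a central power of order `p`, to which it is moved by the
action, so `z ^ p = 1` for every central `z`. Given noncentral `x` and `y`, transitivity on
`P / Z(P)` gives `α` with `y = (α • x) * z` for a central `z`, so `y ^ p = (α • x) ^ p`. In a
`p`-group a nonidentity element has order `p` times the order of its `p`-th power, hence
`orderOf y = orderOf (α • x) = orderOf x`.
-/

theorem MulDistribMulAction.orderOf_smul {A M : Type*} [Group A] [Monoid M]
    [MulDistribMulAction A M] (a : A) (x : M) : orderOf (a • x) = orderOf x :=
  (MulDistribMulAction.toMulEquiv M a).orderOf_eq x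

theorem MulDistribMulAction.smul_eq_one_iff {A M : Type*} [Group A] [Monoid M]
    [MulDistribMulAction A M] {a : A} {x : M} : a • x = 1 ↔ x = 1 := by
  rw [← MulDistribMulAction.toMulEquiv_apply, MulEquiv.map_eq_one_iff]

namespace IsPGroup

variable {p : ℕ} [hp : Fact p.Prime] {G : Type*} [Group G]

theorem prime_dvd_orderOf (hG : IsPGroup p G) {g : G} (hg : g ≠ 1) : p ∣ orderOf g := by
  obtain ⟨k, hk⟩ := iff_orderOf.mp hG g
  have hk0 : k ≠ 0 := by
    rintro rfl
    exact hg (orderOf_eq_one_iff.mp (by rw [hk, pow_zero]))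
  exact hk ▸ dvd_pow_self p hk0

theorem prime_mul_orderOf_pow (hG : IsPGroup p G) {g : G} (hg : g ≠ 1) :
    p * orderOf (g ^ p) = orderOf g := by
  have hdvd := hG.prime_dvd_orderOf hg
  rw [orderOf_pow_of_dvd hp.out.ne_zero hdvd, Nat.mul_div_cancel' hdvd]

theorem orderOf_eq_of_pow_eq (hG : IsPGroup p G) {g h : G} (hg : g ≠ 1) (hh : h ≠ 1)
    (hgh : g ^ p = h ^ p) : orderOf g = orderOf h := by
  rw [← hG.prime_mul_orderOf_pow hg, ← hG.prime_mul_orderOf_pow hh, hgh]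

theorem pow_eq_one_of_smul_transitive (hG : IsPGroup p G) {A : Type*} [Group A]
    [MulDistribMulAction A G] {H : Subgroup G}
    (htrans : ∀ x y : G, x ∈ H → y ∈ H → x ≠ 1 → y ≠ 1 → ∃ a : A, a • x = y)
    {z : G} (hz : z ∈ H) : z ^ p = 1 := by
  by_cases hz1 : z = 1
  · rw [hz1, one_pow]
  obtain ⟨k, hk⟩ := iff_orderOf.mp hG z
  have hw : orderOf (z ^ (orderOf z / p)) = p :=
    orderOf_pow_orderOf_div (hk ▸ pow_ne_zero k hp.out.ne_zero) (hG.prime_dvd_orderOf hz1)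
  have hw1 : z ^ (orderOf z / p) ≠ 1 := fun h ↦ hp.out.ne_one (by rw [← hw, h, orderOf_one])
  obtain ⟨a, ha⟩ := htrans _ _ hz (pow_mem hz _) hz1 hw1
  have horder : orderOf z = p := by rw [← MulDistribMulAction.orderOf_smul a z, ha, hw]
  exact horder ▸ pow_orderOf_eq_one z

end IsPGroup

theorem special_pGroup_same_order_general {p : ℕ} (hp : p.Prime) {P : Type*} [Group P]
    (hP : IsPGroup p P)
    {A : Type*} [Group A] [MulDistribMulAction A P]
    (htransQ : ∀ x y : P, x ∉ Subgroup.center P → y ∉ Subgroup.center P →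
      ∃ α : A, (α • x)⁻¹ * y ∈ Subgroup.center P)
    (htransZ : ∀ x y : P, x ∈ Subgroup.center P → y ∈ Subgroup.center P → x ≠ 1 → y ≠ 1 →
      ∃ α : A, α • x = y) :
    ∀ x y : P, x ∉ Subgroup.center P → y ∉ Subgroup.center P → orderOf x = orderOf y := by
  have := Fact.mk hp
  intro x y hx hy
  have ne_one_of_notMem_center {g : P} (hg : g ∉ Subgroup.center P) : g ≠ 1 :=
    fun h ↦ hg (h ▸ one_mem _)
  obtain ⟨α, hz⟩ := htransQ x y hx hy
  have hzp : ((α • x)⁻¹ * y) ^ p = 1 := hP.pow_eq_one_of_smul_transitive htransZ hz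
  have hyp : (α • x) ^ p = y ^ p := by
    rw [← mul_inv_cancel_left (α • x) y,
      Commute.mul_pow (Subgroup.mem_center_iff.mp hz (α • x)), hzp, mul_one]
  have hαx : α • x ≠ 1 :=
    MulDistribMulAction.smul_eq_one_iff.not.mpr (ne_one_of_notMem_center hx)
  rw [← MulDistribMulAction.orderOf_smul α x]
  exact hP.orderOf_eq_of_pow_eq hαx (ne_one_of_notMem_center hy) hyp

/-- Let `P` be a finite nonabelian special `p`-group and let a group `A` act on `P` by
automorphisms, transitively on the nonidentity elements of `P / Z(P)` and transitively on
the nonidentity elements of `Z(P)`.  Then all elements of `P ∖ Z(P)` have the same order. -/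
theorem special_pGroup_same_order {p : ℕ} (hp : p.Prime) {P : Type*} [Group P] [Finite P]
    (hP : IsPGroup p P) (hna : ∃ x y : P, x * y ≠ y * x)
    (hcomm : commutator P = Subgroup.center P) (hfrat : frattini P = Subgroup.center P)
    {A : Type*} [Group A] [MulDistribMulAction A P]
    (htransQ : ∀ x y : P, x ∉ Subgroup.center P → y ∉ Subgroup.center P →
      ∃ α : A, (α • x)⁻¹ * y ∈ Subgroup.center P)
    (htransZ : ∀ x y : P, x ∈ Subgroup.center P → y ∈ Subgroup.center P → x ≠ 1 → y ≠ 1 →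
      ∃ α : A, α • x = y) :
    ∀ x y : P, x ∉ Subgroup.center P → y ∉ Subgroup.center P → orderOf x = orderOf y :=
  special_pGroup_same_order_general hp hP htransQ htransZ
end

section
/- Let P be a finite nonabelian special 2-group, i.e., [P,P] = Φ(P) = Z(P). Let a group A act on P by automorphisms such that the induced action of A on the nonidentity elements of P/Z(P) is transitive and the action of A on the nonidentity elements of Z(P) is transitive. Then Ω₁(P) = Z(P); that is, the subgroup of P generated by the elements x with x² = 1 is exactly the center of P. -/
open Subgroup
open scoped commutatorElement

/-- In a finite 2-group, every square lies in the Frattini subgroup. -/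
lemma sq_mem_frattini_aux {P : Type*} [Group P] [Finite P] (hP : IsPGroup 2 P) (x : P) :
    x ^ 2 ∈ frattini P := by
  have : Fact (Nat.Prime 2) := ⟨Nat.prime_two⟩
  have hnil : Group.IsNilpotent P := hP.isNilpotent
  have hnc : NormalizerCondition P := normalizerCondition_of_isNilpotent
  rw [frattini, Order.radical]
  simp only [Subgroup.mem_iInf]
  intro M hM
  have hMn : M.Normal := NormalizerCondition.normal_of_coatom M hnc hM
  set π : P →* P ⧸ M := QuotientGroup.mk' M
  have hQ : IsPGroup 2 (P ⧸ M) := hP.to_quotient M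
  set N : Subgroup P := (Subgroup.zpowers ((π x) ^ 2)).comap π with hN
  have hMN : M ≤ N := by
    intro m hm
    have : π m = 1 := (QuotientGroup.eq_one_iff m).2 hm
    simp only [hN, Subgroup.mem_comap, this]
    exact Subgroup.one_mem _
  by_cases hx : x ∈ N
  · -- then π x is a zpower of (π x)^2, forcing π x = 1
    obtain ⟨m, hm⟩ := (Subgroup.mem_comap.1 hx)
    have h1 : (π x) ^ (2 * m - 1) = 1 := by
      have h : (π x) ^ ((2 : ℤ) * m) = π x := by
        rw [show ((2:ℤ)) = ((2:ℕ):ℤ) from rfl, zpow_mul, zpow_natCast]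
        exact hm
      rw [zpow_sub, h, zpow_one]
      simp
    have hdvd : (orderOf (π x) : ℤ) ∣ (2 * m - 1) := orderOf_dvd_iff_zpow_eq_one.2 h1
    obtain ⟨k, hk⟩ := hQ (π x)
    have hdvd2 : orderOf (π x) ∣ 2 ^ k := orderOf_dvd_of_pow_eq_one hk
    have hodd : Odd (2 * m - 1) := ⟨m - 1, by ring⟩
    have hodd' : ¬ (2 : ℤ) ∣ (2 * m - 1) := by
      rw [Int.two_dvd_ne_zero]
      obtain ⟨c, hc⟩ := hodd
      rw [hc]
      omega
    have h2 : ¬ (2 ∣ orderOf (π x)) := by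
      intro h2
      exact hodd' (dvd_trans (by exact_mod_cast h2) hdvd)
    have : orderOf (π x) = 1 := by
      rcases (Nat.dvd_prime_pow Nat.prime_two).1 hdvd2 with ⟨j, hj, hje⟩
      cases j with
      | zero => simpa using hje
      | succ n => exact absurd (hje ▸ dvd_pow_self 2 (Nat.succ_ne_zero n)) h2
    have hx1 : π x = 1 := orderOf_eq_one_iff.1 this
    have : x ∈ M := (QuotientGroup.eq_one_iff x).1 hx1
    exact M.pow_mem this 2
  · -- N is proper and contains M, so N = M by coatom property, whence x^2 ∈ M
    have hNtop : N ≠ ⊤ := fun h => hx (h ▸ Subgroup.mem_top x)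
    have hNe : N = M := by
      rcases eq_or_lt_of_le hMN with h | h
      · exact h.symm
      · exact absurd (hM.2 N h) hNtop
    have : x ^ 2 ∈ N := by
      simp only [hN, Subgroup.mem_comap, map_pow]
      exact Subgroup.mem_zpowers _
    rwa [hNe] at this

/-- Let `P` be a finite nonabelian special `2`-group and let a group `A` act on `P` by
automorphisms, transitively on the nonidentity elements of `P / Z(P)` and transitively on
the nonidentity elements of `Z(P)`.  Then `Ω₁(P) = Z(P)`: the subgroup generated by the
elements of square `1` is the center. -/
theorem special_two_group_omega_eq_center {P : Type*} [Group P] [Finite P]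
    (hP : IsPGroup 2 P) (hna : ∃ x y : P, x * y ≠ y * x)
    (hcomm : commutator P = Subgroup.center P) (hfrat : frattini P = Subgroup.center P)
    {A : Type*} [Group A] [MulDistribMulAction A P]
    (htransQ : ∀ x y : P, x ∉ Subgroup.center P → y ∉ Subgroup.center P →
      ∃ α : A, (α • x)⁻¹ * y ∈ Subgroup.center P)
    (htransZ : ∀ x y : P, x ∈ Subgroup.center P → y ∈ Subgroup.center P → x ≠ 1 → y ≠ 1 →
      ∃ α : A, α • x = y) :
    Subgroup.closure {x : P | x ^ 2 = 1} = Subgroup.center P := by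
  have hsq : ∀ x : P, x ^ 2 ∈ Subgroup.center P := fun x =>
    hfrat ▸ sq_mem_frattini_aux hP x
  -- every central element has square 1
  have hZ2 : ∀ z ∈ Subgroup.center P, z ^ 2 = 1 := by
    -- the set of central elements of square 1 forms a subgroup containing all commutators
    let K : Subgroup P :=
      { carrier := {z : P | z ∈ Subgroup.center P ∧ z ^ 2 = 1}
        one_mem' := ⟨Subgroup.one_mem _, one_pow 2⟩
        mul_mem' := by
          rintro a b ⟨ha, ha2⟩ ⟨hb, hb2⟩
          refine ⟨Subgroup.mul_mem _ ha hb, ?_⟩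
          have hab : a * b = b * a := (Subgroup.mem_center_iff.1 ha b).symm
          calc (a * b) ^ 2 = a * (b * (a * b)) := by rw [pow_two, mul_assoc]
          _ = a * (a * (b * b)) := by rw [← mul_assoc b a, ← hab, mul_assoc]
          _ = a ^ 2 * b ^ 2 := by rw [pow_two, pow_two, mul_assoc]
          _ = 1 := by rw [ha2, hb2, one_mul]
        inv_mem' := by
          rintro a ⟨ha, ha2⟩
          exact ⟨Subgroup.inv_mem _ ha, by rw [inv_pow, ha2, inv_one]⟩ }
    have hcommK : commutator P ≤ K := by
      rw [show _root_.commutator P = ⁅(⊤ : Subgroup P), ⊤⁆ from rfl,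
        Subgroup.commutator_le]
      intro a _ b _
      have hmemZ : ⁅a, b⁆ ∈ Subgroup.center P := by
        rw [← hcomm]
        exact Subgroup.commutator_mem_commutator (Subgroup.mem_top a) (Subgroup.mem_top b)
      refine ⟨hmemZ, ?_⟩
      -- ⁅a,b⁆ ^ 2 = ⁅a^2, b⁆ = 1 since a^2 is central
      have hc : ∀ g : P, ⁅a, b⁆ * g = g * ⁅a, b⁆ := fun g =>
        ((Subgroup.mem_center_iff.1 hmemZ g)).symm
      have key : ⁅a, b⁆ ^ 2 = ⁅a ^ 2, b⁆ := by
        have h1 : a * b * a⁻¹ = ⁅a, b⁆ * b := by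
          rw [commutatorElement_def]; group
        have : ⁅a ^ 2, b⁆ = ⁅a, b⁆ ^ 2 := by
          calc ⁅a ^ 2, b⁆ = a * (a * b * a⁻¹) * a⁻¹ * b⁻¹ := by
                rw [commutatorElement_def, pow_two]; group
            _ = a * ⁅a, b⁆ * (b * a⁻¹ * b⁻¹) := by rw [h1]; group
            _ = ⁅a, b⁆ * (a * b * a⁻¹) * b⁻¹ := by rw [← hc a]; group
            _ = ⁅a, b⁆ * (⁅a, b⁆ * b) * b⁻¹ := by rw [h1]
            _ = ⁅a, b⁆ ^ 2 := by rw [pow_two]; group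
        exact this.symm
      rw [key]
      exact commutatorElement_eq_one_iff_mul_comm.2
        (Subgroup.mem_center_iff.1 (hsq a) b).symm
    intro z hz
    have : z ∈ K := hcommK (hcomm ▸ hz)
    exact this.2
  -- every element of square 1 is central
  have hsub : {x : P | x ^ 2 = 1} ⊆ (Subgroup.center P : Set P) := by
    intro x hx
    by_contra hxc
    -- then every element of P has square 1, so P is abelian
    have hall : ∀ y : P, y ^ 2 = 1 := by
      intro y
      by_cases hy : y ∈ Subgroup.center P
      · exact hZ2 y hy
      · obtain ⟨α, hα⟩ := htransQ x y hxc hy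
        set z := (α • x)⁻¹ * y with hzdef
        have hy' : y = (α • x) * z := by rw [hzdef]; group
        have ha2 : (α • x) ^ 2 = 1 := by
          rw [← smul_pow' α x 2, show x ^ 2 = 1 from hx, smul_one]
        have hz2 : z ^ 2 = 1 := hZ2 z hα
        have hcz : (α • x) * z = z * (α • x) := Subgroup.mem_center_iff.1 hα (α • x)
        rw [hy', pow_two]
        calc (α • x) * z * ((α • x) * z) = (α • x) * (z * (α • x)) * z := by group
          _ = (α • x) * ((α • x) * z) * z := by rw [← hcz]
          _ = ((α • x) * (α • x)) * (z * z) := by group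
          _ = 1 := by rw [← pow_two, ← pow_two, ha2, hz2, one_mul]
    obtain ⟨a, b, hab⟩ := hna
    apply hab
    have inv_eq : ∀ g : P, g⁻¹ = g := fun g => by
      have := hall g; rw [pow_two] at this
      exact inv_eq_of_mul_eq_one_left this
    have h1 : (a * b)⁻¹ = a * b := inv_eq _
    rw [mul_inv_rev, inv_eq, inv_eq] at h1
    exact h1.symm
  refine le_antisymm ((Subgroup.closure_le _).2 hsub) ?_
  intro z hz
  exact Subgroup.subset_closure (hZ2 z hz)
end

section
/- Let p be an odd prime and P a finite nonabelian special p-group of order p³, i.e., [P,P] = Φ(P) = Z(P) and |P| = p³. Let a group A act on P by automorphisms such that the induced action of A on the nonidentity elements of P/Z(P) is transitive and the action of A on the nonidentity elements of Z(P) is transitive. Then P has exponent p, i.e., x^p = 1 for every x ∈ P (hence P is the extraspecial group of order p³ and exponent p). -/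
private lemma aux_comm_pow {G : Type*} [Group G] (x y c : G)
    (hyx : y * x = x * y * c) (hc : ∀ g : G, g * c = c * g) :
    ∀ n : ℕ, y ^ n * x = x * y ^ n * c ^ n := by
  intro n
  induction n with
  | zero => simp
  | succ n ih =>
    have h1 : y ^ (n + 1) * x = y * (y ^ n * x) := by rw [pow_succ']; group
    rw [h1, ih]
    calc y * (x * y ^ n * c ^ n) = (y * x) * (y ^ n * c ^ n) := by group
      _ = (x * y * c) * (y ^ n * c ^ n) := by rw [hyx]
      _ = x * y * (c * y ^ n) * c ^ n := by group
      _ = x * y * (y ^ n * c) * c ^ n := by rw [← hc (y ^ n)]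
      _ = x * (y * y ^ n) * (c * c ^ n) := by group
      _ = x * y ^ (n + 1) * c ^ (n + 1) := by rw [pow_succ', pow_succ']

private lemma aux_pow_identity {G : Type*} [Group G] (x y c : G)
    (hyx : y * x = x * y * c) (hc : ∀ g : G, g * c = c * g) :
    ∀ n : ℕ, (x * y) ^ n = x ^ n * y ^ n * c ^ n.choose 2 := by
  have hcpow : ∀ (g : G) (m : ℕ), g * c ^ m = c ^ m * g := fun g m => by
    induction m with
    | zero => simp
    | succ m ih => rw [pow_succ, ← mul_assoc, ih, mul_assoc, hc, ← mul_assoc]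
  intro n
  induction n with
  | zero => simp
  | succ n ih =>
    have h2 : (n + 1).choose 2 = n + n.choose 2 := by
      rw [Nat.choose_succ_succ n 1, Nat.choose_one_right]
    have hx : c ^ n.choose 2 * x = x * c ^ n.choose 2 := (hcpow x _).symm
    have hy : c ^ n.choose 2 * y = y * c ^ n.choose 2 := (hcpow y _).symm
    rw [pow_succ, ih, h2]
    calc x ^ n * y ^ n * c ^ n.choose 2 * (x * y)
        = x ^ n * (y ^ n * (c ^ n.choose 2 * x)) * y := by group
      _ = x ^ n * (y ^ n * (x * c ^ n.choose 2)) * y := by rw [hx]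
      _ = x ^ n * (y ^ n * x) * (c ^ n.choose 2 * y) := by group
      _ = x ^ n * (x * y ^ n * c ^ n) * (y * c ^ n.choose 2) := by
          rw [aux_comm_pow x y c hyx hc n, hy]
      _ = x ^ n * x * y ^ n * (c ^ n * y) * c ^ n.choose 2 := by group
      _ = x ^ n * x * y ^ n * (y * c ^ n) * c ^ n.choose 2 := by rw [← hcpow y n]
      _ = (x ^ n * x) * (y ^ n * y) * (c ^ n * c ^ n.choose 2) := by group
      _ = x ^ (n + 1) * y ^ (n + 1) * c ^ (n + n.choose 2) := by
          rw [pow_succ, pow_succ, pow_add]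

/-- Let `p` be an odd prime and `P` a nonabelian special `p`-group of order `p ^ 3`.
Let a group `A` act on `P` by automorphisms, transitively on the nonidentity elements of
`P / Z(P)` and transitively on the nonidentity elements of `Z(P)`.  Then `P` has
exponent `p`. -/
theorem special_p_cubed_exponent_p {p : ℕ} (hp : p.Prime) (hodd : Odd p)
    {P : Type*} [Group P] [Finite P] (hcard : Nat.card P = p ^ 3)
    (hna : ∃ x y : P, x * y ≠ y * x)
    (hcomm : commutator P = Subgroup.center P) (hfrat : frattini P = Subgroup.center P)
    {A : Type*} [Group A] [MulDistribMulAction A P]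
    (htransQ : ∀ x y : P, x ∉ Subgroup.center P → y ∉ Subgroup.center P →
      ∃ α : A, (α • x)⁻¹ * y ∈ Subgroup.center P)
    (htransZ : ∀ x y : P, x ∈ Subgroup.center P → y ∈ Subgroup.center P → x ≠ 1 → y ≠ 1 →
      ∃ α : A, α • x = y) :
    ∀ x : P, x ^ p = 1 := by
  haveI : Fact p.Prime := ⟨hp⟩
  obtain ⟨a, b, hab⟩ := hna
  -- P is not commutative, so quotient by center is not cyclic
  have hnotcyc : ¬ IsCyclic (P ⧸ Subgroup.center P) := by
    intro hcyc
    exact hab (commutative_of_cyclic_center_quotient (QuotientGroup.mk' (Subgroup.center P))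
      (by rw [QuotientGroup.ker_mk']) a b)
  haveI : Nontrivial P := by
    have : 1 < Nat.card P := by
      rw [hcard]; exact Nat.one_lt_pow (by norm_num) hp.one_lt
    exact Finite.one_lt_card_iff_nontrivial.mp this
  have hP : IsPGroup p P := IsPGroup.of_card hcard
  haveI := hP.center_nontrivial
  -- the center has cardinality p
  have hdvd : Nat.card (Subgroup.center P) ∣ p ^ 3 := by
    rw [← hcard]; exact Subgroup.card_subgroup_dvd_card _
  obtain ⟨k, hk3, hkeq⟩ := (Nat.dvd_prime_pow hp).mp hdvd
  have hcard_eq : Nat.card P = Nat.card (P ⧸ Subgroup.center P) * Nat.card (Subgroup.center P) :=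
    Subgroup.card_eq_card_quotient_mul_card_subgroup _
  have hqpos : 0 < Nat.card (P ⧸ Subgroup.center P) := Nat.card_pos
  have hZp : Nat.card (Subgroup.center P) = p := by
    interval_cases k
    · exfalso
      have h1 : 1 < Nat.card (Subgroup.center P) :=
        Finite.one_lt_card_iff_nontrivial.mpr inferInstance
      rw [hkeq, pow_zero] at h1
      omega
    · rw [hkeq, pow_one]
    · exfalso
      apply hnotcyc
      have hq : Nat.card (P ⧸ Subgroup.center P) = p := by
        apply Nat.eq_of_mul_eq_mul_right (pow_pos hp.pos 2)
        rw [← hkeq, ← hcard_eq, hcard, hkeq]; ring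
      exact isCyclic_of_prime_card hq
    · exfalso
      apply hnotcyc
      have hq : Nat.card (P ⧸ Subgroup.center P) = 1 := by
        apply Nat.eq_of_mul_eq_mul_right (pow_pos hp.pos 3)
        rw [← hkeq, ← hcard_eq, hcard, hkeq]; ring
      haveI : Subsingleton (P ⧸ Subgroup.center P) := (Nat.card_eq_one_iff_unique.mp hq).1
      infer_instance
  -- card of the quotient is p^2
  have hQp2 : Nat.card (P ⧸ Subgroup.center P) = p ^ 2 := by
    apply Nat.eq_of_mul_eq_mul_right hp.pos
    rw [← hZp, ← hcard_eq, hcard, hZp]; ring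
  -- every central element has p-th power 1
  have hzp : ∀ z ∈ Subgroup.center P, z ^ p = 1 := by
    intro z hz
    have : (⟨z, hz⟩ : Subgroup.center P) ^ p = 1 := by
      rw [← hZp]; exact pow_card_eq_one'
    simpa using congrArg (Subgroup.subtype _) this
  -- every p-th power is central
  have hxpz : ∀ x : P, x ^ p ∈ Subgroup.center P := by
    intro x
    by_contra hx
    apply hnotcyc
    have hne : ((x : P) : P ⧸ Subgroup.center P) ^ p ≠ 1 := by
      intro h
      rw [← QuotientGroup.mk_pow] at h
      exact hx ((QuotientGroup.eq_one_iff _).mp h)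
    have hdvd2 : orderOf ((x : P) : P ⧸ Subgroup.center P) ∣ p ^ 2 := by
      rw [← hQp2]; exact orderOf_dvd_natCard _
    obtain ⟨j, hj2, hjeq⟩ := (Nat.dvd_prime_pow hp).mp hdvd2
    have hj : j = 2 := by
      by_contra hjne
      have hj1 : j ≤ 1 := by omega
      have : orderOf ((x : P) : P ⧸ Subgroup.center P) ∣ p := by
        rw [hjeq]
        exact (pow_dvd_pow p hj1).trans (by rw [pow_one])
      exact hne (orderOf_dvd_iff_pow_eq_one.mp this)
    exact isCyclic_of_orderOf_eq_card _ (by rw [hjeq, hj, hQp2])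
  -- commutators are central, hence the p-th power map is a homomorphism
  have hhom : ∀ x y : P, (x * y) ^ p = x ^ p * y ^ p := by
    intro x y
    set c : P := (x * y)⁻¹ * (y * x) with hcdef
    have hyx : y * x = x * y * c := by rw [hcdef]; group
    have hcmem : c ∈ Subgroup.center P := by
      rw [← hcomm]
      open scoped commutatorElement in
      have : c = ⁅y⁻¹, x⁻¹⁆ := by rw [hcdef, commutatorElement_def]; group
      rw [this, commutator_def]
      exact Subgroup.commutator_mem_commutator (Subgroup.mem_top _) (Subgroup.mem_top _)
    have hc : ∀ g : P, g * c = c * g := fun g => Subgroup.mem_center_iff.mp hcmem g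
    rw [aux_pow_identity x y c hyx hc p]
    have h2 : 2 ∣ p - 1 := by
      obtain ⟨m, hm⟩ := hodd; omega
    have hchoose : p.choose 2 = p * ((p - 1) / 2) := by
      rw [Nat.choose_two_right, Nat.mul_div_assoc p h2]
    rw [hchoose, pow_mul, hzp c hcmem, one_pow, mul_one]
  -- there is a noncentral element of order dividing p
  have hex : ∃ x : P, x ∉ Subgroup.center P ∧ x ^ p = 1 := by
    by_contra hno
    push_neg at hno
    set f : P →* P := MonoidHom.mk' (fun x => x ^ p) hhom with hf
    have hker : f.ker = Subgroup.center P := by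
      ext g
      simp only [MonoidHom.mem_ker, hf, MonoidHom.mk'_apply]
      constructor
      · intro hg
        by_contra hgc
        exact hno g hgc hg
      · intro hg
        exact hzp g hg
    have hrange_le : f.range ≤ Subgroup.center P := by
      rintro _ ⟨x, rfl⟩
      exact hxpz x
    have hrc : Nat.card f.range ∣ p := by
      rw [← hZp]; exact Subgroup.card_dvd_of_le hrange_le
    have hrq : Nat.card f.range = p ^ 2 := by
      have := Nat.card_congr (QuotientGroup.quotientKerEquivRange f).toEquiv
      rw [← this, hker, hQp2]
    rw [hrq] at hrc
    have h1 := Nat.le_of_dvd hp.pos hrc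
    nlinarith [hp.one_lt]
  -- transfer by transitivity
  obtain ⟨x₀, hx₀c, hx₀p⟩ := hex
  intro y
  by_cases hy : y ∈ Subgroup.center P
  · exact hzp y hy
  · obtain ⟨α, hα⟩ := htransQ x₀ y hx₀c hy
    set z : P := (α • x₀)⁻¹ * y with hzdef
    have hyz : y = (α • x₀) * z := by rw [hzdef]; group
    rw [hyz, hhom, ← smul_pow', hx₀p, smul_one, one_mul, hzp z hα]
end

section
/- Let p be a prime and let a finite group G act by automorphisms on a finite abelian group V. Then the stabilizer C_G(v) = {g ∈ G : g·v = v} is a p-group for every nonidentity element v ∈ V if and only if, for every nontrivial group homomorphism α : V → ℂˣ, the inertia group I_G(α) = {g ∈ G : α(g·v) = α(v) for all v ∈ V} is a p-group. -/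
/-!
Fix `g ∈ G` and let `φ : V →* V` be `v ↦ (g • v) / v`. Then `g` fixes a nonidentity `v` iff
`φ` has nontrivial kernel, and `g` fixes a nontrivial character `α` iff `α ∘ φ = 1`. As `V` is
finite, `φ` is injective iff it is surjective, and since characters of a finite abelian group
separate points, `φ` fails to be surjective iff its range lies in the kernel of a nontrivial
character. So the elements fixing some `v ≠ 1` are exactly those fixing some `α ≠ 1`, and each
side of the equivalence says that all of them have `p`-power order.
-/
/-- The inertia subgroup of a character `α : V →* ℂˣ` under an action of `G` on `V`
by automorphisms: the set of `g ∈ G` with `α (g • v) = α v` for all `v`. -/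
def inertia (G : Type*) {V : Type*} [Group G] [CommGroup V] [MulDistribMulAction G V]
    (α : V →* ℂˣ) : Subgroup G where
  carrier := {g : G | ∀ v : V, α (g • v) = α v}
  one_mem' := by intro v; simp
  mul_mem' := by
    intro g h hg hh v
    rw [mul_smul, hg, hh]
  inv_mem' := by
    intro g hg v
    have := hg (g⁻¹ • v)
    rw [smul_inv_smul] at this
    exact this.symm

section Characters

variable {V : Type*} [CommGroup V] [Finite V]
  (M : Type*) [CommMonoid M] [HasEnoughRootsOfUnity M (Monoid.exponent V)]

theorem Subgroup.exists_character_ne_one_le_ker {H : Subgroup V} (hH : H ≠ ⊤) :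
    ∃ α : V →* Mˣ, α ≠ 1 ∧ H ≤ α.ker := by
  obtain ⟨w, hw⟩ := SetLike.exists_not_mem_of_ne_top H hH
  have : NeZero (Monoid.exponent V) := ⟨Monoid.exponent_ne_zero_of_finite⟩
  have := HasEnoughRootsOfUnity.of_dvd M (Group.exponent_quotient_dvd H)
  obtain ⟨ψ, hψ⟩ := CommGroup.exists_apply_ne_one_of_hasEnoughRootsOfUnity (V ⧸ H) M
    (a := QuotientGroup.mk w) (by rwa [Ne, QuotientGroup.eq_one_iff])
  refine ⟨ψ.comp (QuotientGroup.mk' H), fun h ↦ hψ (by simpa using congr($h w)),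
    fun v hv ↦ ?_⟩
  simp [MonoidHom.mem_ker, (QuotientGroup.eq_one_iff v).mpr hv]

theorem MonoidHom.ker_ne_bot_iff_exists_character_comp_eq_one (f : V →* V) :
    f.ker ≠ ⊥ ↔ ∃ α : V →* Mˣ, α ≠ 1 ∧ α.comp f = 1 := by
  rw [Ne, MonoidHom.ker_eq_bot_iff, Finite.injective_iff_surjective, ← MonoidHom.range_eq_top]
  refine ⟨fun h ↦ ?_, ?_⟩
  · obtain ⟨α, hα, hle⟩ := Subgroup.exists_character_ne_one_le_ker M h
    exact ⟨α, hα, MonoidHom.ext fun v ↦ hle ⟨v, rfl⟩⟩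
  · rintro ⟨α, hα, hαf⟩ hf
    refine hα (MonoidHom.ext fun w ↦ ?_)
    obtain ⟨v, rfl⟩ := MonoidHom.range_eq_top.mp hf w
    exact congr($hαf v)

end Characters

section Action

variable {G V : Type*} [Group G] [CommGroup V] [MulDistribMulAction G V]

def MulDistribMulAction.smulDiv (g : G) : V →* V where
  toFun v := g • v / v
  map_one' := by simp
  map_mul' a b := by rw [smul_mul', mul_div_mul_comm]

open MulDistribMulAction

theorem MulDistribMulAction.smulDiv_eq_one_iff {g : G} {v : V} :
    smulDiv g v = 1 ↔ g ∈ MulAction.stabilizer G v :=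
  div_eq_one

theorem MulDistribMulAction.comp_smulDiv_eq_one_iff {g : G} {α : V →* ℂˣ} :
    α.comp (smulDiv g) = 1 ↔ g ∈ inertia G α := by
  simp only [MonoidHom.ext_iff, MonoidHom.comp_apply, MonoidHom.one_apply, smulDiv,
    MonoidHom.coe_mk, OneHom.coe_mk, map_div, div_eq_one]
  rfl

theorem exists_stabilizer_iff_exists_inertia [Finite V] (g : G) :
    (∃ v : V, v ≠ 1 ∧ g ∈ MulAction.stabilizer G v) ↔
      ∃ α : V →* ℂˣ, α ≠ 1 ∧ g ∈ inertia G α := by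
  -- this provides the instance `HasEnoughRootsOfUnity ℂ (Monoid.exponent V)`
  have : NeZero (Monoid.exponent V : ℂ) :=
    ⟨by exact_mod_cast Monoid.exponent_ne_zero_of_finite⟩
  simp only [← smulDiv_eq_one_iff, ← comp_smulDiv_eq_one_iff]
  rw [← (smulDiv g).ker_ne_bot_iff_exists_character_comp_eq_one ℂ,
    Subgroup.ne_bot_iff_exists_ne_one]
  simp [MonoidHom.mem_ker, and_comm]

end Action

theorem forall_isPGroup_iff {G ι : Type*} [Group G] (p : ℕ) (P : ι → Prop)
    (H : ι → Subgroup G) :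
    (∀ i, P i → IsPGroup p (H i)) ↔
      ∀ g : G, (∃ i, P i ∧ g ∈ H i) → ∃ k, g ^ p ^ k = 1 := by
  simp only [isPGroup_iff_pow_pow_eq_one, Subtype.forall, Subtype.ext_iff, Subgroup.coe_pow,
    Subgroup.coe_one]
  exact ⟨fun h g ⟨i, hi, hg⟩ ↦ h i hi g hg, fun h i hi g hg ↦ h g ⟨i, hi, hg⟩⟩

theorem stabilizers_pGroups_iff_inertia_pGroups_general
    {G V : Type*} [Group G] [CommGroup V] [Finite V]
    [MulDistribMulAction G V] (p : ℕ) :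
    (∀ v : V, v ≠ 1 → IsPGroup p (MulAction.stabilizer G v)) ↔
      (∀ α : V →* ℂˣ, α ≠ 1 → IsPGroup p (inertia G α)) := by
  rw [forall_isPGroup_iff, forall_isPGroup_iff]
  exact forall_congr' fun g ↦ imp_congr_left (exists_stabilizer_iff_exists_inertia g)

/-- Let a finite group `G` act by automorphisms on a finite abelian group `V` and let `p`
be a prime.  The centralizer (stabilizer) of every nonidentity `v ∈ V` is a `p`-group if
and only if the inertia group of every nontrivial homomorphism `α : V →* ℂˣ` is a
`p`-group. -/
theorem stabilizers_pGroups_iff_inertia_pGroups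
    {G V : Type*} [Group G] [Finite G] [CommGroup V] [Finite V]
    [MulDistribMulAction G V] (p : ℕ) (hp : p.Prime) :
    (∀ v : V, v ≠ 1 → IsPGroup p (MulAction.stabilizer G v)) ↔
      (∀ α : V →* ℂˣ, α ≠ 1 → IsPGroup p (inertia G α)) :=
  stabilizers_pGroups_iff_inertia_pGroups_general p
end

section
/- Let V be a nontrivial finite abelian normal subgroup of a finite group G, and suppose that G acts transitively by conjugation on the nontrivial homomorphisms V → ℂˣ; that is, for all nontrivial group homomorphisms α, β : V → ℂˣ there exists g ∈ G with β(v) = α(g⁻¹vg) for all v ∈ V. Then G acts transitively by conjugation on V ∖ {1} (for all nonidentity v, w ∈ V there is g ∈ G with gvg⁻¹ = w), and V is a minimal normal subgroup of G. -/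
/-- Conjugation of an element of a normal subgroup `V` by `g : G`: `v ↦ g⁻¹ v g`. -/
def conjElt {G : Type*} [Group G] (V : Subgroup G) (hN : V.Normal) (g : G) (v : V) : V :=
  ⟨g⁻¹ * v * g, by simpa using hN.conj_mem v v.2 g⁻¹⟩

section Aux

open MulAction

private lemma hasEnoughAux (A : Type*) [CommGroup A] [Finite A] :
    HasEnoughRootsOfUnity ℂ (Monoid.exponent A) := by
  have : NeZero ((Monoid.exponent A : ℂ)) :=
    ⟨Nat.cast_ne_zero.mpr (Monoid.exponent_ne_zero_of_finite)⟩
  infer_instance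

private lemma exists_char_aux {A : Type*} [CommGroup A] [Finite A] {a : A} (ha : a ≠ 1) :
    ∃ α : A →* ℂˣ, α a ≠ 1 := by
  have := hasEnoughAux A
  exact CommGroup.exists_apply_ne_one_of_hasEnoughRootsOfUnity A ℂ ha

private lemma card_char_aux (A : Type*) [CommGroup A] [Finite A] :
    Nat.card (A →* ℂˣ) = Nat.card A := by
  have := hasEnoughAux A
  obtain ⟨e⟩ := CommGroup.monoidHom_mulEquiv_of_hasEnoughRootsOfUnity A ℂ
  exact Nat.card_congr e.toEquiv

private lemma finite_char_aux (A : Type*) [CommGroup A] [Finite A] :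
    Finite (A →* ℂˣ) := by
  have := hasEnoughAux A
  obtain ⟨e⟩ := CommGroup.monoidHom_mulEquiv_of_hasEnoughRootsOfUnity A ℂ
  exact Finite.of_equiv A e.symm.toEquiv

/-- Characters vanishing on a subgroup correspond to characters of the quotient. -/
private def vanishEquivAux {A : Type*} [CommGroup A] (N : Subgroup A) :
    {α : A →* ℂˣ // ∀ n ∈ N, α n = 1} ≃ ((A ⧸ N) →* ℂˣ) where
  toFun p := QuotientGroup.lift N p.1 p.2
  invFun χ := ⟨χ.comp (QuotientGroup.mk' N), fun n hn => by
    simp [(QuotientGroup.eq_one_iff n).mpr hn]⟩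
  left_inv p := by
    ext a
    simp
    rfl
  right_inv χ := MonoidHom.ext fun x => QuotientGroup.induction_on x fun a => by simp; rfl

private lemma card_vanish_aux {A : Type*} [CommGroup A] [Finite A] (N : Subgroup A) :
    Nat.card {α : A →* ℂˣ // ∀ n ∈ N, α n = 1} = Nat.card (A ⧸ N) :=
  (Nat.card_congr (vanishEquivAux N)).trans (card_char_aux (A ⧸ N))

/-- The key duality/counting result: if `G` acts on a finite abelian group `A` by
automorphisms and acts transitively on the nontrivial characters of `A`, then `G` acts
transitively on the nontrivial elements of `A`. -/
private theorem aux_transitive {G A : Type*} [Group G] [Finite G] [CommGroup A] [Finite A]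
    (φ : G →* MulAut A) (hA : ∃ a : A, a ≠ 1)
    (htrans : ∀ α β : A →* ℂˣ, α ≠ 1 → β ≠ 1 → ∃ g : G, ∀ v, β v = α (φ g⁻¹ v)) :
    ∀ v w : A, v ≠ 1 → w ≠ 1 → ∃ g : G, φ g v = w := by
  classical
  letI actA : MulAction G A := MulAction.compHom A φ
  have smulA : ∀ (g : G) (a : A), g • a = φ g a := fun g a => rfl
  letI actC : MulAction G (A →* ℂˣ) :=
    { smul := fun g α => α.comp (φ g⁻¹).toMonoidHom
      one_smul := fun α => by
        show α.comp (φ (1:G)⁻¹).toMonoidHom = α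
        refine MonoidHom.ext fun a => ?_
        simp
      mul_smul := fun g h α => by
        show α.comp (φ (g*h)⁻¹).toMonoidHom
          = (α.comp (φ h⁻¹).toMonoidHom).comp (φ g⁻¹).toMonoidHom
        refine MonoidHom.ext fun a => ?_
        simp [mul_inv_rev, map_mul] }
  have smulC : ∀ (g : G) (α : A →* ℂˣ) (a : A), (g • α) a = α (φ g⁻¹ a) := fun g α a => rfl
  -- the homomorphism a ↦ φ g a / a
  set f : G → (A →* A) := fun g => (φ g).toMonoidHom / MonoidHom.id A with hf
  have hfapp : ∀ (g : G) (a : A), f g a = φ g a / a := fun g a => rfl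
  haveI : Finite (A →* ℂˣ) := finite_char_aux A
  -- per-element fixed point counts agree
  have hfix : ∀ g : G,
      Nat.card (fixedBy A g) = Nat.card (fixedBy (A →* ℂˣ) g) := by
    intro g
    have h1 : Nat.card (fixedBy A g) = Nat.card (f g).ker := by
      refine Nat.card_congr (Equiv.subtypeEquivRight fun a => ?_)
      simp only [MulAction.mem_fixedBy, SetLike.mem_coe, MonoidHom.mem_ker, hfapp, smulA,
        div_eq_one]
    have bridge : ∀ (g : G) (α : A →* ℂˣ), (∀ a, α (φ g a) = α a) → (∀ a, α (φ g⁻¹ a) = α a) := by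
      intro g α h a
      have := h (φ g⁻¹ a)
      rw [← MulAut.mul_apply, ← map_mul, mul_inv_cancel, map_one, MulAut.one_apply] at this
      exact this.symm
    have h2 : Nat.card (fixedBy (A →* ℂˣ) g)
        = Nat.card {α : A →* ℂˣ // ∀ n ∈ (f g).range, α n = 1} := by
      refine Nat.card_congr (Equiv.subtypeEquivRight fun α => ?_)
      constructor
      · intro hα n hn
        obtain ⟨a, rfl⟩ := hn
        have hfa : ∀ a, α (φ g⁻¹ a) = α a := fun a => by
          have : (g • α) a = α a := by rw [hα]
          simpa [smulC] using this
        have h'' : ∀ a, α (φ g a) = α a := by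
          have := bridge g⁻¹ α (by simpa using hfa)
          simpa using this
        rw [hfapp, map_div, h'', div_self']
      · intro hα
        have h' : ∀ a, α (φ g a) = α a := by
          intro a
          have := hα (f g a) ⟨a, rfl⟩
          rw [hfapp, map_div, div_eq_one] at this
          exact this
        refine MonoidHom.ext fun a => ?_
        rw [smulC]
        exact bridge g α h' a
    rw [h1, h2, card_vanish_aux]
    -- `Nat.card (A ⧸ range) = Nat.card ker`
    have e1 : Nat.card A = Nat.card (A ⧸ (f g).range) * Nat.card (f g).range :=
      Subgroup.card_eq_card_quotient_mul_card_subgroup _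
    have e2 : Nat.card A = Nat.card (A ⧸ (f g).ker) * Nat.card (f g).ker :=
      Subgroup.card_eq_card_quotient_mul_card_subgroup _
    have e3 : Nat.card (A ⧸ (f g).ker) = Nat.card (f g).range :=
      Nat.card_congr (QuotientGroup.quotientKerEquivRange (f g)).toEquiv
    have hpos : 0 < Nat.card (f g).range := Nat.card_pos
    apply Nat.eq_of_mul_eq_mul_right hpos
    rw [← e1]
    rw [e2, e3]
    ring
  -- Burnside for both actions
  letI : Fintype G := Fintype.ofFinite G
  letI : Fintype A := Fintype.ofFinite A
  letI : Fintype (A →* ℂˣ) := Fintype.ofFinite _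
  letI : Fintype (Quotient (orbitRel G A)) := Fintype.ofFinite _
  letI : Fintype (Quotient (orbitRel G (A →* ℂˣ))) := Fintype.ofFinite _
  letI : ∀ g : G, Fintype (fixedBy A g) := fun g => Fintype.ofFinite _
  letI : ∀ g : G, Fintype (fixedBy (A →* ℂˣ) g) := fun g => Fintype.ofFinite _
  have b1 := MulAction.sum_card_fixedBy_eq_card_orbits_mul_card_group G A
  have b2 := MulAction.sum_card_fixedBy_eq_card_orbits_mul_card_group G (A →* ℂˣ)
  have hsum : (∑ g : G, Fintype.card (fixedBy A g))
      = ∑ g : G, Fintype.card (fixedBy (A →* ℂˣ) g) := by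
    refine Finset.sum_congr rfl fun g _ => ?_
    have := hfix g
    simpa [Nat.card_eq_fintype_card] using this
  have horb : Fintype.card (Quotient (orbitRel G A))
      = Fintype.card (Quotient (orbitRel G (A →* ℂˣ))) := by
    have := b1.symm.trans (hsum.trans b2)
    exact Nat.eq_of_mul_eq_mul_right Fintype.card_pos this
  -- the character action has at most 2 orbits
  obtain ⟨a₀, ha₀⟩ := hA
  obtain ⟨α₀, hα₀⟩ := exists_char_aux ha₀
  have hα₀ne : α₀ ≠ 1 := by
    intro h
    rw [h] at hα₀
    exact hα₀ rfl
  have horbC : ∀ x : Quotient (orbitRel G (A →* ℂˣ)),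
      x = ⟦(1 : A →* ℂˣ)⟧ ∨ x = ⟦α₀⟧ := by
    intro x
    refine Quotient.inductionOn x ?_
    intro α
    by_cases hα : α = 1
    · left; rw [hα]
    · right
      obtain ⟨g, hg⟩ := htrans α₀ α hα₀ne hα
      have hmem : α ∈ orbit G α₀ :=
        ⟨g, MonoidHom.ext fun a => (smulC g α₀ a).trans (hg a).symm⟩
      exact Quotient.sound hmem
  have hcardC : Fintype.card (Quotient (orbitRel G (A →* ℂˣ))) ≤ 2 := by
    have : (Finset.univ : Finset (Quotient (orbitRel G (A →* ℂˣ)))) ⊆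
        {⟦(1 : A →* ℂˣ)⟧, ⟦α₀⟧} := by
      intro x _
      rcases horbC x with h | h <;> simp [h]
    calc Fintype.card (Quotient (orbitRel G (A →* ℂˣ)))
        = (Finset.univ : Finset (Quotient (orbitRel G (A →* ℂˣ)))).card := rfl
      _ ≤ ({⟦(1 : A →* ℂˣ)⟧, ⟦α₀⟧} : Finset _).card := Finset.card_le_card this
      _ ≤ 2 := by simpa using Finset.card_insert_le (⟦(1 : A →* ℂˣ)⟧) {⟦α₀⟧}
  -- conclude transitivity
  intro v w hv hw
  by_contra hcon
  push_neg at hcon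
  have hone : ∀ x : A, x ∈ orbit G (1 : A) → x = 1 := by
    intro x hx
    obtain ⟨g, hg⟩ := hx
    have hg' : g • (1 : A) = x := hg
    rw [smulA, map_one] at hg'
    exact hg'.symm
  have hvw : (⟦v⟧ : Quotient (orbitRel G A)) ≠ ⟦w⟧ := by
    intro h
    obtain ⟨g, hg⟩ := Quotient.exact h
    have hg' : g • w = v := hg
    rw [smulA] at hg'
    exact hcon g⁻¹ (by rw [← hg']; simp [← MulAut.mul_apply, ← map_mul])
  have hv1 : (⟦v⟧ : Quotient (orbitRel G A)) ≠ ⟦(1 : A)⟧ := by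
    intro h
    exact hv (hone v (Quotient.exact h))
  have hw1 : (⟦w⟧ : Quotient (orbitRel G A)) ≠ ⟦(1 : A)⟧ := by
    intro h
    exact hw (hone w (Quotient.exact h))
  have h3 : 2 < Fintype.card (Quotient (orbitRel G A)) := by
    rw [Fintype.two_lt_card_iff]
    exact ⟨⟦v⟧, ⟦w⟧, ⟦(1 : A)⟧, hvw, hv1, hw1⟩
  rw [horb] at h3
  omega

end Aux

/-- Let `V` be a nontrivial finite abelian normal subgroup of a finite group `G` such that
`G` acts transitively by conjugation on the nontrivial homomorphisms `V → ℂˣ`.  Then `G`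
acts transitively by conjugation on `V ∖ {1}`, and `V` is a minimal normal subgroup of `G`. -/
theorem transitive_on_characters_implies_transitive_and_minimal_normal
    {G : Type*} [Group G] [Finite G] (V : Subgroup G) (hN : V.Normal)
    (hcomm : ∀ v w : V, v * w = w * v) (hV : V ≠ ⊥)
    (htrans : ∀ α β : V →* ℂˣ, α ≠ 1 → β ≠ 1 →
      ∃ g : G, ∀ v : V, β v = α (conjElt V hN g v)) :
    (∀ v w : V, (v : G) ≠ 1 → (w : G) ≠ 1 → ∃ g : G, g * v * g⁻¹ = w) ∧
      (∀ W : Subgroup G, W.Normal → W ≤ V → W = ⊥ ∨ W = V) := by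
  letI : CommGroup ↥V := { (show Group ↥V from inferInstance) with mul_comm := hcomm }
  let φ : G →* MulAut ↥V :=
    { toFun := fun g =>
        { toFun := fun v => ⟨g * v * g⁻¹, by simpa using hN.conj_mem v v.2 g⟩
          invFun := fun v => conjElt V hN g v
          left_inv := fun v => by
            apply Subtype.ext
            show g⁻¹ * (g * ↑v * g⁻¹) * g = ↑v
            group
          right_inv := fun v => by
            apply Subtype.ext
            show g * (g⁻¹ * ↑v * g) * g⁻¹ = ↑v
            group
          map_mul' := fun v₁ v₂ => by
            apply Subtype.ext
            show g * (↑v₁ * ↑v₂) * g⁻¹ = (g * ↑v₁ * g⁻¹) * (g * ↑v₂ * g⁻¹)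
            group }
      map_one' := by
        refine MulEquiv.ext fun v => ?_
        apply Subtype.ext
        show (1 : G) * ↑v * (1 : G)⁻¹ = ↑v
        group
      map_mul' := fun g h => by
        refine MulEquiv.ext fun v => ?_
        apply Subtype.ext
        show (g * h) * ↑v * (g * h)⁻¹ = g * (h * ↑v * h⁻¹) * g⁻¹
        group }
  have hφconj : ∀ (g : G) (v : ↥V), conjElt V hN g v = φ g⁻¹ v := by
    intro g v
    apply Subtype.ext
    show g⁻¹ * ↑v * g = g⁻¹ * ↑v * g⁻¹⁻¹
    rw [inv_inv]
  obtain ⟨a₀, ha₀⟩ := Subgroup.ne_bot_iff_exists_ne_one.mp hV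
  have htrans' : ∀ α β : ↥V →* ℂˣ, α ≠ 1 → β ≠ 1 → ∃ g : G, ∀ v, β v = α (φ g⁻¹ v) := by
    intro α β hα hβ
    obtain ⟨g, hg⟩ := htrans α β hα hβ
    exact ⟨g, fun v => by rw [hg v, hφconj]⟩
  constructor
  · intro v w hv hw
    have hv' : v ≠ 1 := fun h => hv (by rw [h]; rfl)
    have hw' : w ≠ 1 := fun h => hw (by rw [h]; rfl)
    obtain ⟨g, hg⟩ := aux_transitive φ ⟨a₀, ha₀⟩ htrans' v w hv' hw'
    exact ⟨g, congrArg Subtype.val hg⟩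
  · intro W hWn hWV
    by_cases hbot : W = ⊥
    · exact Or.inl hbot
    right
    by_contra hne
    have hlt : W < V := lt_of_le_of_ne hWV hne
    obtain ⟨v, hvV, hvW⟩ := SetLike.exists_of_lt hlt
    obtain ⟨⟨w, hwW⟩, hw1⟩ := Subgroup.ne_bot_iff_exists_ne_one.mp hbot
    have hwne : w ≠ 1 := fun h => hw1 (Subtype.ext h)
    set N : Subgroup ↥V := W.subgroupOf V with hNdef
    have hq1 : (QuotientGroup.mk (⟨v, hvV⟩ : ↥V) : ↥V ⧸ N) ≠ 1 := by
      rw [Ne, QuotientGroup.eq_one_iff]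
      exact fun h => hvW (Subgroup.mem_subgroupOf.mp h)
    obtain ⟨χ, hχ⟩ := exists_char_aux hq1
    set α : ↥V →* ℂˣ := χ.comp (QuotientGroup.mk' N) with hαdef
    have hαne : α ≠ 1 := by
      intro h
      apply hχ
      have := congrArg (fun f : ↥V →* ℂˣ => f ⟨v, hvV⟩) h
      simpa [hαdef] using this
    set w' : ↥V := ⟨w, hWV hwW⟩ with hw'def
    have hw'1 : w' ≠ 1 := fun h => hwne (congrArg Subtype.val h)
    obtain ⟨β, hβ⟩ := exists_char_aux hw'1
    have hβne : β ≠ 1 := by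
      intro h
      apply hβ
      rw [h]
      rfl
    obtain ⟨g, hg⟩ := htrans α β hαne hβne
    have hmem : conjElt V hN g w' ∈ N := by
      apply Subgroup.mem_subgroupOf.mpr
      show g⁻¹ * w * g ∈ W
      simpa using hWn.conj_mem w hwW g⁻¹
    have hα1 : α (conjElt V hN g w') = 1 := by
      rw [hαdef]
      simp only [MonoidHom.comp_apply, QuotientGroup.mk'_apply]
      rw [(QuotientGroup.eq_one_iff _).mpr hmem, map_one]
    exact hβ ((hg w').trans hα1)
end

section
/- Let V be a nontrivial finite abelian normal subgroup of a finite group G, and suppose that G acts transitively by conjugation on the nontrivial homomorphisms V → ℂˣ; that is, for all nontrivial group homomorphisms α, β : V → ℂˣ there exists g ∈ G with β(v) = α(g⁻¹vg) for all v ∈ V. For a homomorphism λ : V → ℂˣ write I_G(λ) = {g ∈ G : λ(g⁻¹vg) = λ(v) for all v ∈ V}. If I_G(μ) is a cyclic group for some nontrivial μ : V → ℂˣ, then the set of subgroups {I_G(λ) : λ a nontrivial homomorphism V → ℂˣ} equals the set of subgroups {C_G(v) : v ∈ V, v ≠ 1}, where C_G(v) denotes the centralizer of v in G. -/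
/-- The inertia subgroup `I_G(λ) = {g ∈ G : λ(g⁻¹ v g) = λ(v) for all v ∈ V}` of a
character `λ : V →* ℂˣ` of a normal subgroup `V` of `G`. -/
def conjInertia {G : Type*} [Group G] (V : Subgroup G) (hN : V.Normal)
    (lam : V →* ℂˣ) : Subgroup G where
  carrier := {g : G | ∀ v : V, lam (conjElt V hN g v) = lam v}
  one_mem' := by
    intro v
    have h : conjElt V hN 1 v = v := Subtype.ext (by simp [conjElt])
    rw [h]
  mul_mem' := by
    intro g h hg hh v
    have key : conjElt V hN (g * h) v = conjElt V hN h (conjElt V hN g v) :=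
      Subtype.ext (by simp [conjElt]; group)
    rw [key, hh, hg]
  inv_mem' := by
    intro g hg v
    have key : conjElt V hN g (conjElt V hN g⁻¹ v) = v :=
      Subtype.ext (by simp [conjElt]; group)
    have := hg (conjElt V hN g⁻¹ v)
    rw [key] at this
    exact this.symm

lemma conjElt_injective {G : Type*} [Group G] (V : Subgroup G) (hN : V.Normal) (g : G) :
    Function.Injective (conjElt V hN g) := by
  intro v w h
  apply Subtype.ext
  have h' : g⁻¹ * (v : G) * g = g⁻¹ * (w : G) * g := congrArg Subtype.val h
  exact mul_left_cancel (mul_right_cancel h')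

lemma conjElt_one {G : Type*} [Group G] (V : Subgroup G) (hN : V.Normal) (g : G) :
    conjElt V hN g 1 = 1 := Subtype.ext (by simp [conjElt])

lemma mem_conjInertia_iff {G : Type*} [Group G] (V : Subgroup G) (hN : V.Normal)
    (lam : V →* ℂˣ) (g : G) :
    g ∈ conjInertia V hN lam ↔ ∀ v : V, lam (conjElt V hN g v) = lam v := Iff.rfl
/-- Let `V` be a nontrivial finite abelian normal subgroup of a finite group `G` such that
`G` acts transitively by conjugation on the nontrivial homomorphisms `V → ℂˣ`.  If the
inertia group of some nontrivial character of `V` is cyclic, then the collection of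
inertia groups of nontrivial characters of `V` coincides with the collection of
centralizers of nonidentity elements of `V`. -/
theorem inertia_groups_eq_centralizers
    {G : Type*} [Group G] [Finite G] (V : Subgroup G) (hN : V.Normal)
    (hcomm : ∀ v w : V, v * w = w * v) (hV : V ≠ ⊥)
    (htrans : ∀ α β : V →* ℂˣ, α ≠ 1 → β ≠ 1 →
      ∃ g : G, ∀ v : V, β v = α (conjElt V hN g v))
    (μ : V →* ℂˣ) (hμ : μ ≠ 1) (hcyc : IsCyclic (conjInertia V hN μ)) :
    {H : Subgroup G | ∃ lam : V →* ℂˣ, lam ≠ 1 ∧ H = conjInertia V hN lam} =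
      {H : Subgroup G | ∃ v : V, (v : G) ≠ 1 ∧ H = Subgroup.centralizer {(v : G)}} := by
  classical
  set n := Nat.card V with hn
  have hnpos : 0 < n := Nat.card_pos
  have hn1 : n ≠ 1 := fun h => hV (Subgroup.card_eq_one.mp h)
  obtain ⟨v₁, hv₁V, hv₁⟩ : ∃ v ∈ V, v ≠ 1 := by
    by_contra h
    push_neg at h
    exact hV ((Subgroup.eq_bot_iff_forall V).mpr h)
  -- V is contained in the inertia group of μ
  have hVle : V ≤ conjInertia V hN μ := by
    intro g hg
    rw [mem_conjInertia_iff]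
    intro v
    have hcg : (⟨g, hg⟩ : V) * v = v * ⟨g, hg⟩ := hcomm _ _
    have hcg' : g * (v : G) = (v : G) * g := congrArg Subtype.val hcg
    have he : conjElt V hN g v = v := Subtype.ext (by
      show g⁻¹ * (v : G) * g = v
      rw [mul_assoc, ← hcg', ← mul_assoc, inv_mul_cancel, one_mul])
    rw [he]
  -- hence V is cyclic
  have hVcyc : IsCyclic V := by
    have e := Subgroup.subgroupOfEquivOfLe hVle
    exact isCyclic_of_surjective e.toMonoidHom e.surjective
  -- a faithful character of V
  haveI : NeZero n := ⟨hnpos.ne'⟩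
  have hcardru : Nat.card V = Nat.card (rootsOfUnity n ℂ) := by
    have hru : Nat.card (rootsOfUnity n ℂ) = n := by
      rw [Complex.card_rootsOfUnity]
    rw [hru]
  let e : V ≃* rootsOfUnity n ℂ := mulEquivOfCyclicCardEq hcardru
  let lam0 : V →* ℂˣ := (Subgroup.subtype _).comp e.toMonoidHom
  have hlam0inj : Function.Injective lam0 :=
    (Subgroup.subtype_injective _).comp e.injective
  have hlam0ne : lam0 ≠ 1 := by
    intro h
    apply hv₁
    have h2 : (⟨v₁, hv₁V⟩ : V) = 1 := hlam0inj (by rw [h]; simp)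
    exact congrArg Subtype.val h2
  -- the order of V is prime
  have hprime : n.Prime := by
    by_contra hnp
    have hqprime : (n.minFac).Prime := Nat.minFac_prime hn1
    have hqdvd : n.minFac ∣ n := Nat.minFac_dvd n
    have hqne : n.minFac ≠ n := fun h => hnp (h ▸ hqprime)
    haveI : Fact (n.minFac).Prime := ⟨hqprime⟩
    obtain ⟨v₀, hv₀⟩ := exists_prime_orderOf_dvd_card' (G := V) n.minFac hqdvd
    have hv₀ne : v₀ ≠ 1 := by
      intro h
      rw [h, orderOf_one] at hv₀
      exact hqprime.one_lt.ne' hv₀.symm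
    have hv₀q : v₀ ^ n.minFac = 1 := by rw [← hv₀]; exact pow_orderOf_eq_one v₀
    have hlam'app : ∀ v : V, (lam0 ^ n.minFac) v = lam0 (v ^ n.minFac) := by
      intro v
      rw [MonoidHom.pow_apply, map_pow]
    have hlam'ne : (lam0 ^ n.minFac) ≠ 1 := by
      intro h
      obtain ⟨gg, hgg⟩ := hVcyc.exists_ofOrder_eq_natCard
      have hggq : gg ^ n.minFac = 1 := by
        apply hlam0inj
        rw [← hlam'app gg, h, map_one, MonoidHom.one_apply]
      have hdvd : orderOf gg ∣ n.minFac := orderOf_dvd_of_pow_eq_one hggq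
      rw [hgg, ← hn] at hdvd
      exact hqne (Nat.dvd_antisymm hqdvd hdvd)
    obtain ⟨g, hg⟩ := htrans lam0 (lam0 ^ n.minFac) hlam0ne hlam'ne
    have hc1 : conjElt V hN g v₀ = 1 := by
      apply hlam0inj
      rw [← hg v₀, hlam'app v₀, hv₀q]
    apply hv₀ne
    apply conjElt_injective V hN g
    rw [hc1, conjElt_one]
  -- subgroups of V are trivial or everything
  have hsub : ∀ H : Subgroup V, H = ⊥ ∨ H = ⊤ := by
    intro H
    have hd : Nat.card H ∣ n := Subgroup.card_subgroup_dvd_card H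
    rcases hprime.eq_one_or_self_of_dvd _ hd with h1 | h2
    · exact Or.inl (Subgroup.card_eq_one.mp h1)
    · exact Or.inr (Subgroup.eq_top_of_card_eq H (h2.trans hn))
  -- the key identification
  have key : ∀ lam : V →* ℂˣ, lam ≠ 1 → ∀ v : V, (v : G) ≠ 1 →
      conjInertia V hN lam = Subgroup.centralizer {(v : G)} := by
    intro lam hlam v hv
    have hlaminj : Function.Injective lam := by
      rw [← MonoidHom.ker_eq_bot_iff]
      rcases hsub lam.ker with h | h
      · exact h
      · exfalso
        apply hlam
        ext w
        have hw : w ∈ lam.ker := h ▸ Subgroup.mem_top w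
        simpa [MonoidHom.mem_ker] using hw
    have hvne : v ≠ (1 : V) := fun h => hv (by rw [h]; rfl)
    have hzp : Subgroup.zpowers v = (⊤ : Subgroup V) := by
      rcases hsub (Subgroup.zpowers v) with h | h
      · exact absurd (Subgroup.zpowers_eq_bot.mp h) hvne
      · exact h
    ext g
    rw [mem_conjInertia_iff, Subgroup.mem_centralizer_singleton_iff]
    constructor
    · intro hg
      have h2 : conjElt V hN g v = v := hlaminj (hg v)
      have h3 : g⁻¹ * (v : G) * g = v := congrArg Subtype.val h2
      calc g * (v : G) = g * (g⁻¹ * (v : G) * g) := by rw [h3]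
        _ = (v : G) * g := by group
    · intro hg w
      have hw : w ∈ Subgroup.zpowers v := hzp.symm ▸ Subgroup.mem_top w
      obtain ⟨k, hk⟩ := Subgroup.mem_zpowers_iff.mp hw
      have hcom : Commute g ((v : G)) := hg
      have hcom2 : Commute g ((v : G) ^ k) := hcom.zpow_right k
      have hwv : (w : G) = (v : G) ^ k := by rw [← hk]; norm_cast
      have hcw : conjElt V hN g w = w := Subtype.ext (by
        show g⁻¹ * (w : G) * g = w
        rw [hwv, mul_assoc, ← hcom2.eq, ← mul_assoc, inv_mul_cancel, one_mul])
      rw [hcw]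
  ext H
  simp only [Set.mem_setOf_eq]
  constructor
  · rintro ⟨lam, hlam, rfl⟩
    exact ⟨⟨v₁, hv₁V⟩, hv₁, key lam hlam ⟨v₁, hv₁V⟩ hv₁⟩
  · rintro ⟨v, hv, rfl⟩
    exact ⟨μ, hμ, (key μ hμ v hv).symm⟩
end

section
/- Let q be a prime, n ≥ 1, and let F be the finite field with q^n elements, regarded as a vector space over its prime field 𝔽_q. Let p be a prime with p ≠ q, and let G be a nonabelian subgroup of the semilinear group Γ(q^n) such that: the only 𝔽_q-subspaces of F invariant under every element of G are 0 and F; the commutator subgroup of G is a p-group; the stabilizer in G of every nonzero v ∈ F is a p-group; and F ∖ {0} is the union of exactly two G-orbits. If ℓ is a primitive prime divisor of q^n − 1 that divides the order of G, then ℓ = p, the stabilizer in G of every nonzero v ∈ F is trivial (G acts fixed-point-freely on F ∖ {0}), and 2·|G| = q^n − 1. -/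
/-- The multiplicative group structure on `AddAut A` (composition), as in the older Mathlib. -/
instance addAutOldGroup (A : Type*) [Add A] : Group (AddAut A) where
  mul g h := h.trans g
  one := AddEquiv.refl _
  inv := AddEquiv.symm
  mul_assoc _ _ _ := rfl
  one_mul _ := rfl
  mul_one _ := rfl
  inv_mul_cancel := AddEquiv.self_trans_symm

/-- The application action of `AddAut A` on `A`, as in the older Mathlib. -/
instance addAutOldMulAction (A : Type*) [AddMonoid A] : MulAction (AddAut A) A where
  smul f a := f a
  one_smul _ := rfl
  mul_smul _ _ _ := rfl

/-- The semilinear group `Γ(F)` of a field `F`: the subgroup of the additive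
automorphism group of `F` consisting of the maps `x ↦ a * σ x` with `a ∈ Fˣ` and `σ` a
field automorphism of `F`. -/
def semilinearGroup (F : Type*) [Field F] : Subgroup (AddAut F) where
  carrier := {f : AddAut F | ∃ (a : Fˣ) (σ : F ≃+* F), ∀ x : F, f x = a * σ x}
  one_mem' := ⟨1, RingEquiv.refl F, by simp; exact fun x => rfl⟩
  mul_mem' := by
    rintro f g ⟨a, σ, hf⟩ ⟨b, τ, hg⟩
    refine ⟨a * Units.map σ.toRingHom.toMonoidHom b, τ.trans σ, fun x => ?_⟩
    have : (f * g) x = f (g x) := rfl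
    rw [this, hg, hf]
    simp [mul_assoc]
  inv_mem' := by
    rintro f ⟨a, σ, hf⟩
    refine ⟨Units.map σ.symm.toRingHom.toMonoidHom a⁻¹, σ.symm, fun x => ?_⟩
    apply (f : F ≃+ F).injective
    have h1 : (f : F ≃+ F) ((f⁻¹ : AddAut F) x) = x := by
      exact f.apply_symm_apply x
    rw [h1, hf]
    simp

/-!
A primitive prime divisor `ℓ` of `q ^ n - 1` exceeds `n = |Gal(F/𝔽_q)|`, so an element of
`Γ(q ^ n)` of order `ℓ` has trivial field automorphism part: it is multiplication by an `ℓ`-th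
root of unity `ζ ≠ 1`, and `ζ` lies in no proper subfield of `F`. By Cauchy, `G` contains such
a scalar `z`. If `ℓ ≠ p`, every commutator `⁅g, z⁆` is the scalar `σ_g(ζ) / ζ`, of order dividing
`ℓ` inside the `p`-group `G'`, hence trivial; so each `σ_g` fixes `ζ`, hence is the identity, and
`G` would consist of scalars and be abelian. So `ℓ = p`, and a nontrivial point stabilizer, being
an `ℓ`-group, would contain a scalar of order `ℓ` fixing a nonzero vector. The action on `F ∖ {0}`
is therefore free, and each of the two orbits has `|G|` elements.
-/

open Module MulAction
open scoped commutatorElement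

def IsPrimitivePrimeDivisor (ℓ q n : ℕ) : Prop :=
  ℓ.Prime ∧ ℓ ∣ q ^ n - 1 ∧ ∀ j, 1 ≤ j → j < n → ¬ ℓ ∣ q ^ j - 1

theorem Nat.dvd_pow_sub_one_iff_zmod {ℓ q j : ℕ} (hq : 0 < q) :
    ℓ ∣ q ^ j - 1 ↔ (q : ZMod ℓ) ^ j = 1 := by
  rw [← Nat.modEq_iff_dvd' (Nat.one_le_pow _ _ hq), ← ZMod.natCast_eq_natCast_iff]
  push_cast
  exact eq_comm

namespace IsPrimitivePrimeDivisor

variable {ℓ q n : ℕ}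

theorem lt (h : IsPrimitivePrimeDivisor ℓ q n) (hq : 0 < q) (hn : 1 ≤ n) : n < ℓ := by
  obtain ⟨hl, hdvd, hprim⟩ := h
  have := Fact.mk hl
  have hpow : (q : ZMod ℓ) ^ n = 1 := (Nat.dvd_pow_sub_one_iff_zmod hq).1 hdvd
  have hord : orderOf (q : ZMod ℓ) = n := (orderOf_eq_iff (by omega)).2
    ⟨hpow, fun j hjn hj => mt (Nat.dvd_pow_sub_one_iff_zmod hq).2 (hprim j hj hjn)⟩
  have hq0 : (q : ZMod ℓ) ≠ 0 := by
    intro h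
    rw [h, zero_pow (by omega)] at hpow
    exact zero_ne_one hpow
  have := Nat.le_of_dvd (Nat.sub_pos_of_lt hl.one_lt) (hord ▸ ZMod.orderOf_dvd_card_sub_one hq0)
  omega

end IsPrimitivePrimeDivisor

section FiniteField

variable {F : Type*} [Field F] [Finite F]

theorem RingEquiv.pow_finrank_eq_one {p : ℕ} [Fact p.Prime] [Algebra (ZMod p) F]
    (σ : F ≃+* F) : σ ^ finrank (ZMod p) F = 1 := by
  -- a ring automorphism fixes the prime field, so `σ` is an element of `Gal(F/𝔽_p)`
  let τ : F ≃ₐ[ZMod p] F := AlgEquiv.ofRingEquiv (f := σ) fun x =>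
    DFunLike.congr_fun (Subsingleton.elim ((σ : F →+* F).comp (algebraMap (ZMod p) F))
      (algebraMap (ZMod p) F)) x
  have hτ : τ ^ finrank (ZMod p) F = 1 := orderOf_dvd_iff_pow_eq_one.1
    ((orderOf_dvd_natCard τ).trans (IsGalois.card_aut_eq_finrank (ZMod p) F).dvd)
  have hpow : ∀ k x, (σ ^ k) x = (τ ^ k) x := by
    intro k
    induction k with
    | zero => intro x; rfl
    | succ k ih => intro x; rw [pow_succ, pow_succ, AlgEquiv.mul_apply, ← ih]; rfl
  ext x
  rw [hpow, hτ]
  rfl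

theorem RingEquiv.eq_one_of_pow_eq_one_of_finrank_lt {p ℓ : ℕ} [Fact p.Prime]
    [Algebra (ZMod p) F] {σ : F ≃+* F} (hl : ℓ.Prime) (hσ : σ ^ ℓ = 1)
    (hlt : finrank (ZMod p) F < ℓ) : σ = 1 := by
  have hcop : ℓ.Coprime (finrank (ZMod p) F) :=
    Nat.coprime_of_lt_prime finrank_pos.ne' hlt hl
  simpa [hcop] using pow_gcd_eq_one.2 ⟨hσ, σ.pow_finrank_eq_one (p := p)⟩

theorem Subfield.eq_top_of_mem_of_isPrimitivePrimeDivisor {q n ℓ : ℕ} (hq : q.Prime)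
    (hF : Nat.card F = q ^ n) (hℓ : IsPrimitivePrimeDivisor ℓ q n) (K : Subfield F) {ζ : F}
    (hζK : ζ ∈ K) (hζ : ζ ^ ℓ = 1) (hζ1 : ζ ≠ 1) : K = ⊤ := by
  have hKF : Nat.card K ∣ q ^ n := by
    rw [← hF, natCard_eq_pow_finrank (K := K) (V := F)]
    exact dvd_pow_self _ finrank_pos.ne'
  obtain ⟨m, hmn, hKm⟩ := (Nat.dvd_prime_pow hq).1 hKF
  have hm : 1 ≤ m := by
    by_contra! h
    have := Finite.one_lt_card (α := K)
    rw [hKm, Nat.lt_one_iff.1 h, pow_zero] at this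
    exact lt_irrefl 1 this
  have hζ0 : ζ ≠ 0 := by
    rintro rfl
    simp [zero_pow hℓ.1.ne_zero] at hζ
  have := Fact.mk hℓ.1
  have hord : orderOf (⟨ζ, hζK⟩ : K) = ℓ :=
    orderOf_eq_prime (Subtype.ext hζ) fun h => hζ1 (congrArg Subtype.val h)
  have hdvd : ℓ ∣ q ^ m - 1 := by
    let := Fintype.ofFinite K
    rw [← hKm, ← hord, Nat.card_eq_fintype_card]
    exact orderOf_dvd_of_pow_eq_one (FiniteField.pow_card_sub_one_eq_one _
      fun h => hζ0 (congrArg Subtype.val h))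
  have hmn : m = n := by
    by_contra h
    exact hℓ.2.2 m hm (lt_of_le_of_ne hmn h) hdvd
  have hK : K.toAddSubgroup = ⊤ := AddSubgroup.eq_top_of_card_eq _ (by
    rw [hF, ← hmn, ← hKm]; rfl)
  exact eq_top_iff.2 fun x _ => show x ∈ K.toAddSubgroup from hK ▸ AddSubgroup.mem_top x

theorem RingEquiv.eq_one_of_apply_eq_self {q n ℓ : ℕ} (hq : q.Prime)
    (hF : Nat.card F = q ^ n) (hℓ : IsPrimitivePrimeDivisor ℓ q n) {σ : F ≃+* F} {ζ : F}
    (hσζ : σ ζ = ζ) (hζ : ζ ^ ℓ = 1) (hζ1 : ζ ≠ 1) : σ = 1 := by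
  have hK := Subfield.eq_top_of_mem_of_isPrimitivePrimeDivisor hq hF hℓ
    (FixedBy.subfield F (σ : RingAut F)) hσζ hζ hζ1
  ext x
  exact (hK ▸ Subfield.mem_top x : x ∈ FixedBy.subfield F (σ : RingAut F))

end FiniteField

theorem IsPGroup.eq_one_of_pow_eq_one {G : Type*} [Group G] {p ℓ : ℕ} (hp : p.Prime)
    (hl : ℓ.Prime) (hne : ℓ ≠ p) (hG : IsPGroup p G) {x : G} (hx : x ^ ℓ = 1) : x = 1 := by
  obtain ⟨k, hk⟩ := hG x
  have hcop : ℓ.Coprime (p ^ k) := ((Nat.coprime_primes hl hp).2 hne).pow_right k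
  simpa [hcop] using pow_gcd_eq_one.2 ⟨hx, hk⟩

theorem Subgroup.stabilizer_eq_bot_of_inf_eq_bot {M X : Type*} [Group M] [MulAction M X]
    {H : Subgroup M} {x : X} (h : H ⊓ stabilizer M x = ⊥) : stabilizer H x = ⊥ :=
  (Subgroup.eq_bot_iff_forall _).2 fun g hg =>
    Subtype.ext (Subgroup.mem_bot.1 (h ▸ Subgroup.mem_inf.2 ⟨g.2, hg⟩))

theorem MulAction.ncard_orbit_union_orbit_of_stabilizer_eq_bot {M X : Type*} [Group M]
    [MulAction M X] [Finite X] {u w : X} (hu : stabilizer M u = ⊥) (hw : stabilizer M w = ⊥)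
    (huw : w ∉ orbit M u) : (orbit M u ∪ orbit M w).ncard = 2 * Nat.card M := by
  have hdisj : Disjoint (orbit M u) (orbit M w) :=
    (orbit.eq_or_disjoint u w).resolve_left fun h => huw (h ▸ mem_orbit_self w)
  rw [Set.ncard_union_eq hdisj, ← index_stabilizer, ← index_stabilizer, hu, hw,
    Subgroup.index_bot, two_mul]

namespace semilinearGroup

variable {F : Type*} [Field F]

theorem exists_ringEquiv {f : AddAut F} (hf : f ∈ semilinearGroup F) :
    ∃ σ : F ≃+* F, ∀ x, f x = f 1 * σ x := by
  obtain ⟨a, σ, hσ⟩ := hf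
  exact ⟨σ, fun x => by rw [hσ, hσ 1, map_one, mul_one]⟩

theorem pow_apply {f : AddAut F} {σ : F ≃+* F} (hf : ∀ x, f x = f 1 * σ x) (k : ℕ) (x : F) :
    (f ^ k) x = (f ^ k) 1 * (σ ^ k) x := by
  induction k generalizing x with
  | zero => exact (one_mul x).symm
  | succ k ih =>
    have hstep : ∀ y, (f ^ (k + 1)) y = (f ^ k) 1 * (σ ^ k) (f 1) * (σ ^ (k + 1)) y := fun y => by
      rw [pow_succ, show (f ^ k * f) y = (f ^ k) (f y) from rfl, ih, hf, map_mul, pow_succ,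
        mul_assoc]
      rfl
    rw [hstep x, hstep 1, map_one (σ ^ (k + 1)), mul_one]

theorem pow_apply_of_apply_eq_mul {f : AddAut F} (hf : ∀ x, f x = f 1 * x) (k : ℕ) (x : F) :
    (f ^ k) x = f 1 ^ k * x := by
  induction k generalizing x with
  | zero => rw [pow_zero, pow_zero, one_mul]; rfl
  | succ k ih =>
    rw [pow_succ, show (f ^ k * f) x = (f ^ k) (f x) from rfl, ih, hf x, pow_succ, mul_assoc]

theorem inv_apply_of_apply_eq_mul {f : AddAut F} (hf : ∀ x, f x = f 1 * x) (x : F) :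
    f⁻¹ x = (f 1)⁻¹ * x := by
  have hf1 : f 1 ≠ 0 := fun h => one_ne_zero (f.injective (h.trans (map_zero f).symm))
  apply f.injective
  rw [show f (f⁻¹ x) = x from f.apply_symm_apply x, hf, ← mul_assoc, mul_inv_cancel₀ hf1,
    one_mul]

theorem commutatorElement_apply {g z : AddAut F} {σ : F ≃+* F} (hg : ∀ x, g x = g 1 * σ x)
    (hz : ∀ x, z x = z 1 * x) (x : F) : ⁅g, z⁆ x = σ (z 1) * (z 1)⁻¹ * x := by
  have hg_mul : ∀ c y, g (c * y) = σ c * g y := fun c y => by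
    rw [hg, hg y, map_mul, mul_left_comm]
  rw [commutatorElement_def]
  show g (z (g⁻¹ (z⁻¹ x))) = _
  rw [inv_apply_of_apply_eq_mul hz, hz, hg_mul, show g (g⁻¹ _) = _ from g.apply_symm_apply _,
    mul_assoc]

theorem commutatorElement_pow_eq_one {g z : AddAut F} {σ : F ≃+* F} {ℓ : ℕ}
    (hg : ∀ x, g x = g 1 * σ x) (hz : ∀ x, z x = z 1 * x) (hzℓ : z 1 ^ ℓ = 1) :
    ⁅g, z⁆ ^ ℓ = 1 := by
  have hc : ∀ x, ⁅g, z⁆ x = ⁅g, z⁆ 1 * x := fun x => by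
    rw [commutatorElement_apply hg hz, commutatorElement_apply hg hz 1, mul_one]
  ext x
  rw [pow_apply_of_apply_eq_mul hc, commutatorElement_apply hg hz 1, mul_one, mul_pow,
    ← map_pow, hzℓ, map_one, inv_pow, hzℓ, inv_one, one_mul, one_mul]
  rfl

theorem mul_comm_of_apply_eq_mul {f g : AddAut F} (hf : ∀ x, f x = f 1 * x)
    (hg : ∀ x, g x = g 1 * x) : f * g = g * f := by
  ext x
  show f (g x) = g (f x)
  rw [hf (g x), hg x, hg (f x), hf x, mul_left_comm]

theorem apply_eq_mul_of_commutatorElement_eq_one [Finite F] {q n ℓ : ℕ} (hq : q.Prime)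
    (hF : Nat.card F = q ^ n) (hℓ : IsPrimitivePrimeDivisor ℓ q n) {g z : AddAut F}
    (hg : g ∈ semilinearGroup F) (hz : ∀ x, z x = z 1 * x) (hzℓ : z 1 ^ ℓ = 1) (hz1 : z 1 ≠ 1)
    (hgz : ⁅g, z⁆ = 1) (x : F) : g x = g 1 * x := by
  obtain ⟨σ, hσ⟩ := exists_ringEquiv hg
  have hz0 : z 1 ≠ 0 := by
    intro h
    simp [h, zero_pow hℓ.1.ne_zero] at hzℓ
  have hfix : σ (z 1) = z 1 := by
    have := commutatorElement_apply hσ hz 1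
    rw [hgz, mul_one] at this
    exact (mul_inv_eq_one₀ hz0).1 this.symm
  rw [hσ, RingEquiv.eq_one_of_apply_eq_self hq hF hℓ hfix hzℓ hz1]
  rfl

variable [Finite F] {q ℓ : ℕ} [Fact q.Prime] [Algebra (ZMod q) F]

theorem apply_eq_mul_of_pow_eq_one {f : AddAut F} (hf : f ∈ semilinearGroup F)
    (hl : ℓ.Prime) (hlt : finrank (ZMod q) F < ℓ) (hfl : f ^ ℓ = 1) (x : F) :
    f x = f 1 * x := by
  obtain ⟨σ, hσ⟩ := exists_ringEquiv hf
  have hσl : σ ^ ℓ = 1 := by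
    ext y
    have := pow_apply hσ ℓ y
    rw [hfl] at this
    exact (one_mul _).symm.trans this.symm
  rw [hσ, RingEquiv.eq_one_of_pow_eq_one_of_finrank_lt hl hσl hlt]
  rfl

theorem eq_one_of_pow_eq_one_of_apply_eq_self {f : AddAut F} (hf : f ∈ semilinearGroup F)
    (hl : ℓ.Prime) (hlt : finrank (ZMod q) F < ℓ) (hfl : f ^ ℓ = 1) {v : F} (hv : v ≠ 0)
    (hfv : f v = v) : f = 1 := by
  have hscalar := apply_eq_mul_of_pow_eq_one hf hl hlt hfl
  have hf1 : f 1 = 1 := mul_right_cancel₀ hv (by rw [← hscalar, hfv, one_mul])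
  ext x
  rw [hscalar, hf1, one_mul]
  rfl

variable {G : Subgroup (AddAut F)} {p : ℕ}

theorem eq_of_isPGroup_commutator (hℓ : IsPrimitivePrimeDivisor ℓ q (finrank (ZMod q) F))
    (hG : G ≤ semilinearGroup F) (hna : ∃ a b : G, a * b ≠ b * a) (hp : p.Prime)
    (hcomm : IsPGroup p ↥(commutator G)) {z : AddAut F} (hzG : z ∈ G) (hz : orderOf z = ℓ) :
    ℓ = p := by
  have hq : q.Prime := Fact.out
  have hF : Nat.card F = q ^ finrank (ZMod q) F := by
    rw [natCard_eq_pow_finrank (K := ZMod q), Nat.card_zmod]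
  have hzℓ : z ^ ℓ = 1 := hz ▸ pow_orderOf_eq_one z
  have hscalar := apply_eq_mul_of_pow_eq_one (hG hzG) hℓ.1 (hℓ.lt hq.pos finrank_pos) hzℓ
  have hz1ℓ : z 1 ^ ℓ = 1 := by
    have := pow_apply_of_apply_eq_mul hscalar ℓ 1
    rw [hzℓ, mul_one] at this
    exact this.symm
  have hz11 : z 1 ≠ 1 := by
    intro h
    have : z = 1 := by ext x; rw [hscalar, h, one_mul]; rfl
    rw [this, orderOf_one] at hz
    exact hℓ.1.one_lt.ne hz
  by_contra hne
  have hcentral : ∀ g ∈ G, ∀ x, g x = g 1 * x := by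
    intro g hg
    obtain ⟨σ, hσ⟩ := exists_ringEquiv (hG hg)
    let c : commutator G := ⟨⁅⟨g, hg⟩, ⟨z, hzG⟩⁆,
      Subgroup.commutator_mem_commutator (Subgroup.mem_top _) (Subgroup.mem_top _)⟩
    have hcℓ : c ^ ℓ = 1 :=
      Subtype.ext (Subtype.ext (commutatorElement_pow_eq_one hσ hscalar hz1ℓ))
    have hc : c = 1 := hcomm.eq_one_of_pow_eq_one hp hℓ.1 hne hcℓ
    exact apply_eq_mul_of_commutatorElement_eq_one hq hF hℓ (hG hg) hscalar hz1ℓ hz11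
      (congrArg (fun c : commutator G => ((c : G) : AddAut F)) hc)
  obtain ⟨a, b, hab⟩ := hna
  exact hab (Subtype.ext (mul_comm_of_apply_eq_mul (hcentral a a.2) (hcentral b b.2)))

theorem inf_stabilizer_eq_bot (hG : G ≤ semilinearGroup F) (hl : ℓ.Prime)
    (hlt : finrank (ZMod q) F < ℓ) {v : F} (hv : v ≠ 0)
    (hstab : IsPGroup ℓ ↥(G ⊓ stabilizer (AddAut F) v)) : G ⊓ stabilizer (AddAut F) v = ⊥ := by
  have := Fact.mk hl
  by_contra hne
  obtain ⟨t, ht⟩ := exists_prime_orderOf_dvd_card' ℓ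
    (hstab.card_eq_or_dvd.resolve_left (mt Subgroup.card_eq_one.1 hne))
  rw [← Subgroup.orderOf_coe] at ht
  have ht1 := eq_one_of_pow_eq_one_of_apply_eq_self (hG t.2.1) hl hlt
    (ht ▸ pow_orderOf_eq_one _) hv t.2.2
  rw [ht1, orderOf_one] at ht
  exact hl.one_lt.ne ht

end semilinearGroup

theorem semilinear_two_orbits_ppd_divides_general (q n p ℓ : ℕ) [Fact q.Prime] (hn : 1 ≤ n)
    (hp : p.Prime)
    (G : Subgroup (AddAut (GaloisField q n))) (hG : G ≤ semilinearGroup (GaloisField q n))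
    (hna : ∃ a b : ↥G, a * b ≠ b * a)
    (hcomm : IsPGroup p ↥(commutator ↥G))
    (hstab : ∀ v : GaloisField q n, v ≠ 0 →
      IsPGroup p ↥(G ⊓ MulAction.stabilizer (AddAut (GaloisField q n)) v))
    (horb : ∃ u w : GaloisField q n, u ≠ 0 ∧ w ≠ 0 ∧ (¬ ∃ g ∈ G, g u = w) ∧
      ∀ x : GaloisField q n, x ≠ 0 → (∃ g ∈ G, g u = x) ∨ (∃ g ∈ G, g w = x))
    (hl : ℓ.Prime) (hldvd : ℓ ∣ q ^ n - 1)
    (hlppd : ∀ j : ℕ, 1 ≤ j → j < n → ¬ ℓ ∣ q ^ j - 1)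
    (hlG : ℓ ∣ Nat.card ↥G) :
    ℓ = p ∧
      (∀ v : GaloisField q n, v ≠ 0 →
        G ⊓ MulAction.stabilizer (AddAut (GaloisField q n)) v = ⊥) ∧
      2 * Nat.card ↥G = q ^ n - 1 := by
  have hq : q.Prime := Fact.out
  have hℓ : IsPrimitivePrimeDivisor ℓ q (finrank (ZMod q) (GaloisField q n)) :=
    (GaloisField.finrank q (by omega : n ≠ 0)).symm ▸ ⟨hl, hldvd, hlppd⟩
  have := Fact.mk hl
  obtain ⟨z, hz⟩ := exists_prime_orderOf_dvd_card' ℓ hlG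
  obtain rfl : ℓ = p :=
    semilinearGroup.eq_of_isPGroup_commutator hℓ hG hna hp hcomm z.2
      ((Subgroup.orderOf_coe z).trans hz)
  have hfree : ∀ v : GaloisField q n, v ≠ 0 →
      G ⊓ stabilizer (AddAut (GaloisField q n)) v = ⊥ := fun v hv =>
    semilinearGroup.inf_stabilizer_eq_bot hG hl (hℓ.lt hq.pos finrank_pos) hv (hstab v hv)
  refine ⟨rfl, hfree, ?_⟩
  obtain ⟨u, w, hu, hw, huw, hcover⟩ := horb
  have horbits : orbit G u ∪ orbit G w = {0}ᶜ := by
    ext x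
    refine ⟨?_, fun hx => ?_⟩
    · rintro (⟨g, rfl⟩ | ⟨g, rfl⟩)
      exacts [(g : AddAut _).map_ne_zero_iff.2 hu, (g : AddAut _).map_ne_zero_iff.2 hw]
    · rcases hcover x hx with ⟨g, hg, rfl⟩ | ⟨g, hg, rfl⟩
      exacts [Or.inl ⟨⟨g, hg⟩, rfl⟩, Or.inr ⟨⟨g, hg⟩, rfl⟩]
  rw [← ncard_orbit_union_orbit_of_stabilizer_eq_bot
    (Subgroup.stabilizer_eq_bot_of_inf_eq_bot (hfree u hu))
    (Subgroup.stabilizer_eq_bot_of_inf_eq_bot (hfree w hw)) fun ⟨g, hg⟩ => huw ⟨g, g.2, hg⟩,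
    horbits, Set.ncard_compl, Set.ncard_singleton, GaloisField.card q n (by omega)]

/-- Let `G` be a nonabelian irreducible subgroup of the semilinear group of `F = 𝔽_{q^n}`
whose commutator subgroup and point stabilizers are `p`-groups (`p ≠ q`), such that the
nonzero vectors form exactly two `G`-orbits.  If `ℓ` is a primitive prime divisor of
`q ^ n - 1` dividing `|G|`, then `ℓ = p`, `G` acts fixed-point-freely on the nonzero
vectors, and `2 |G| = q ^ n - 1`. -/
theorem semilinear_two_orbits_ppd_divides (q n p ℓ : ℕ) [Fact q.Prime] (hn : 1 ≤ n)
    (hp : p.Prime) (hpq : p ≠ q)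
    (G : Subgroup (AddAut (GaloisField q n))) (hG : G ≤ semilinearGroup (GaloisField q n))
    (hna : ∃ a b : ↥G, a * b ≠ b * a)
    (hirr : ∀ W : Submodule (ZMod q) (GaloisField q n),
      (∀ g ∈ G, ∀ x ∈ W, g x ∈ W) → W = ⊥ ∨ W = ⊤)
    (hcomm : IsPGroup p ↥(commutator ↥G))
    (hstab : ∀ v : GaloisField q n, v ≠ 0 →
      IsPGroup p ↥(G ⊓ MulAction.stabilizer (AddAut (GaloisField q n)) v))
    (horb : ∃ u w : GaloisField q n, u ≠ 0 ∧ w ≠ 0 ∧ (¬ ∃ g ∈ G, g u = w) ∧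
      ∀ x : GaloisField q n, x ≠ 0 → (∃ g ∈ G, g u = x) ∨ (∃ g ∈ G, g w = x))
    (hl : ℓ.Prime) (hldvd : ℓ ∣ q ^ n - 1)
    (hlppd : ∀ j : ℕ, 1 ≤ j → j < n → ¬ ℓ ∣ q ^ j - 1)
    (hlG : ℓ ∣ Nat.card ↥G) :
    ℓ = p ∧
      (∀ v : GaloisField q n, v ≠ 0 →
        G ⊓ MulAction.stabilizer (AddAut (GaloisField q n)) v = ⊥) ∧
      2 * Nat.card ↥G = q ^ n - 1 :=
  semilinear_two_orbits_ppd_divides_general q n p ℓ hn hp G hG hna hcomm hstab horb hl hldvd hlppd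
    hlG
end

section
/- Let F be a finite field whose multiplicative group Fˣ is generated by an element t. Let W = (Fˣ × Fˣ) ⋊ C₂ act on V = F × F, where ((u₁,u₂),1) acts by (v₁,v₂) ↦ (u₁v₁, u₂v₂) and ((u₁,u₂),σ) acts by (v₁,v₂) ↦ (u₁v₂, u₂v₁), σ being the nontrivial element of C₂. Let H be a subgroup of W containing the elements ((t,1),σ) and ((t²,1),1). Then the nonzero vectors of V split into exactly two H-orbits: the set {(v,0) : v ≠ 0} ∪ {(0,v) : v ≠ 0} is a single H-orbit, and the set {(v₁,v₂) : v₁ ≠ 0 and v₂ ≠ 0} is a single H-orbit. -/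
open SemidirectProduct

/-- The permutation of `F × F` swapping the coordinates. -/
def swapPerm (F : Type*) : Equiv.Perm (F × F) := Equiv.prodComm F F

theorem swapPerm_sq (F : Type*) : swapPerm F * swapPerm F = 1 := Equiv.ext fun _ => rfl

/-- The componentwise multiplication action of `Fˣ × Fˣ` on `F × F`, as permutations. -/
def basePerm (F : Type*) [Field F] : (Fˣ × Fˣ) →* Equiv.Perm (F × F) where
  toFun u := Equiv.prodCongr (MulAction.toPerm u.1) (MulAction.toPerm u.2)
  map_one' := by ext v <;> simp
  map_mul' u w := by ext v <;> simp [mul_smul]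

/-- The action of the wreath product `Fˣ ≀ C₂` on `F × F`: first permute coordinates
according to the `C₂`-component, then multiply coordinatewise by the units. -/
def wreathActHom (F : Type*) [Field F] : WreathC2 Fˣ →* Equiv.Perm (F × F) :=
  SemidirectProduct.lift (basePerm F) (homC2 (swapPerm F) (swapPerm_sq F)) (by
    intro s
    by_cases hs : s = 1 <;>
      · ext u v <;>
        simp [swapAction, homC2, swapAut, swapPerm, basePerm, hs, MulAut.conj_apply,
          Units.smul_def, Equiv.Perm.inv_def, Equiv.Perm.mul_apply])

/-!
With `a = ((t,1),σ)` and `b = ((t²,1),1)` we have `a² = ((t,t),1)`, so the base part of `H`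
contains every `(tⁱ,tʲ)` with `i - j` even, and multiplying these by `a` gives every
`((tⁱ,tʲ),σ)` with `i - j` odd. Since `((u₁,u₂),s)` sends `(1,1)` to `(u₁,u₂)`, and `(1,0)` to
`(u₁,0)` or `(0,u₂)` according to `s`, the orbits of `(1,1)` and `(1,0)` are as claimed.
-/

theorem Subgroup.prod_zpow_mem_of_even_sub {A : Type*} [Group A] {K : Subgroup (A × A)} {t : A}
    (hdiag : (t, t) ∈ K) (hfst : (t ^ 2, 1) ∈ K) {i j : ℤ} (hij : Even (i - j)) :
    (t ^ i, t ^ j) ∈ K := by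
  obtain ⟨p, hp⟩ := hij
  have hprod : ((t ^ 2, 1) : A × A) ^ p * (t, t) ^ j = (t ^ i, t ^ j) := by
    rw [show i = 2 * p + j by omega]
    ext <;> simp [zpow_add, zpow_mul]
  exact hprod ▸ mul_mem (zpow_mem hfst p) (zpow_mem hdiag j)

namespace WreathC2

variable {A : Type*} [Group A] {t : A} {H : Subgroup (WreathC2 A)}

theorem swapAction_ofAdd_one_apply (p : A × A) :
    swapAction A (Multiplicative.ofAdd 1) p = p.swap := by
  simp only [swapAction, homC2, MonoidHom.coe_mk, OneHom.coe_mk]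
  rw [if_neg (by decide)]
  rfl

theorem mk_swap_mul_mk_one (a b c d : A) :
    (⟨(a, b), Multiplicative.ofAdd 1⟩ * ⟨(c, d), 1⟩ : WreathC2 A) =
      ⟨(a * d, b * c), Multiplicative.ofAdd 1⟩ := by
  ext <;> simp [swapAction_ofAdd_one_apply]

theorem mk_swap_mul_mk_swap (a b c d : A) :
    (⟨(a, b), Multiplicative.ofAdd 1⟩ * ⟨(c, d), Multiplicative.ofAdd 1⟩ : WreathC2 A) =
      ⟨(a * d, b * c), 1⟩ := by
  ext
  · simp [swapAction_ofAdd_one_apply]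
  · simp [swapAction_ofAdd_one_apply]
  · show Multiplicative.ofAdd (1 : ZMod 2) * Multiplicative.ofAdd 1 = 1
    decide

theorem eq_one_or_eq_ofAdd_one (s : Multiplicative (ZMod 2)) :
    s = 1 ∨ s = Multiplicative.ofAdd 1 := by
  decide +revert

theorem mk_one_mem_of_even_sub (h1 : ⟨(t, 1), Multiplicative.ofAdd 1⟩ ∈ H)
    (h2 : ⟨(t ^ 2, 1), 1⟩ ∈ H) {i j : ℤ} (hij : Even (i - j)) : ⟨(t ^ i, t ^ j), 1⟩ ∈ H := by
  have hdiag : ⟨(t, t), 1⟩ ∈ H := by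
    simpa only [mk_swap_mul_mk_swap, one_mul, mul_one] using mul_mem h1 h1
  exact Subgroup.prod_zpow_mem_of_even_sub (K := H.comap inl) hdiag h2 hij

theorem mk_swap_mem_of_odd_sub (h1 : ⟨(t, 1), Multiplicative.ofAdd 1⟩ ∈ H)
    (h2 : ⟨(t ^ 2, 1), 1⟩ ∈ H) {i j : ℤ} (hij : Odd (i - j)) :
    ⟨(t ^ i, t ^ j), Multiplicative.ofAdd 1⟩ ∈ H := by
  obtain ⟨k, hk⟩ := hij
  have heven : Even (j - (i - 1)) := ⟨-k, by omega⟩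
  have hmem := mul_mem h1 (mk_one_mem_of_even_sub h1 h2 heven)
  rwa [mk_swap_mul_mk_one, one_mul, ← zpow_one_add, add_sub_cancel] at hmem

end WreathC2

section Action

variable {F : Type*} [Field F]

theorem wreathActHom_mk_one (u : Fˣ × Fˣ) (v : F × F) :
    wreathActHom F ⟨u, 1⟩ v = (u.1 * v.1, u.2 * v.2) := by
  simp [wreathActHom, SemidirectProduct.lift, basePerm, homC2, Prod.map, Units.smul_def]

theorem wreathActHom_mk_swap (u : Fˣ × Fˣ) (v : F × F) :
    wreathActHom F ⟨u, Multiplicative.ofAdd 1⟩ v = (u.1 * v.2, u.2 * v.1) := by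
  simp [wreathActHom, SemidirectProduct.lift, basePerm, homC2, swapPerm, Prod.map, Units.smul_def]

end Action

section Orbits

variable {F : Type*} [Field F] {t : Fˣ} {H : Subgroup (WreathC2 Fˣ)}

theorem Units.exists_zpow_val_eq_of_forall_mem_zpowers (hgen : ∀ u : Fˣ, u ∈ Subgroup.zpowers t)
    {x : F} (hx : x ≠ 0) : ∃ k : ℤ, ((t ^ k : Fˣ) : F) = x := by
  obtain ⟨k, hk⟩ := hgen (Units.mk0 x hx)
  exact ⟨k, congrArg Units.val hk⟩

theorem punctured_axes_eq_orbit_one_zero (hgen : ∀ u : Fˣ, u ∈ Subgroup.zpowers t)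
    (h1 : ⟨(t, 1), Multiplicative.ofAdd 1⟩ ∈ H) (h2 : ⟨(t ^ 2, 1), 1⟩ ∈ H) :
    {v : F × F | (v.1 ≠ 0 ∧ v.2 = 0) ∨ (v.1 = 0 ∧ v.2 ≠ 0)} =
      {y : F × F | ∃ h ∈ H, wreathActHom F h (1, 0) = y} := by
  ext ⟨x, y⟩
  constructor
  · rintro (⟨hx, rfl⟩ | ⟨rfl, hy⟩)
    · obtain ⟨k, rfl⟩ := Units.exists_zpow_val_eq_of_forall_mem_zpowers hgen hx
      refine ⟨_, WreathC2.mk_one_mem_of_even_sub h1 h2 (i := k) (j := k) (by simp), ?_⟩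
      rw [wreathActHom_mk_one]
      simp
    · obtain ⟨k, rfl⟩ := Units.exists_zpow_val_eq_of_forall_mem_zpowers hgen hy
      refine ⟨_, WreathC2.mk_swap_mem_of_odd_sub h1 h2 (i := k + 1) (j := k) (by simp), ?_⟩
      rw [wreathActHom_mk_swap]
      simp
  · rintro ⟨⟨u, s⟩, -, hxy⟩
    obtain rfl | rfl := WreathC2.eq_one_or_eq_ofAdd_one s <;>
      simp only [wreathActHom_mk_one, wreathActHom_mk_swap, Prod.mk.injEq] at hxy <;>
      simp [← hxy.1, ← hxy.2]

theorem units_prod_eq_orbit_one_one (hgen : ∀ u : Fˣ, u ∈ Subgroup.zpowers t)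
    (h1 : ⟨(t, 1), Multiplicative.ofAdd 1⟩ ∈ H) (h2 : ⟨(t ^ 2, 1), 1⟩ ∈ H) :
    {v : F × F | v.1 ≠ 0 ∧ v.2 ≠ 0} = {y : F × F | ∃ h ∈ H, wreathActHom F h (1, 1) = y} := by
  ext ⟨x, y⟩
  constructor
  · rintro ⟨hx, hy⟩
    obtain ⟨i, rfl⟩ := Units.exists_zpow_val_eq_of_forall_mem_zpowers hgen hx
    obtain ⟨j, rfl⟩ := Units.exists_zpow_val_eq_of_forall_mem_zpowers hgen hy
    rcases Int.even_or_odd (i - j) with hij | hij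
    · exact ⟨_, WreathC2.mk_one_mem_of_even_sub h1 h2 hij, by rw [wreathActHom_mk_one]; simp⟩
    · exact ⟨_, WreathC2.mk_swap_mem_of_odd_sub h1 h2 hij, by rw [wreathActHom_mk_swap]; simp⟩
  · rintro ⟨⟨u, s⟩, -, hxy⟩
    obtain rfl | rfl := WreathC2.eq_one_or_eq_ofAdd_one s <;>
      simp only [wreathActHom_mk_one, wreathActHom_mk_swap, Prod.mk.injEq] at hxy <;>
      simp [← hxy.1, ← hxy.2]

end Orbits

theorem wreath_two_orbits_general (F : Type*) [Field F] (t : Fˣ)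
    (hgen : ∀ u : Fˣ, u ∈ Subgroup.zpowers t)
    (H : Subgroup (WreathC2 Fˣ))
    (h1 : (⟨(t, 1), Multiplicative.ofAdd 1⟩ : WreathC2 Fˣ) ∈ H)
    (h2 : (⟨(t ^ 2, 1), 1⟩ : WreathC2 Fˣ) ∈ H) :
    (∃ x : F × F,
      {v : F × F | (v.1 ≠ 0 ∧ v.2 = 0) ∨ (v.1 = 0 ∧ v.2 ≠ 0)} =
        {y : F × F | ∃ h ∈ H, wreathActHom F h x = y}) ∧
    (∃ x : F × F,
      {v : F × F | v.1 ≠ 0 ∧ v.2 ≠ 0} =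
        {y : F × F | ∃ h ∈ H, wreathActHom F h x = y}) :=
  ⟨⟨(1, 0), punctured_axes_eq_orbit_one_zero hgen h1 h2⟩,
    ⟨(1, 1), units_prod_eq_orbit_one_one hgen h1 h2⟩⟩

/-- Let `F` be a finite field with `Fˣ = ⟨t⟩`, and `H ≤ W = Fˣ ≀ C₂` (acting on `F × F`)
a subgroup containing `((t,1),σ)` and `((t²,1),1)`.  Then the nonzero vectors of `F × F`
split into exactly two `H`-orbits: `(V₁ ∖ {0}) ∪ (V₂ ∖ {0})` and `V ∖ (V₁ ∪ V₂)`. -/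
theorem wreath_two_orbits (F : Type*) [Field F] [Fintype F] (t : Fˣ)
    (hgen : ∀ u : Fˣ, u ∈ Subgroup.zpowers t)
    (H : Subgroup (WreathC2 Fˣ))
    (h1 : (⟨(t, 1), Multiplicative.ofAdd 1⟩ : WreathC2 Fˣ) ∈ H)
    (h2 : (⟨(t ^ 2, 1), 1⟩ : WreathC2 Fˣ) ∈ H) :
    (∃ x : F × F,
      {v : F × F | (v.1 ≠ 0 ∧ v.2 = 0) ∨ (v.1 = 0 ∧ v.2 ≠ 0)} =
        {y : F × F | ∃ h ∈ H, wreathActHom F h x = y}) ∧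
    (∃ x : F × F,
      {v : F × F | v.1 ≠ 0 ∧ v.2 ≠ 0} =
        {y : F × F | ∃ h ∈ H, wreathActHom F h x = y}) :=
  wreath_two_orbits_general F t hgen H h1 h2
end
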